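/- arXiv:math/0610640 — 9 statements merged into one kernel-verified Lean document; each statement's English description precedes it below -/
import Mathlib

section
/- Any permutation of {1,...,n} with m cycles (counting fixed points as cycles) admits a transitive star factorization of length n+m-2, i.e., an ordered list of n+m-2 transpositions of the form (1 i) with 2 ≤ i ≤ n whose product (left to right) equals the permutation and whose factors generate a subgroup acting transitively on {1,...,n}. -/
/-- A list of star transpositions: each factor is `(1 i)` with `i ≠ 1`
(here `0 : Fin n` plays the role of the symbol 1). -/
def IsStarList {n : ℕ} [NeZero n] (l : List (Equiv.Perm (Fin n))) : Prop :=
  ∀ τ ∈ l, ∃ i : Fin n, i ≠ 0 ∧ τ = Equiv.swap 0 i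

/-- A star factorization of `π`: a list of star transpositions whose ordered
product equals `π`. -/
def IsStarFactorization {n : ℕ} [NeZero n] (π : Equiv.Perm (Fin n))
    (l : List (Equiv.Perm (Fin n))) : Prop :=
  IsStarList l ∧ l.prod = π

/-- The subgroup generated by the factors acts transitively. -/
def IsTransitiveList {n : ℕ} (l : List (Equiv.Perm (Fin n))) : Prop :=
  ∀ x y : Fin n, ∃ g ∈ Subgroup.closure {τ | τ ∈ l}, g x = y

/-- Number of cycles of `π`, counting fixed points as cycles. -/
def numCycles {n : ℕ} (π : Equiv.Perm (Fin n)) : ℕ :=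
  π.cycleType.card + (Finset.univ.filter fun x => π x = x).card

/-!
Writing `0` for the centre of the star: a cycle `(0 a₁ … aₖ)` through `0` equals
`(0 aₖ) ⋯ (0 a₁)`, and a cycle `(a₁ … aₖ)` avoiding `0` equals `(0 a₁) · (0 aₖ) ⋯ (0 a₁)`.
Concatenating these words over the disjoint cycles of `π` and appending `(0 a) (0 a)` for every
fixed point `a ≠ 0` gives a star factorization of `π` that uses every star transposition, hence
is transitive, and whose length is `n + m - 2`.
-/

open Equiv Equiv.Perm

theorem List.prod_map_swap_reverse_eq_formPerm {α : Type*} [DecidableEq α] {c : α} {L : List α}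
    (h : (c :: L).Nodup) : (L.reverse.map (Equiv.swap c)).prod = (c :: L).formPerm := by
  induction L using List.reverseRecOn with
  | nil => simp
  | append_singleton M b ih =>
    have hb : (b :: c :: M).Nodup := by
      simp only [List.nodup_cons, List.mem_cons, List.mem_append, List.nodup_append] at h ⊢
      tauto
    have hrot : (b :: c :: M).rotate 1 = c :: (M ++ [b]) := by simp
    rw [List.reverse_append, List.reverse_singleton, List.singleton_append, List.map_cons,
      List.prod_cons, ih hb.of_cons, ← hrot, List.formPerm_rotate_one _ hb,
      List.formPerm_cons_cons, Equiv.swap_comm]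

theorem Equiv.Perm.IsCycle.exists_formPerm_cons_eq {α : Type*} [Fintype α] [DecidableEq α]
    {σ : Perm α} (hσ : σ.IsCycle) {x : α} (hx : x ∈ σ.support) :
    ∃ L, (x :: L).Nodup ∧ (x :: L).formPerm = σ ∧ (x :: L).toFinset = σ.support := by
  have hcycleOf : σ.cycleOf x = σ := hσ.cycleOf_eq (mem_support.mp hx)
  obtain ⟨k, hk⟩ : ∃ k, σ.support.card = k + 1 :=
    Nat.exists_eq_add_one.mpr (Finset.card_pos.mpr ⟨x, hx⟩)
  have hlist : σ.toList x = x :: List.iterate σ (σ x) k := by rw [toList, hcycleOf, hk]; rfl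
  have hform : (σ.toList x).formPerm = σ := by rw [formPerm_toList, hcycleOf]
  refine ⟨List.iterate σ (σ x) k, hlist ▸ nodup_toList σ x, hlist ▸ hform, ?_⟩
  rw [← hlist, ← List.support_formPerm_of_nodup _ (nodup_toList σ x) (toList_ne_singleton σ x),
    hform]

theorem Equiv.Perm.card_support_add_card_fixed {α : Type*} [Fintype α] [DecidableEq α]
    (π : Perm α) : π.support.card + (Finset.univ.filter fun x => π x = x).card = Fintype.card α :=
  (add_comm _ _).trans (Finset.card_filter_add_card_filter_not _)

section Star

variable {n : ℕ} [NeZero n]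

/-- A cycle of length `k` costs `k - 1` star transpositions if it moves `0`, and `k + 1`
otherwise. -/
def IsSpanningStarFactorization (π : Perm (Fin n)) (l : List (Perm (Fin n))) : Prop :=
  IsStarFactorization π l ∧
    l.length + (if (0 : Fin n) ∈ π.support then 2 else 0) = π.support.card + π.cycleType.card ∧
    ∀ x ∈ π.support, x ≠ 0 → swap 0 x ∈ l

theorem isStarList_map_swap_zero {L : List (Fin n)} (h : 0 ∉ L) : IsStarList (L.map (swap 0)) := by
  simp only [IsStarList, List.mem_map]
  rintro _ ⟨i, hi, rfl⟩
  exact ⟨i, ne_of_mem_of_not_mem hi h, rfl⟩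

theorem isSpanningStarFactorization_of_isCycle_of_zero_mem {σ : Perm (Fin n)} (hσ : σ.IsCycle)
    (h0 : 0 ∈ σ.support) : ∃ l, IsSpanningStarFactorization σ l := by
  obtain ⟨L, hnodup, hform, hsupp⟩ := hσ.exists_formPerm_cons_eq h0
  have hcard : L.length + 1 = σ.support.card := by
    rw [← hsupp, List.toFinset_card_of_nodup hnodup, List.length_cons]
  refine ⟨L.reverse.map (swap 0), ⟨?_, ?_⟩, ?_, ?_⟩
  · exact isStarList_map_swap_zero (by simpa using (List.nodup_cons.mp hnodup).1)
  · rw [List.prod_map_swap_reverse_eq_formPerm hnodup, hform]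
  · simp [h0, hσ.cycleType, ← hcard]
  · intro x hx hx0
    rw [← hsupp, List.mem_toFinset, List.mem_cons] at hx
    exact List.mem_map.mpr ⟨x, List.mem_reverse.mpr (hx.resolve_left hx0), rfl⟩

theorem isSpanningStarFactorization_of_isCycle_of_zero_notMem {σ : Perm (Fin n)}
    (hσ : σ.IsCycle) (h0 : 0 ∉ σ.support) : ∃ l, IsSpanningStarFactorization σ l := by
  obtain ⟨x, hx⟩ := hσ.nonempty_support
  obtain ⟨L, hnodup, hform, hsupp⟩ := hσ.exists_formPerm_cons_eq hx
  have h0L : 0 ∉ x :: L := by rwa [← List.mem_toFinset, hsupp]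
  have hcard : L.length + 1 = σ.support.card := by
    rw [← hsupp, List.toFinset_card_of_nodup hnodup, List.length_cons]
  refine ⟨swap 0 x :: (x :: L).reverse.map (swap 0), ⟨?_, ?_⟩, ?_, ?_⟩
  · intro τ hτ
    rcases List.mem_cons.mp hτ with rfl | hτ
    · exact ⟨x, fun h => h0L (h ▸ List.mem_cons_self), rfl⟩
    · exact isStarList_map_swap_zero (by rwa [List.mem_reverse]) τ hτ
  · rw [List.prod_cons, List.prod_map_swap_reverse_eq_formPerm (List.nodup_cons.mpr ⟨h0L, hnodup⟩),
      List.formPerm_cons_cons, ← mul_assoc, swap_mul_self, one_mul, hform]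
  · simp [h0, hσ.cycleType, ← hcard]
  · intro y hy _
    rw [← hsupp, List.mem_toFinset] at hy
    exact List.mem_cons_of_mem _ (List.mem_map.mpr ⟨y, List.mem_reverse.mpr hy, rfl⟩)

theorem IsSpanningStarFactorization.mul {σ τ : Perm (Fin n)} {lσ lτ : List (Perm (Fin n))}
    (hd : σ.Disjoint τ) (hσ : IsSpanningStarFactorization σ lσ)
    (hτ : IsSpanningStarFactorization τ lτ) : IsSpanningStarFactorization (σ * τ) (lσ ++ lτ) := by
  obtain ⟨⟨hσstar, hσprod⟩, hσlen, hσcover⟩ := hσ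
  obtain ⟨⟨hτstar, hτprod⟩, hτlen, hτcover⟩ := hτ
  refine ⟨⟨?_, by rw [List.prod_append, hσprod, hτprod]⟩, ?_, ?_⟩
  · intro ρ hρ
    exact (List.mem_append.mp hρ).elim (hσstar ρ) (hτstar ρ)
  · have hsplit : (if (0 : Fin n) ∈ (σ * τ).support then 2 else 0) =
        (if (0 : Fin n) ∈ σ.support then 2 else 0) +
          (if (0 : Fin n) ∈ τ.support then 2 else 0) := by
      have : (0 : Fin n) ∈ σ.support → (0 : Fin n) ∉ τ.support :=
        fun h => Finset.disjoint_left.mp hd.disjoint_support h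
      rw [hd.support_mul]
      split_ifs <;> simp_all
    rw [List.length_append, hsplit, hd.card_support_mul, hd.cycleType_mul, Multiset.card_add]
    omega
  · intro x hx hx0
    rw [hd.support_mul, Finset.mem_union] at hx
    exact hx.elim (fun h => List.mem_append_left _ (hσcover x h hx0))
      (fun h => List.mem_append_right _ (hτcover x h hx0))

theorem exists_isSpanningStarFactorization (π : Perm (Fin n)) :
    ∃ l, IsSpanningStarFactorization π l := by
  induction π using cycle_induction_on with
  | base_one => exact ⟨[], ⟨by simp [IsStarList], rfl⟩, by simp, by simp⟩
  | base_cycles σ hσ =>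
    by_cases h0 : 0 ∈ σ.support
    · exact isSpanningStarFactorization_of_isCycle_of_zero_mem hσ h0
    · exact isSpanningStarFactorization_of_isCycle_of_zero_notMem hσ h0
  | induction_disjoint σ τ hd _ ihσ ihτ =>
    obtain ⟨lσ, hσ⟩ := ihσ
    obtain ⟨lτ, hτ⟩ := ihτ
    exact ⟨lσ ++ lτ, hσ.mul hd hτ⟩

theorem isTransitiveList_of_swap_mem {l : List (Perm (Fin n))}
    (h : ∀ x, x ≠ 0 → swap 0 x ∈ l) : IsTransitiveList l := by
  have hmem : ∀ x, swap 0 x ∈ Subgroup.closure {τ | τ ∈ l} := by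
    intro x
    by_cases hx : x = 0
    · rw [hx, swap_self]
      exact Subgroup.one_mem _
    · exact Subgroup.subset_closure (h x hx)
  intro x y
  exact ⟨swap 0 y * swap 0 x, Subgroup.mul_mem _ (hmem y) (hmem x), by simp⟩

theorem IsStarFactorization.append_swap_pairs {π : Perm (Fin n)} {l : List (Perm (Fin n))}
    (h : IsStarFactorization π l) {L : List (Fin n)} (hL : 0 ∉ L) :
    IsStarFactorization π (l ++ L.flatMap fun a => [swap 0 a, swap 0 a]) := by
  refine ⟨fun τ hτ => ?_, ?_⟩
  · rcases List.mem_append.mp hτ with hτ | hτ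
    · exact h.1 τ hτ
    · obtain ⟨a, ha, hτa⟩ := List.mem_flatMap.mp hτ
      exact ⟨a, ne_of_mem_of_not_mem ha hL, by simpa using hτa⟩
  · have hpairs : ∀ L : List (Fin n), (L.flatMap fun a => [swap 0 a, swap 0 a]).prod = 1 := by
      intro L
      induction L with
      | nil => rfl
      | cons a L ih => simp [ih]
    rw [List.prod_append, hpairs, mul_one, h.2]

theorem IsSpanningStarFactorization.length_add_two_mul_card_fixed {π : Perm (Fin n)}
    {l : List (Perm (Fin n))} (h : IsSpanningStarFactorization π l) :
    l.length + 2 * ((Finset.univ.filter fun x => π x = x).erase 0).card + 2 =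
      n + numCycles π := by
  have hcard := (card_support_add_card_fixed π).trans (Fintype.card_fin n)
  have hlen := h.2.1
  rw [numCycles]
  by_cases h0 : π 0 = 0
  · have := Finset.card_erase_add_one (s := Finset.univ.filter fun x => π x = x) (a := 0)
      (by simp [h0])
    simp only [mem_support, h0, ne_eq, not_true_eq_false, if_false] at hlen
    omega
  · rw [Finset.erase_eq_of_notMem (by simpa using h0)]
    simp only [mem_support, h0, ne_eq, not_false_eq_true, if_true] at hlen
    omega

end Star

theorem stmt0 {n : ℕ} [NeZero n] (π : Equiv.Perm (Fin n)) :
    ∃ l : List (Equiv.Perm (Fin n)), l.length = n + numCycles π - 2 ∧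
      IsStarFactorization π l ∧ IsTransitiveList l := by
  obtain ⟨l, hl⟩ := exists_isSpanningStarFactorization π
  have hlen := hl.length_add_two_mul_card_fixed
  set fixedNonzero := (Finset.univ.filter fun x => π x = x).erase 0
  set pairs := fixedNonzero.toList.flatMap fun a => [swap 0 a, swap 0 a]
  refine ⟨l ++ pairs, ?_, hl.1.append_swap_pairs (by simp [fixedNonzero]),
    isTransitiveList_of_swap_mem fun x hx0 => ?_⟩
  · have hpairs : pairs.length = 2 * fixedNonzero.card := by simp [pairs, mul_comm]
    rw [List.length_append, hpairs]
    omega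
  · by_cases hx : π x = x
    · exact List.mem_append_right _
        (List.mem_flatMap.mpr ⟨x, by simp [fixedNonzero, hx, hx0], by simp⟩)
    · exact List.mem_append_left _ (hl.2.2 x (mem_support.mpr hx) hx0)
end

section
/- If π ∈ S_n has m cycles (counting fixed points), then every transitive factorization of π into transpositions (of any type) has at least n+m-2 factors. -/
open Equiv Equiv.Perm MulAction

namespace Setoid

variable {α : Type*}

theorem card_quotient_le_of_le [Finite α] {s t : Setoid α} (h : s ≤ t) :
    Nat.card (Quotient t) ≤ Nat.card (Quotient s) :=
  Nat.card_le_card_of_surjective (map_of_le h) (Quotient.ind fun x => ⟨⟦x⟧, rfl⟩)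

theorem card_quotient_lt_of_le [Finite α] {s t : Setoid α} (h : s ≤ t) {a b : α} (ht : t a b)
    (hs : ¬s a b) : Nat.card (Quotient t) < Nat.card (Quotient s) := by
  refine (card_quotient_le_of_le h).lt_of_ne fun hcard => hs ?_
  have hsurj : (map_of_le h).Surjective := Quotient.ind fun x => ⟨⟦x⟧, rfl⟩
  have hbij := hsurj.bijective_of_nat_card_le hcard.ge
  exact Quotient.exact (hbij.injective (a₁ := ⟦a⟧) (a₂ := ⟦b⟧) (Quotient.sound ht))

open Classical in
/-- `s` with the classes of `a` and `b` merged, as the kernel of the map sending the class of `b`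
to that of `a`. -/
noncomputable def merge (s : Setoid α) (a b : α) : Setoid α :=
  ker fun x => if s x b then Quotient.mk s a else Quotient.mk s x

section Merge

variable {s : Setoid α} {a b : α}

open Classical in
theorem merge_apply {x y : α} : merge s a b x y ↔
    (if s x b then Quotient.mk s a else Quotient.mk s x) =
      (if s y b then Quotient.mk s a else Quotient.mk s y) := Iff.rfl

theorem le_merge : s ≤ merge s a b := by
  intro x y hxy
  rw [merge_apply]
  by_cases hx : s x b
  · rw [if_pos hx, if_pos (s.trans' (s.symm' hxy) hx)]
  · rw [if_neg hx, if_neg fun hy => hx (s.trans' hxy hy), Quotient.sound hxy]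

theorem merge_rel : merge s a b a b := by
  rw [merge_apply, if_pos (s.refl' b)]
  split_ifs <;> rfl

theorem merge_le_of_rel (hab : s a b) : merge s a b ≤ s := by
  intro x y hxy
  rw [merge_apply] at hxy
  split_ifs at hxy with hx hy hy
  · exact s.trans' hx (s.symm' hy)
  · exact s.trans' (s.trans' hx (s.symm' hab)) (Quotient.exact hxy)
  · exact s.trans' (Quotient.exact hxy) (s.trans' hab (s.symm' hy))
  · exact Quotient.exact hxy

theorem rel_of_merge_rel {x y : α} (h : merge s a b x y) (hx : ¬s x b) (hy : ¬s y b) :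
    s x y := by
  rw [merge_apply, if_neg hx, if_neg hy] at h
  exact Quotient.exact h

theorem card_quotient_le_card_merge_add_one [Finite α] :
    Nat.card (Quotient s) ≤ Nat.card (Quotient (merge s a b)) + 1 := by
  classical
  let f : Quotient s → Option (Quotient (merge s a b)) := fun q =>
    if q = ⟦b⟧ then none else some (map_of_le le_merge q)
  have hf : f.Injective := by
    refine Quotient.ind₂ fun x y hxy => ?_
    simp only [f] at hxy
    split_ifs at hxy with hx hy hy
    · exact hx.trans hy.symm
    · exact Quotient.sound (rel_of_merge_rel (Quotient.exact (Option.some_injective _ hxy))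
        (fun h => hx (Quotient.sound h)) fun h => hy (Quotient.sound h))
  simpa using Nat.card_le_card_of_injective f hf

end Merge

def classStabilizer (r : Setoid α) : Subgroup (Perm α) where
  carrier := {g | ∀ x, r (g x) x}
  one_mem' x := r.refl' x
  mul_mem' hg hh x := r.trans' (hg _) (hh x)
  inv_mem' {g} hg x := by simpa using r.symm' (hg (g⁻¹ x))

variable {r t : Setoid α}

theorem classStabilizer_mono (h : r ≤ t) : r.classStabilizer ≤ t.classStabilizer :=
  fun _ hg x => h (hg x)

theorem swap_mem_classStabilizer [DecidableEq α] {a b : α} (hab : r a b) :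
    swap a b ∈ r.classStabilizer := by
  intro x
  rcases eq_or_ne x a with rfl | hxa
  · simpa using r.symm' hab
  rcases eq_or_ne x b with rfl | hxb
  · simpa using hab
  · rw [swap_apply_of_ne_of_ne hxa hxb]

theorem sameCycle_setoid_le {σ : Perm α} (hσ : σ ∈ r.classStabilizer) :
    SameCycle.setoid σ ≤ r := by
  rintro x y ⟨i, rfl⟩
  exact r.symm' (zpow_mem hσ i x)

theorem orbitRel_le {G : Subgroup (Perm α)} (hG : G ≤ r.classStabilizer) :
    orbitRel G α ≤ r := by
  rintro x y ⟨g, rfl⟩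
  exact hG g.2 y

end Setoid

namespace Equiv.Perm

variable {α : Type*}

theorem mem_classStabilizer_sameCycle_setoid (σ : Perm α) :
    σ ∈ (SameCycle.setoid σ).classStabilizer :=
  fun _ => sameCycle_apply_left.2 (SameCycle.refl σ _)

variable [DecidableEq α]

theorem sameCycle_setoid_swap_mul_le_merge (σ : Perm α) (a b : α) :
    SameCycle.setoid (swap a b * σ) ≤ (SameCycle.setoid σ).merge a b :=
  Setoid.sameCycle_setoid_le <| mul_mem (Setoid.swap_mem_classStabilizer Setoid.merge_rel)
    (Setoid.classStabilizer_mono Setoid.le_merge σ.mem_classStabilizer_sameCycle_setoid)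

/- Along the `σ`-orbit of `b`, which avoids `a`, the powers of `τ = swap a b * σ` agree with
those of `σ` until the orbit comes back to `b`, which `τ` replaces by `a`. -/
theorem sameCycle_swap_mul_of_not_sameCycle [Finite α] {σ : Perm α} {a b : α}
    (hab : ¬σ.SameCycle a b) : (swap a b * σ).SameCycle b a := by
  set τ := swap a b * σ
  have step (k : ℕ) (hk : (τ ^ k) b = (σ ^ k) b) :
      (τ ^ (k + 1)) b = swap a b ((σ ^ (k + 1)) b) := by
    rw [pow_succ', mul_apply, hk, pow_succ', mul_apply]
    rfl
  have agree (k : ℕ) : τ.SameCycle b a ∨ (τ ^ k) b = (σ ^ k) b := by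
    induction k with
    | zero => exact Or.inr rfl
    | succ k ih =>
      refine ih.elim Or.inl fun hk => ?_
      by_cases hb : (σ ^ (k + 1)) b = b
      · exact Or.inl ⟨(k + 1 : ℕ), by rw [zpow_natCast, step k hk, hb, swap_apply_right]⟩
      · have ha : (σ ^ (k + 1)) b ≠ a := fun h =>
          hab (SameCycle.symm ⟨(k + 1 : ℕ), by rw [zpow_natCast, h]⟩)
        exact Or.inr (by rw [step k hk, swap_apply_of_ne_of_ne ha hb])
  obtain ⟨m, hm⟩ := Nat.exists_eq_add_one.2 (orderOf_pos σ)
  refine (agree m).elim id fun hk => ⟨(m + 1 : ℕ), ?_⟩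
  rw [zpow_natCast, step m hk, ← hm, pow_orderOf_eq_one, one_apply, swap_apply_right]

variable [Finite α]

theorem card_quotient_sameCycle_swap_mul_le (σ : Perm α) (a b : α) :
    Nat.card (Quotient (SameCycle.setoid (swap a b * σ))) ≤
      Nat.card (Quotient (SameCycle.setoid σ)) + 1 := by
  have h := sameCycle_setoid_swap_mul_le_merge (swap a b * σ) a b
  rw [← mul_assoc, swap_mul_self, one_mul] at h
  exact Setoid.card_quotient_le_card_merge_add_one.trans
    (Nat.add_le_add_right (Setoid.card_quotient_le_of_le h) 1)

theorem card_quotient_sameCycle_swap_mul_lt {σ : Perm α} {a b : α} (hab : ¬σ.SameCycle a b) :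
    Nat.card (Quotient (SameCycle.setoid (swap a b * σ))) <
      Nat.card (Quotient (SameCycle.setoid σ)) := by
  have hba := sameCycle_swap_mul_of_not_sameCycle hab
  have h := sameCycle_setoid_swap_mul_le_merge (swap a b * σ) a b
  rw [← mul_assoc, swap_mul_self, one_mul] at h
  exact Setoid.card_quotient_lt_of_le (h.trans (Setoid.merge_le_of_rel hba.symm)) hba.symm hab

end Equiv.Perm

namespace MulAction

variable {α : Type*}

theorem le_classStabilizer_orbitRel (G : Subgroup (Perm α)) :
    G ≤ (orbitRel G α).classStabilizer :=
  fun g hg _ => ⟨⟨g, hg⟩, rfl⟩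

variable [DecidableEq α]

theorem orbitRel_closure_insert_swap_le_merge (S : Set (Perm α)) (a b : α) :
    orbitRel (Subgroup.closure (insert (swap a b) S)) α ≤
      (orbitRel (Subgroup.closure S) α).merge a b :=
  Setoid.orbitRel_le <| (Subgroup.closure_le _).2 <| Set.insert_subset_iff.2
    ⟨Setoid.swap_mem_classStabilizer Setoid.merge_rel, Subgroup.subset_closure.trans <|
      (le_classStabilizer_orbitRel _).trans (Setoid.classStabilizer_mono Setoid.le_merge)⟩

variable [Finite α]

theorem card_orbitRel_closure_le_insert_swap_add_one (S : Set (Perm α)) (a b : α) :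
    Nat.card (orbitRel.Quotient (Subgroup.closure S) α) ≤
      Nat.card (orbitRel.Quotient (Subgroup.closure (insert (swap a b) S)) α) + 1 :=
  Setoid.card_quotient_le_card_merge_add_one.trans
    (Nat.add_le_add_right
      (Setoid.card_quotient_le_of_le (orbitRel_closure_insert_swap_le_merge S a b)) 1)

theorem card_orbitRel_closure_le_insert_swap {S : Set (Perm α)} {a b : α}
    (hab : orbitRel (Subgroup.closure S) α a b) :
    Nat.card (orbitRel.Quotient (Subgroup.closure S) α) ≤
      Nat.card (orbitRel.Quotient (Subgroup.closure (insert (swap a b) S)) α) :=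
  Setoid.card_quotient_le_of_le
    ((orbitRel_closure_insert_swap_le_merge S a b).trans (Setoid.merge_le_of_rel hab))

end MulAction

namespace Equiv.Perm

variable {α : Type*} [DecidableEq α]

theorem card_add_card_quotient_sameCycle_le [Finite α] (l : List (Perm α))
    (hl : ∀ τ ∈ l, τ.IsSwap) :
    Nat.card α + Nat.card (Quotient (SameCycle.setoid l.prod)) ≤
      l.length + 2 * Nat.card (orbitRel.Quotient (Subgroup.closure {τ | τ ∈ l}) α) := by
  induction l with
  | nil =>
    have hcyc : Nat.card (Quotient (SameCycle.setoid (1 : Perm α))) ≤ Nat.card α :=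
      (Setoid.card_quotient_le_of_le bot_le).trans_eq (Nat.card_congr Setoid.quotientBotEquiv)
    have hdiscrete :
        orbitRel (Subgroup.closure {τ | τ ∈ ([] : List (Perm α))}) α ≤ ⊥ := by
      rintro x y ⟨⟨g, hg⟩, rfl⟩
      simp only [List.not_mem_nil, Set.ofPred_false, Subgroup.closure_empty,
        Subgroup.mem_bot] at hg
      simp [hg]
    have horb : Nat.card α ≤
        Nat.card (orbitRel.Quotient (Subgroup.closure {τ | τ ∈ ([] : List (Perm α))}) α) :=
      (Nat.card_congr Setoid.quotientBotEquiv).symm.trans_le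
        (Setoid.card_quotient_le_of_le hdiscrete)
    simp only [List.prod_nil, List.length_nil]
    omega
  | cons τ l ih =>
    obtain ⟨a, b, -, rfl⟩ := hl τ List.mem_cons_self
    have hind := ih fun τ hτ => hl τ (List.mem_cons_of_mem _ hτ)
    have hS : {τ | τ ∈ swap a b :: l} = insert (swap a b) {τ | τ ∈ l} := by ext; simp
    rw [List.prod_cons, List.length_cons, hS]
    by_cases hab : orbitRel (Subgroup.closure {τ | τ ∈ l}) α a b
    · have := card_quotient_sameCycle_swap_mul_le l.prod a b
      have := card_orbitRel_closure_le_insert_swap hab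
      omega
    · have hprod : l.prod ∈ Subgroup.closure {τ | τ ∈ l} :=
        list_prod_mem fun τ hτ => Subgroup.subset_closure hτ
      have hσ : ¬l.prod.SameCycle a b := fun h =>
        hab (Setoid.sameCycle_setoid_le (le_classStabilizer_orbitRel _ hprod) h)
      have := card_quotient_sameCycle_swap_mul_lt hσ
      have := card_orbitRel_closure_le_insert_swap_add_one {τ | τ ∈ l} a b
      omega

variable [Fintype α]

theorem mem_cycleFactorsFinset_iff_exists_cycleOf {σ c : Perm α} :
    c ∈ σ.cycleFactorsFinset ↔ ∃ x, σ x ≠ x ∧ σ.cycleOf x = c := by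
  refine ⟨fun hc => ?_, fun ⟨x, hx, hxc⟩ =>
    hxc ▸ cycleOf_mem_cycleFactorsFinset_iff.2 (mem_support.2 hx)⟩
  obtain ⟨x, hx⟩ := (mem_cycleFactorsFinset_iff.1 hc).1.nonempty_support
  exact ⟨x, mem_support.1 (mem_cycleFactorsFinset_support_le hc hx),
    (cycle_is_cycleOf hx hc).symm⟩

theorem card_quotient_sameCycle (σ : Perm α) :
    Nat.card (Quotient (SameCycle.setoid σ)) =
      σ.cycleType.card + (Finset.univ.filter fun x => σ x = x).card := by
  let φ : α → Perm α ⊕ α := fun x => if σ x = x then .inr x else .inl (σ.cycleOf x)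
  have hker : SameCycle.setoid σ = Setoid.ker φ := by
    ext x y
    simp only [Setoid.ker_def, φ]
    constructor
    · intro hxy
      by_cases hx : σ x = x
      · rw [← hxy.eq_of_left hx]
      · rw [if_neg hx, if_neg (hxy.apply_eq_self_iff.not.mp hx), hxy.cycleOf_eq]
    · intro h
      split_ifs at h with hx hy hy
      · rw [Sum.inr_injective h]
      · exact (sameCycle_iff_cycleOf_eq_of_mem_support (mem_support.2 hx)
          (mem_support.2 hy)).2 (Sum.inl_injective h)
  have himage : Finset.univ.image φ =
      σ.cycleFactorsFinset.disjSum (Finset.univ.filter fun x => σ x = x) := by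
    ext (c | x) <;> simp [φ, ite_eq_iff, mem_cycleFactorsFinset_iff_exists_cycleOf]
  rw [hker, Nat.card_congr (Setoid.quotientKerEquivRange φ), Nat.card_eq_card_toFinset,
    Set.toFinset_range, himage, Finset.card_disjSum, cycleType_def, Multiset.card_map]
  rfl

end Equiv.Perm

theorem stmt1_general {n : ℕ} (π : Equiv.Perm (Fin n))
    (l : List (Equiv.Perm (Fin n)))
    (hswap : ∀ τ ∈ l, τ.IsSwap) (hprod : l.prod = π)
    (htrans : IsTransitiveList l) :
    n + numCycles π - 2 ≤ l.length := by
  subst hprod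
  have hbound := card_add_card_quotient_sameCycle_le l hswap
  have horbits : Nat.card (orbitRel.Quotient (Subgroup.closure {τ | τ ∈ l}) (Fin n)) ≤ 1 := by
    refine Finite.card_le_one_iff_subsingleton.2 ⟨Quotient.ind₂ fun x y => Quotient.sound ?_⟩
    obtain ⟨g, hg, rfl⟩ := htrans y x
    exact ⟨⟨g, hg⟩, rfl⟩
  rw [Nat.card_fin, card_quotient_sameCycle] at hbound
  rw [numCycles]
  omega

theorem stmt1 {n : ℕ} (hn : 1 ≤ n) (π : Equiv.Perm (Fin n))
    (l : List (Equiv.Perm (Fin n)))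
    (hswap : ∀ τ ∈ l, τ.IsSwap) (hprod : l.prod = π)
    (htrans : IsTransitiveList l) :
    n + numCycles π - 2 ≤ l.length :=
  stmt1_general π l hswap hprod htrans
end

section
/- If π ∈ S_n has a fixed point a ≠ 1, then no star factorization of π of minimal length contains the factor (1 a); more precisely, if π(a)=a with a ≠ 1 and (τ_1,...,τ_r) is a star factorization of π of minimal length among all star factorizations of π, then no τ_i equals (1 a). -/
/-!
The centre of the star is `0 : Fin n` (the paper's `1`). If `π a = a` and `(0 a)` occurs in a
star factorization of `π`, cut it at the last occurrence of `(0 a)` and at the first occurrence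
of `(0 a)` before that: `π = P (0 a) Q (0 a) W`. Here `P` and `W` fix `a`, hence `Q` fixes `0`.
Conjugating a star word `Q` with `Q 0 = 0` by `(0 a)` needs no extra letters: if
`Q = (0 i) S (0 i) T` with `i ≠ a` and `T 0 = 0`, then
`(0 a) Q (0 a) = (0 i) Sᶜ (0 i) · (0 a) T (0 a)`, where `Sᶜ` is `S` conjugated letter by letter
by `(a i)`, again a star word because `(a i)` fixes `0`; recurse on `T`. Replacing
`(0 a) Q (0 a)` by such a word shortens the factorization by two.
-/

open Equiv

theorem List.exists_eq_append_cons_not_mem_right {α : Type*} {a : α} {l : List α} (h : a ∈ l) :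
    ∃ s t, l = s ++ a :: t ∧ a ∉ t := by
  obtain ⟨s, t, hl, ht⟩ := List.eq_append_cons_of_mem (List.mem_reverse.2 h)
  exact ⟨t.reverse, s.reverse, by simpa using congrArg List.reverse hl, by simpa using ht⟩

theorem Equiv.swap_mul_swap_of_ne {α : Type*} [DecidableEq α] {x y z : α} (hxy : x ≠ y)
    (hxz : x ≠ z) (hyz : y ≠ z) : swap x y * swap x z = swap x z * swap y z := by
  ext w
  simp only [Perm.mul_apply, swap_apply_def]
  split_ifs <;> simp_all

section StarList

variable {n : ℕ} [NeZero n]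

@[simp]
theorem isStarList_nil : IsStarList ([] : List (Perm (Fin n))) := by
  simp [IsStarList]

@[simp]
theorem isStarList_cons {τ : Perm (Fin n)} {l : List (Perm (Fin n))} :
    IsStarList (τ :: l) ↔ (∃ i, i ≠ 0 ∧ τ = swap 0 i) ∧ IsStarList l :=
  List.forall_mem_cons

@[simp]
theorem isStarList_append {l₁ l₂ : List (Perm (Fin n))} :
    IsStarList (l₁ ++ l₂) ↔ IsStarList l₁ ∧ IsStarList l₂ :=
  List.forall_mem_append

theorem IsStarList.map_conj {σ : Perm (Fin n)} (hσ : σ 0 = 0) {l : List (Perm (Fin n))}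
    (hl : IsStarList l) : IsStarList (l.map (MulAut.conj σ)) := by
  simp only [IsStarList, List.forall_mem_map]
  intro τ hτ
  obtain ⟨i, hi, rfl⟩ := hl τ hτ
  refine ⟨σ i, fun h => hi (σ.injective (h.trans hσ.symm)), ?_⟩
  rw [MulAut.conj_apply, ← swap_apply_apply, hσ]

theorem IsStarList.prod_apply_of_swap_not_mem {l : List (Perm (Fin n))} (hl : IsStarList l)
    {a : Fin n} (ha : a ≠ 0) (h : swap 0 a ∉ l) : l.prod a = a := by
  refine (MulAction.stabilizer (Perm (Fin n)) a).list_prod_mem fun τ hτ => ?_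
  obtain ⟨i, hi, rfl⟩ := hl τ hτ
  have hia : a ≠ i := by rintro rfl; exact h hτ
  exact swap_apply_of_ne_of_ne ha hia

theorem IsStarList.exists_eq_append_swap_cons {u : List (Perm (Fin n))} (hu : IsStarList u)
    {i : Fin n} (hi : i ≠ 0) (h : u.prod 0 = i) :
    ∃ p q, u = p ++ swap 0 i :: q ∧ q.prod 0 = 0 := by
  have hmem : swap 0 i ∈ u := by
    by_contra hnot
    exact hi (u.prod.injective ((hu.prod_apply_of_swap_not_mem hi hnot).trans h.symm))
  obtain ⟨p, q, rfl, hp⟩ := List.eq_append_cons_of_mem hmem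
  refine ⟨p, q, rfl, ?_⟩
  have hpi : p.prod i = i := (isStarList_append.1 hu).1.prod_apply_of_swap_not_mem hi hp
  rw [List.prod_append, List.prod_cons, Perm.mul_apply, Perm.mul_apply] at h
  simpa using swap_apply_eq_iff.1 (p.prod.injective (h.trans hpi.symm))

theorem IsStarList.exists_isStarFactorization_conj_swap {a : Fin n} (ha : a ≠ 0)
    {q : List (Perm (Fin n))} (hq : IsStarList q) (h0 : q.prod 0 = 0) :
    ∃ r, IsStarFactorization (swap 0 a * q.prod * swap 0 a) r ∧ r.length ≤ q.length := by
  induction hk : q.length using Nat.strong_induction_on generalizing q with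
  | _ k ih =>
  subst hk
  rcases q with _ | ⟨τ, q'⟩
  · exact ⟨[], ⟨isStarList_nil, by simp⟩, le_rfl⟩
  obtain ⟨⟨i, hi, rfl⟩, hq'⟩ := isStarList_cons.1 hq
  have hq'0 : q'.prod 0 = i := by
    rwa [List.prod_cons, Perm.mul_apply, swap_apply_eq_iff, swap_apply_left] at h0
  by_cases hia : i = a
  · subst hia
    exact ⟨q' ++ [swap 0 i], ⟨by simpa using ⟨hq', i, hi, rfl⟩, by simp⟩, by simp⟩
  obtain ⟨s, t, rfl, ht0⟩ := hq'.exists_eq_append_swap_cons hi hq'0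
  obtain ⟨hs, -, ht⟩ : IsStarList s ∧ _ ∧ IsStarList t := by simpa using hq'
  have hlt : t.length < (swap 0 i :: (s ++ swap 0 i :: t)).length := by
    simp only [List.length_cons, List.length_append]; omega
  obtain ⟨r, ⟨hr, hrprod⟩, hrlen⟩ := ih t.length hlt ht ht0 rfl
  have hai : swap a i 0 = 0 := swap_apply_of_ne_of_ne ha.symm hi.symm
  refine ⟨swap 0 i :: s.map (MulAut.conj (swap a i)) ++ swap 0 i :: r,
    ⟨by simpa using ⟨⟨i, hi, rfl⟩, hs.map_conj hai, ⟨i, hi, rfl⟩, hr⟩, ?_⟩, by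
      simp only [List.cons_append, List.length_cons, List.length_append, List.length_map]; omega⟩
  have key : swap 0 a * swap 0 i = swap 0 i * swap a i :=
    swap_mul_swap_of_ne (Ne.symm ha) (Ne.symm hi) (Ne.symm hia)
  have key' : swap 0 i * swap 0 a = swap a i * swap 0 i := by
    simpa [mul_inv_rev] using congrArg (·⁻¹) key
  calc (swap 0 i :: s.map (MulAut.conj (swap a i)) ++ swap 0 i :: r).prod
      = swap 0 i * swap a i * s.prod * (swap a i * swap 0 i) * r.prod := by
        simp [← map_list_prod, MulAut.conj_apply, mul_assoc]
    _ = swap 0 a * swap 0 i * s.prod * (swap 0 i * swap 0 a) *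
          (swap 0 a * t.prod * swap 0 a) := by
        rw [key, key', hrprod]
    _ = swap 0 a * (swap 0 i :: (s ++ swap 0 i :: t)).prod * swap 0 a := by
        simp [mul_assoc]

end StarList

theorem stmt2 {n : ℕ} [NeZero n] (π : Equiv.Perm (Fin n)) (a : Fin n)
    (ha : a ≠ 0) (hfix : π a = a)
    (l : List (Equiv.Perm (Fin n)))
    (hl : IsStarFactorization π l)
    (hmin : ∀ l', IsStarFactorization π l' → l.length ≤ l'.length) :
    ∀ τ ∈ l, τ ≠ Equiv.swap 0 a := by
  rintro τ hτ rfl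
  obtain ⟨hstar, hprod⟩ := hl
  obtain ⟨u, w, rfl, hw⟩ := List.exists_eq_append_cons_not_mem_right hτ
  obtain ⟨hu, -, hw'⟩ : IsStarList u ∧ _ ∧ IsStarList w := by simpa using hstar
  have hwa : w.prod a = a := hw'.prod_apply_of_swap_not_mem ha hw
  have hu0 : u.prod 0 = a := by
    simpa [← hprod, List.prod_append, hwa] using hfix
  obtain ⟨p, q, rfl, hq0⟩ := hu.exists_eq_append_swap_cons ha hu0
  obtain ⟨hp, -, hq⟩ : IsStarList p ∧ _ ∧ IsStarList q := by simpa using hu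
  obtain ⟨r, ⟨hr, hrprod⟩, hrlen⟩ := hq.exists_isStarFactorization_conj_swap ha hq0
  have hshort := hmin (p ++ r ++ w) ⟨by simp [hp, hr, hw'], by
    rw [← hprod, List.prod_append, List.prod_append, hrprod]
    simp [mul_assoc]⟩
  simp only [List.length_append, List.length_cons] at hshort
  omega
end

section
/- Let (τ_1,...,τ_r) be a minimal transitive star factorization of π ∈ S_n, and let σ = (a_1 a_2 ... a_ℓ) be a cycle of π not containing the symbol 1. Then the leftmost factor among τ_1,...,τ_r meeting σ (i.e., of the form (1 a_j) for some j) occurs at least twice in the factorization. -/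
/-- A minimal transitive star factorization: transitive of length `n + m - 2`. -/
def IsMinimalTransitiveStarFactorization {n : ℕ} [NeZero n] (π : Equiv.Perm (Fin n))
    (l : List (Equiv.Perm (Fin n))) : Prop :=
  IsStarFactorization π l ∧ IsTransitiveList l ∧ l.length = n + numCycles π - 2

/-!
Suppose the leftmost factor meeting `σ`, say `(1 a)`, occurs only once, so the factorization
is `l₁ · (1 a) · l₂` with `(1 a)` absent from `l₂`. Every factor of `l₂` fixes `a`, so
`π a = l₁(1)`. Every factor of `l₁` is `(1 i)` with `i ∉ σ`, hence fixes `σ` pointwise, and so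
`l₁` cannot move `1 ∉ σ` into `σ`. But `π a = σ a` lies in `σ`.
-/

open Equiv Equiv.Perm

theorem List.two_le_count_get_of_mem_drop {α : Type*} [DecidableEq α] {l : List α}
    (k : Fin l.length) (h : l.get k ∈ l.drop (k + 1)) : 2 ≤ l.count (l.get k) :=
  calc 2 ≤ (l.get k :: l.drop (k + 1)).count (l.get k) := by
        rw [List.count_cons_self]
        exact Nat.succ_le_succ (List.count_pos_iff.2 h)
    _ ≤ l.count (l.get k) := by
        refine List.Sublist.count_le _ ?_
        rw [List.get_eq_getElem, List.getElem_cons_drop]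
        exact List.drop_sublist _ _

namespace Equiv.Perm

variable {α : Type*}

theorem list_prod_apply_eq_self {m : List (Perm α)} {a : α} (h : ∀ τ ∈ m, τ a = a) :
    m.prod a = a :=
  (MulAction.stabilizer (Perm α) a).list_prod_mem h

variable [DecidableEq α] {c : α}

theorem list_prod_append_swap_cons_apply {a : α} (hac : a ≠ c) (l₁ l₂ : List (Perm α))
    (hstar : ∀ τ ∈ l₂, ∃ i, τ = swap c i) (hnot : swap c a ∉ l₂) :
    (l₁ ++ swap c a :: l₂).prod a = l₁.prod c := by
  have hfix : l₂.prod a = a := by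
    refine list_prod_apply_eq_self fun τ hτ => ?_
    obtain ⟨i, rfl⟩ := hstar τ hτ
    exact swap_apply_of_ne_of_ne hac (by rintro rfl; exact hnot hτ)
  simp only [List.prod_append, List.prod_cons, mul_apply, hfix, swap_apply_right]

theorem list_prod_apply_notMem {S : Set α} (hc : c ∉ S) {l : List (Perm α)}
    (hstar : ∀ τ ∈ l, ∃ i ∉ S, τ = swap c i) : l.prod c ∉ S := by
  have hfix : ∀ y ∈ S, l.prod y = y := fun y hy =>
    list_prod_apply_eq_self fun τ hτ => by
      obtain ⟨i, hi, rfl⟩ := hstar τ hτ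
      exact swap_apply_of_ne_of_ne (by rintro rfl; exact hc hy) (by rintro rfl; exact hi hy)
  intro hS
  exact hc (l.prod.injective (hfix _ hS) ▸ hS)

end Equiv.Perm

theorem stmt4 {n : ℕ} [NeZero n] (π σ : Equiv.Perm (Fin n))
    (l : List (Equiv.Perm (Fin n)))
    (hl : IsMinimalTransitiveStarFactorization π l)
    (hσ : σ ∈ π.cycleFactorsFinset) (h1 : (0 : Fin n) ∉ σ.support)
    (k : Fin l.length)
    (hk : ∃ i ∈ σ.support, l.get k = Equiv.swap 0 i)
    (hleft : ∀ j : Fin l.length, j < k → ¬ ∃ i ∈ σ.support, l.get j = Equiv.swap 0 i) :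
    2 ≤ l.count (l.get k) := by
  obtain ⟨⟨hstar, hprod⟩, -, -⟩ := hl
  obtain ⟨a, haS, hka⟩ := hk
  refine List.two_le_count_get_of_mem_drop k (by_contra fun hnot => ?_)
  rw [hka] at hnot
  have hsplit : l.take k ++ swap 0 a :: l.drop (k + 1) = l := by
    rw [← hka, List.get_eq_getElem, List.getElem_cons_drop, List.take_append_drop]
  have hprefix : ∀ τ ∈ l.take k, ∃ i ∉ (σ.support : Set (Fin n)), τ = swap 0 i := by
    intro τ hτ
    obtain ⟨j, hj, rfl⟩ := List.mem_take_iff_getElem.1 hτ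
    obtain ⟨i, -, hi⟩ := hstar _ (List.getElem_mem _)
    exact ⟨i, fun hiS => hleft ⟨j, by omega⟩ (Fin.mk_lt_mk.2 (by omega)) ⟨i, hiS, hi⟩, hi⟩
  have hπa : π a = (l.take k).prod 0 := by
    rw [← hprod]
    conv_lhs => rw [← hsplit]
    exact list_prod_append_swap_cons_apply (c := 0) (fun h => h1 (h ▸ haS)) _ _
      (fun τ hτ => (hstar τ (List.mem_of_mem_drop hτ)).imp fun _ => And.right) hnot
  refine list_prod_apply_notMem (l := l.take k) h1 hprefix ?_
  rw [← hπa, ← (mem_cycleFactorsFinset_iff.1 hσ).2 a haS]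
  exact apply_mem_support.2 haS
end

section
/- Let (τ_1,...,τ_r) be a minimal transitive star factorization of π ∈ S_n whose cycles are σ_1,...,σ_m with σ_1 the cycle containing 1 (of length ℓ_1, possibly 1) and σ_i of length ℓ_i for i ≥ 2. Then for each i ≥ 2, exactly ℓ_i + 1 of the factors meet σ_i, and exactly ℓ_1 − 1 factors meet σ_1; moreover r = n + m − 2. -/
/-!
Write `c i` for the number of factors equal to `(0 i)`. Transitivity forces `c i ≥ 1` for every
`i ≠ 0`. If `C` is a cycle of `π` avoiding `0` (a fixed point included), then the factors meeting
`C` number at least `|C| + 1`: were each `(0 i)`, `i ∈ C`, used once, the earliest of them would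
be preceded by `(0 (π i))`, because the factors to its left have to carry `0` to `π i`. Summing
these bounds over the cycles gives `r ≥ (n - 1) + (m - 1)`, so for a minimal factorization every
one of them is attained.
-/

open Equiv Finset

theorem ncard_get_mem_eq_sum_count {β : Type*} [DecidableEq β] (l : List β) (t : Finset β) :
    {k : Fin l.length | l.get k ∈ t}.ncard = ∑ x ∈ t, l.count x := by
  rw [Set.ncard_eq_toFinset_card', Set.toFinset_ofPred, card_filter]
  simp only [List.get_eq_getElem, Fin.sum_univ_fun_getElem l (fun x => if x ∈ t then 1 else 0)]
  induction l with
  | nil => simp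
  | cons b l ih => simp [List.count_cons, sum_add_distrib, ih, add_comm]

section StarTranspositions

variable {α : Type*} [DecidableEq α] {a : α} {l : List (Perm α)}

theorem prod_apply_eq_self_of_swap_notMem (hl : ∀ τ ∈ l, ∃ i, τ = swap a i) {j : α}
    (hj : j ≠ a) (hjl : swap a j ∉ l) : l.prod j = j := by
  induction l with
  | nil => rfl
  | cons τ t ih =>
    obtain ⟨i, rfl⟩ := hl τ List.mem_cons_self
    have hji : j ≠ i := by rintro rfl; exact hjl List.mem_cons_self
    rw [List.prod_cons, Perm.mul_apply,
      ih (fun τ h => hl τ (List.mem_cons_of_mem _ h)) (fun h => hjl (List.mem_cons_of_mem _ h)),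
      swap_apply_of_ne_of_ne hj hji]

theorem swap_mem_of_mem_closure_apply_eq (hl : ∀ τ ∈ l, ∃ i, τ = swap a i) {g : Perm α}
    (hg : g ∈ Subgroup.closure {τ | τ ∈ l}) {i : α} (hi : i ≠ a) (hgi : g i = a) :
    swap a i ∈ l := by
  by_contra hil
  have hfix : Subgroup.closure {τ | τ ∈ l} ≤ MulAction.stabilizer (Perm α) i := by
    refine (Subgroup.closure_le _).2 fun τ hτ => ?_
    obtain ⟨j, rfl⟩ := hl τ hτ
    have hij : i ≠ j := by rintro rfl; exact hil hτ
    exact swap_apply_of_ne_of_ne hi hij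
  exact hi ((hfix hg).symm.trans hgi)

theorem idxOf_swap_prod_apply_lt [Fintype α] (hl : ∀ τ ∈ l, ∃ i, τ = swap a i) {i : α}
    (hi : i ≠ a) (hli : l.prod i ≠ a) (hc : l.count (swap a i) = 1) :
    l.idxOf (swap a (l.prod i)) < l.idxOf (swap a i) := by
  obtain ⟨s, t, rfl, hs⟩ := List.eq_append_cons_of_mem (List.count_pos_iff.1 (hc ▸ one_pos))
  have hls : ∀ τ ∈ s, ∃ i, τ = swap a i := fun τ h => hl τ (List.mem_append_left _ h)
  have hlt : ∀ τ ∈ t, ∃ i, τ = swap a i := fun τ h =>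
    hl τ (List.mem_append_right _ (List.mem_cons_of_mem _ h))
  have ht : swap a i ∉ t := by
    rw [List.count_append, List.count_cons_self, List.count_eq_zero_of_not_mem hs] at hc
    exact List.count_eq_zero.1 (by omega)
  have hprod : (s ++ swap a i :: t).prod i = s.prod a := by
    rw [List.prod_append, List.prod_cons, Perm.mul_apply, Perm.mul_apply,
      prod_apply_eq_self_of_swap_notMem hlt hi ht, swap_apply_right]
  rw [hprod] at hli ⊢
  have hmem : swap a (s.prod a) ∈ s := not_not.1 fun h =>
    hli (s.prod.injective (prod_apply_eq_self_of_swap_notMem hls hli h))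
  rw [List.idxOf_append_of_mem hmem, List.idxOf_append_of_notMem hs, List.idxOf_cons_self]
  simpa using List.idxOf_lt_length_iff.2 hmem

theorem card_add_one_le_sum_count_swap [Fintype α] (hl : ∀ τ ∈ l, ∃ i, τ = swap a i)
    {S : Finset α} (hS : S.Nonempty) (haS : a ∉ S) (hmaps : ∀ i ∈ S, l.prod i ∈ S)
    (hmem : ∀ i ∈ S, swap a i ∈ l) : #S + 1 ≤ ∑ i ∈ S, l.count (swap a i) := by
  by_contra! hlt
  have hpos : ∀ i ∈ S, 1 ≤ l.count (swap a i) := fun i hi => List.count_pos_iff.2 (hmem i hi)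
  have hone : ∀ i ∈ S, 1 = l.count (swap a i) := by
    refine (sum_eq_sum_iff_of_le hpos).1 (le_antisymm (sum_le_sum hpos) ?_)
    simpa using Nat.lt_succ_iff.1 hlt
  have hne : ∀ i ∈ S, i ≠ a := fun i hi h => haS (h ▸ hi)
  obtain ⟨i, hi, hmin⟩ := S.exists_min_image (fun i => l.idxOf (swap a i)) hS
  exact (idxOf_swap_prod_apply_lt hl (hne i hi) (hne _ (hmaps i hi)) (hone i hi).symm).not_ge
    (hmin _ (hmaps i hi))

theorem card_support_add_one_le_sum_count_swap [Fintype α] (hl : ∀ τ ∈ l, ∃ i, τ = swap a i)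
    {σ : Perm α} (hσ : σ ∈ l.prod.cycleFactorsFinset) (haσ : a ∉ σ.support)
    (hmem : ∀ i ∈ σ.support, swap a i ∈ l) :
    #σ.support + 1 ≤ ∑ i ∈ σ.support, l.count (swap a i) :=
  card_add_one_le_sum_count_swap hl (Perm.mem_cycleFactorsFinset_iff.1 hσ).1.nonempty_support
    haσ (fun i hi => (Perm.mem_cycleFactorsFinset_support hσ i).2 hi) hmem

theorem two_le_count_swap_of_prod_apply_eq_self [Fintype α] (hl : ∀ τ ∈ l, ∃ i, τ = swap a i)
    {i : α} (hi : i ≠ a) (hfix : l.prod i = i) (hmem : swap a i ∈ l) :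
    2 ≤ l.count (swap a i) := by
  simpa using card_add_one_le_sum_count_swap hl (singleton_nonempty i)
    (notMem_singleton.2 hi.symm) (by simpa using hfix) (by simpa using hmem)

theorem ncard_get_eq_swap_eq_sum_count [Fintype α] (l : List (Perm α)) (S : Finset α) :
    {k : Fin l.length | ∃ i ∈ S, l.get k = swap a i}.ncard = ∑ i ∈ S, l.count (swap a i) := by
  rw [← sum_image (f := l.count) fun i _ j _ h => swap_injective_of_left a h,
    ← ncard_get_mem_eq_sum_count]
  simp [eq_comm]

theorem length_eq_sum_count_swap [Fintype α] (hl : ∀ τ ∈ l, ∃ i, i ≠ a ∧ τ = swap a i) :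
    l.length = ∑ i ∈ univ.erase a, l.count (swap a i) := by
  have hall : {k : Fin l.length | ∃ i ∈ univ.erase a, l.get k = swap a i} = Set.univ :=
    Set.eq_univ_of_forall fun k => by
      obtain ⟨i, hi, h⟩ := hl _ (l.get_mem k)
      exact ⟨i, mem_erase.2 ⟨hi, mem_univ i⟩, h⟩
  rw [← ncard_get_eq_swap_eq_sum_count, hall, Set.ncard_univ, Nat.card_eq_fintype_card,
    Fintype.card_fin]

end StarTranspositions

section CycleDecomposition

variable {α : Type*} [Fintype α] [DecidableEq α] (π : Perm α) (a : α)

theorem Equiv.Perm.mem_support_of_sameCycle_of_mem_cycleFactorsFinset {σ : Perm α}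
    (hσ : σ ∈ π.cycleFactorsFinset) {i j : α} (hi : i ∈ σ.support) (hij : π.SameCycle i j) :
    j ∈ σ.support := by
  rw [Perm.cycle_is_cycleOf hi hσ, Perm.mem_support_cycleOf_iff]
  exact ⟨hij, Perm.mem_cycleFactorsFinset_support_le hσ hi⟩

theorem sum_erase_eq_sum_sameCycle_add_sum_cycleFactors_add_sum_fixed {M : Type*}
    [AddCommMonoid M] (f : α → M) :
    ∑ i ∈ univ.erase a, f i =
      ∑ i ∈ ({i | π.SameCycle a i} : Finset α).erase a, f i
        + ∑ σ ∈ π.cycleFactorsFinset with a ∉ σ.support, ∑ i ∈ σ.support, f i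
        + ∑ i ∈ π.supportᶜ.erase a, f i := by
  set T := ({i | π.SameCycle a i} : Finset α).erase a
  set Cs := {σ ∈ π.cycleFactorsFinset | a ∉ σ.support}
  have hCs : (Cs : Set (Perm α)).PairwiseDisjoint Perm.support := fun σ hσ τ hτ hne =>
    (Perm.cycleFactorsFinset_pairwise_disjoint π (mem_filter.1 hσ).1 (mem_filter.1 hτ).1
      hne).disjoint_support
  have hdisj₁ : Disjoint T (Cs.biUnion Perm.support) := by
    simp only [disjoint_left, mem_erase, mem_filter, mem_univ, true_and, mem_biUnion,
      not_exists, not_and, T, Cs]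
    intro i ⟨_, hai⟩ σ ⟨hσ, haσ⟩ hiσ
    exact haσ (π.mem_support_of_sameCycle_of_mem_cycleFactorsFinset hσ hiσ hai.symm)
  have hdisj₂ : Disjoint (T ∪ Cs.biUnion Perm.support) (π.supportᶜ.erase a) := by
    simp only [disjoint_left, mem_union, mem_erase, mem_filter, mem_univ, true_and, mem_biUnion,
      mem_compl, T, Cs]
    rintro i (⟨hia, hai⟩ | ⟨σ, ⟨hσ, -⟩, hiσ⟩) ⟨-, hfix⟩
    · exact hia (hai.eq_of_right (Perm.notMem_support.1 hfix)).symm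
    · exact hfix (Perm.mem_cycleFactorsFinset_support_le hσ hiσ)
  have hcover : univ.erase a = (T ∪ Cs.biUnion Perm.support) ∪ π.supportᶜ.erase a := by
    ext i
    simp only [mem_union, mem_erase, mem_filter, mem_univ, true_and, and_true, mem_biUnion,
      mem_compl, T, Cs]
    constructor
    · intro hia
      by_cases hi : i ∉ π.support
      · exact Or.inr ⟨hia, hi⟩
      by_cases hai : π.SameCycle a i
      · exact Or.inl (Or.inl ⟨hia, hai⟩)
      refine Or.inl (Or.inr ⟨π.cycleOf i, ⟨?_, fun h => ?_⟩, ?_⟩)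
      · exact Perm.cycleOf_mem_cycleFactorsFinset_iff.2 (not_not.1 hi)
      · exact hai (Perm.mem_support_cycleOf_iff.1 h).1.symm
      · exact Perm.mem_support_cycleOf_iff.2 ⟨.refl _ _, not_not.1 hi⟩
    · rintro ((⟨hia, -⟩ | ⟨σ, ⟨-, haσ⟩, hiσ⟩) | ⟨hia, -⟩)
      · exact hia
      · exact fun h => haσ (h ▸ hiσ)
      · exact hia
  rw [hcover, sum_union hdisj₂, sum_union hdisj₁, sum_biUnion hCs]

theorem card_erase_eq_card_sameCycle_add_sum_card_support_add_card_fixed :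
    #(univ.erase a) =
      #(({i | π.SameCycle a i} : Finset α).erase a)
        + ∑ σ ∈ π.cycleFactorsFinset with a ∉ σ.support, #σ.support
        + #(π.supportᶜ.erase a) := by
  simpa only [sum_const, smul_eq_mul, mul_one] using
    sum_erase_eq_sum_sameCycle_add_sum_cycleFactors_add_sum_fixed π a fun _ => (1 : ℕ)

theorem card_cycleFactorsFinset_add_card_compl_support :
    #π.cycleFactorsFinset + #π.supportᶜ =
      #{σ ∈ π.cycleFactorsFinset | a ∉ σ.support} + #(π.supportᶜ.erase a) + 1 := by
  by_cases ha : a ∈ π.support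
  · have hcycle : π.cycleOf a ∈ π.cycleFactorsFinset :=
      Perm.cycleOf_mem_cycleFactorsFinset_iff.2 ha
    have hCs : {σ ∈ π.cycleFactorsFinset | a ∉ σ.support} =
        π.cycleFactorsFinset.erase (π.cycleOf a) := by
      ext σ
      simp only [mem_filter, mem_erase]
      constructor
      · rintro ⟨hσ, haσ⟩
        exact ⟨fun h => haσ (h ▸ Perm.mem_support_cycleOf_iff.2 ⟨.refl _ _, ha⟩), hσ⟩
      · rintro ⟨hne, hσ⟩
        exact ⟨hσ, fun haσ => hne (Perm.cycle_is_cycleOf haσ hσ)⟩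
    rw [hCs, card_erase_of_mem hcycle, erase_eq_of_notMem (by simpa using ha)]
    have := card_pos.2 ⟨_, hcycle⟩
    omega
  · have hCs : ∀ σ ∈ π.cycleFactorsFinset, a ∉ σ.support := fun σ hσ haσ =>
      ha (Perm.mem_cycleFactorsFinset_support_le hσ haσ)
    rw [filter_true_of_mem hCs, add_assoc, card_erase_add_one (mem_compl.2 ha)]

end CycleDecomposition

theorem numCycles_eq_card_filter_add_card_erase_add_one {n : ℕ} (π : Perm (Fin n))
    (a : Fin n) :
    numCycles π = #{σ ∈ π.cycleFactorsFinset | a ∉ σ.support} + #(π.supportᶜ.erase a) + 1 := by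
  rw [← card_cycleFactorsFinset_add_card_compl_support, numCycles, Perm.cycleType_def,
    Multiset.card_map]
  congr 2
  ext x
  simp

theorem IsStarList.exists_eq_swap {n : ℕ} [NeZero n] {l : List (Perm (Fin n))}
    (hstar : IsStarList l) : ∀ τ ∈ l, ∃ i, τ = swap 0 i :=
  fun τ hτ => (hstar τ hτ).imp fun _ => And.right

theorem IsTransitiveList.swap_mem {n : ℕ} [NeZero n] {l : List (Perm (Fin n))}
    (hstar : IsStarList l) (htrans : IsTransitiveList l) {i : Fin n} (hi : i ≠ 0) :
    swap 0 i ∈ l := by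
  obtain ⟨g, hg, hgi⟩ := htrans i 0
  exact swap_mem_of_mem_closure_apply_eq hstar.exists_eq_swap hg hi hgi

theorem IsMinimalTransitiveStarFactorization.sum_count_swap_eq {n : ℕ} [NeZero n]
    {π : Perm (Fin n)} {l : List (Perm (Fin n))}
    (hl : IsMinimalTransitiveStarFactorization π l) :
    ∑ i ∈ ({i | π.SameCycle 0 i} : Finset (Fin n)).erase 0, l.count (swap 0 i) =
        #(({i | π.SameCycle 0 i} : Finset (Fin n)).erase 0) ∧
      ∀ σ ∈ π.cycleFactorsFinset, 0 ∉ σ.support →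
        ∑ i ∈ σ.support, l.count (swap 0 i) = #σ.support + 1 := by
  obtain ⟨⟨hstar, hprod⟩, htrans, hlen⟩ := hl
  have hmem : ∀ i ≠ 0, swap 0 i ∈ l := fun i hi => htrans.swap_mem hstar hi
  set c : Fin n → ℕ := fun i => l.count (swap 0 i)
  set T : Finset (Fin n) := ({i | π.SameCycle 0 i} : Finset (Fin n)).erase 0
  set Cs := {σ ∈ π.cycleFactorsFinset | (0 : Fin n) ∉ σ.support}
  set F := π.supportᶜ.erase 0
  have hT : #T • 1 ≤ ∑ i ∈ T, c i :=
    card_nsmul_le_sum T c 1 fun i hi => List.count_pos_iff.2 (hmem i (ne_of_mem_erase hi))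
  have hCs : ∀ σ ∈ Cs, #σ.support + 1 ≤ ∑ i ∈ σ.support, c i := by
    intro σ hσ
    obtain ⟨hσπ, h0σ⟩ := mem_filter.1 hσ
    exact card_support_add_one_le_sum_count_swap hstar.exists_eq_swap (hprod ▸ hσπ) h0σ
      fun i hi => hmem i fun h => h0σ (h ▸ hi)
  have hF : #F • 2 ≤ ∑ i ∈ F, c i := by
    refine card_nsmul_le_sum F _ 2 fun i hi => ?_
    obtain ⟨hi0, hfix⟩ := mem_erase.1 hi
    exact two_le_count_swap_of_prod_apply_eq_self hstar.exists_eq_swap hi0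
      (hprod ▸ Perm.notMem_support.1 (mem_compl.1 hfix)) (hmem i hi0)
  have hlength : l.length = ∑ i ∈ T, c i + ∑ σ ∈ Cs, ∑ i ∈ σ.support, c i + ∑ i ∈ F, c i := by
    rw [length_eq_sum_count_swap hstar,
      sum_erase_eq_sum_sameCycle_add_sum_cycleFactors_add_sum_fixed]
  have hn : #T + ∑ σ ∈ Cs, #σ.support + #F + 1 = n := by
    rw [← card_erase_eq_card_sameCycle_add_sum_card_support_add_card_fixed,
      card_erase_add_one (mem_univ _), card_univ, Fintype.card_fin]
  have hm : numCycles π = #Cs + #F + 1 := numCycles_eq_card_filter_add_card_erase_add_one π 0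
  have hCsum := sum_le_sum hCs
  rw [sum_add_distrib, sum_const, smul_eq_mul, mul_one] at hCsum
  simp only [smul_eq_mul, mul_one] at hT hF
  refine ⟨show ∑ i ∈ T, c i = #T by omega, fun σ hσ h0σ => ?_⟩
  refine ((sum_eq_sum_iff_of_le hCs).1 ?_ σ (mem_filter.2 ⟨hσ, h0σ⟩)).symm
  rw [sum_add_distrib, sum_const, smul_eq_mul, mul_one]
  omega

theorem stmt5 {n : ℕ} [NeZero n] (π : Equiv.Perm (Fin n))
    (l : List (Equiv.Perm (Fin n)))
    (hl : IsMinimalTransitiveStarFactorization π l) :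
    (∀ σ ∈ π.cycleFactorsFinset, (0 : Fin n) ∉ σ.support →
      {k : Fin l.length | ∃ i ∈ σ.support, l.get k = Equiv.swap 0 i}.ncard
        = σ.support.card + 1) ∧
    {k : Fin l.length | ∃ i : Fin n, i ≠ 0 ∧ π.SameCycle 0 i ∧
        l.get k = Equiv.swap 0 i}.ncard
      = {i : Fin n | π.SameCycle 0 i}.ncard - 1 ∧
    l.length = n + numCycles π - 2 := by
  obtain ⟨horbit, hcycle⟩ := hl.sum_count_swap_eq
  refine ⟨fun σ hσ h0σ => ?_, ?_, hl.2.2⟩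
  · rw [ncard_get_eq_swap_eq_sum_count, hcycle σ hσ h0σ]
  · have hset : {k : Fin l.length | ∃ i : Fin n, i ≠ 0 ∧ π.SameCycle 0 i ∧ l.get k = swap 0 i} =
        {k | ∃ i ∈ ({i | π.SameCycle 0 i} : Finset (Fin n)).erase 0, l.get k = swap 0 i} := by
      ext k
      simp [and_assoc]
    rw [hset, ncard_get_eq_swap_eq_sum_count, horbit,
      card_erase_of_mem (mem_filter.2 ⟨mem_univ _, .refl _ _⟩), ← Set.ncard_coe_finset]
    simp
end

section
/- Let (τ_1,...,τ_r) be a minimal transitive star factorization of π ∈ S_n and let σ = (a_1 a_2 ... a_ℓ) be a cycle of π with all a_i ≠ 1. Then there is an index j such that (1 a_j) appears exactly twice among the factors, every (1 a_i) with i ≠ j appears exactly once, and (taking j = 1 without loss of generality) the factors meeting σ appear in right-to-left order (1 a_1), (1 a_2), ..., (1 a_ℓ), (1 a_1). -/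
/-
The factors of `l = [τ₁, …, τᵣ]` act from right to left, and by transitivity every letter
`x ≠ 1` occurs. If `π(x) ≠ 1`, the point `x` is first moved by a factor `(1 x)`, and its image
finally reaches `π(x)` from `1` through a factor `(1 π(x))`; so some `(1 π(x))` stands to the
left of some `(1 x)`. Around a cycle `σ` avoiding `1` these precedences are impossible if every
letter of `σ` occurs only once (the positions would decrease all the way around), so the letters
of `σ` occur at least `|σ| + 1` times, while those of the orbit `O` of `1` occur at least
`|O| - 1` times. Summed over the `m` orbits this gives `r ≥ n + m - 2`. For a minimal
factorization every bound is attained: exactly one letter `a_j` of `σ` occurs twice, and the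
precedences `(1 a_{j+1})` before `(1 a_j)`, …, `(1 a_j)` before `(1 a_{j-1})` fix the order.
-/

open Finset
open scoped List

namespace List
variable {α : Type*} {l : List α} {a b : α}

theorem exists_get_lt_of_pair_sublist (h : [a, b] <+ l) :
    ∃ i j : Fin l.length, i < j ∧ l.get i = a ∧ l.get j = b := by
  obtain ⟨f, hf⟩ := sublist_iff_exists_fin_orderEmbedding_get_eq.mp h
  exact ⟨f 0, f 1, f.strictMono zero_lt_one, (hf 0).symm, (hf 1).symm⟩

variable [DecidableEq α]

theorem count_eq_card_filter_get (l : List α) (a : α) :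
    l.count a = #{i : Fin l.length | l.get i = a} := by
  induction l with
  | nil => simp
  | cons c t ih =>
    rw [count_cons, ih, card_filter, card_filter]
    change _ = ∑ i : Fin (t.length + 1), _
    rw [Fin.sum_univ_succ, add_comm]
    by_cases h : c = a <;> simp [h]

theorem get_eq_get_of_count_le_one (h : l.count a ≤ 1) {i j : Fin l.length}
    (hi : l.get i = a) (hj : l.get j = a) : i = j := by
  rw [count_eq_card_filter_get, card_le_one] at h
  exact h i (by simpa using hi) j (by simpa using hj)

theorem eq_or_eq_of_count_le_two (h : l.count a ≤ 2) {i j k : Fin l.length} (hij : i ≠ j)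
    (hi : l.get i = a) (hj : l.get j = a) (hk : l.get k = a) : k = i ∨ k = j := by
  rw [count_eq_card_filter_get, ← not_lt, two_lt_card_iff] at h
  by_contra! hne
  exact h ⟨i, j, k, by simpa using hi, by simpa using hj, by simpa using hk, hij,
    hne.1.symm, hne.2.symm⟩

theorem get_lt_of_pair_sublist (h : [a, b] <+ l) (ha : l.count a ≤ 1) (hb : l.count b ≤ 1)
    {i j : Fin l.length} (hi : l.get i = a) (hj : l.get j = b) : i < j := by
  obtain ⟨i', j', hlt, hi', hj'⟩ := exists_get_lt_of_pair_sublist h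
  rwa [get_eq_get_of_count_le_one ha hi hi', get_eq_get_of_count_le_one hb hj hj']

theorem exists_get_eq_of_count_pos (h : 0 < l.count a) : ∃ i, l.get i = a :=
  mem_iff_get.mp (count_pos_iff.mp h)

theorem get_lt_get_of_pair_sublist_chain {ℓ : ℕ} {b : ℕ → α}
    (hpair : ∀ s < ℓ, [b (s + 1), b s] <+ l) (hone : ∀ s, 1 ≤ s → s < ℓ → l.count (b s) = 1)
    {s t : ℕ} (hs : 1 ≤ s) (hst : s < t) (ht : t < ℓ)
    {r u : Fin l.length} (hr : l.get r = b s) (hu : l.get u = b t) : u < r := by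
  induction t, hst using Nat.le_induction generalizing u with
  | base =>
    exact get_lt_of_pair_sublist (hpair s (by omega)) (hone _ (by omega) ht).le
      (hone s hs (by omega)).le hu hr
  | succ t hst ih =>
    obtain ⟨w, hw⟩ := exists_get_eq_of_count_pos (a := b t)
      (by rw [hone t (by omega) (by omega)]; omega)
    exact (get_lt_of_pair_sublist (hpair t (by omega)) (hone _ (by omega) ht).le
      (hone t (by omega) (by omega)).le hu hw).trans (ih (by omega) hw)

theorem exists_nested_of_pair_sublist {ℓ : ℕ} {b : ℕ → α} (hbℓ : b ℓ = b 0)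
    (hpair : ∀ s < ℓ, [b (s + 1), b s] <+ l) (htwo : l.count (b 0) = 2)
    (hone : ∀ s, 1 ≤ s → s < ℓ → l.count (b s) = 1) :
    ∃ p q : Fin l.length, p < q ∧ l.get p = b 0 ∧ l.get q = b 0 ∧
      (∀ s, 1 ≤ s → s < ℓ → ∀ r, l.get r = b s → p < r ∧ r < q) ∧
      (∀ s t, 1 ≤ s → s < t → t < ℓ → ∀ r u, l.get r = b s → l.get u = b t → u < r) := by
  obtain ⟨p, q, hpq, hp, hq⟩ :=
    duplicate_iff_exists_distinct_get.mp (duplicate_iff_two_le_count.mpr htwo.ge)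
  have hb0 {k : Fin l.length} (hk : l.get k = b 0) : p ≤ k ∧ k ≤ q := by
    rcases eq_or_eq_of_count_le_two htwo.le hpq.ne hp.symm hq.symm hk with rfl | rfl
    exacts [⟨le_rfl, hpq.le⟩, ⟨hpq.le, le_rfl⟩]
  have hposition {s : ℕ} (hs : 1 ≤ s) (hsℓ : s < ℓ) : ∃ r, l.get r = b s :=
    exists_get_eq_of_count_pos (by rw [hone s hs hsℓ]; exact one_pos)
  have hfirst {r : Fin l.length} (hℓ : 1 < ℓ) (hr : l.get r = b 1) : r < q := by
    obtain ⟨i, k, hik, hi, hk⟩ := exists_get_lt_of_pair_sublist (hpair 0 (by omega))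
    rw [get_eq_get_of_count_le_one (hone 1 le_rfl hℓ).le hr hi]
    exact hik.trans_le (hb0 hk).2
  have hlast {r : Fin l.length} (hℓ : 1 < ℓ) (hr : l.get r = b (ℓ - 1)) : p < r := by
    obtain ⟨i, k, hik, hi, hk⟩ := exists_get_lt_of_pair_sublist (hpair (ℓ - 1) (by omega))
    rw [Nat.sub_add_cancel (by omega), hbℓ] at hi
    rw [get_eq_get_of_count_le_one (hone _ (by omega) (by omega)).le hr hk]
    exact (hb0 hi).1.trans_lt hik
  refine ⟨p, q, hpq, hp.symm, hq.symm, fun s hs hsℓ r hr => ⟨?_, ?_⟩,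
    fun s t hs hst htℓ r u => get_lt_get_of_pair_sublist_chain hpair hone hs hst htℓ⟩
  · rcases (show s = ℓ - 1 ∨ s < ℓ - 1 by omega) with rfl | hs'
    · exact hlast (by omega) hr
    · obtain ⟨w, hw⟩ := hposition (s := ℓ - 1) (by omega) (by omega)
      exact (hlast (by omega) hw).trans
        (get_lt_get_of_pair_sublist_chain hpair hone hs hs' (by omega) hr hw)
  · rcases (show s = 1 ∨ 1 < s by omega) with rfl | hs'
    · exact hfirst hsℓ hr
    · obtain ⟨w, hw⟩ := hposition le_rfl (by omega)
      exact (get_lt_get_of_pair_sublist_chain hpair hone le_rfl hs' hsℓ hw hr).trans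
        (hfirst (by omega) hw)

end List

namespace Finset

variable {ι : Type*} [DecidableEq ι] {s : Finset ι} {f : ι → ℕ} {i₀ : ι}

theorem card_add_one_le_sum (hf : ∀ i ∈ s, 1 ≤ f i) (hi₀ : i₀ ∈ s) (h₂ : 2 ≤ f i₀) :
    #s + 1 ≤ ∑ i ∈ s, f i := by
  rw [← add_sum_erase s f hi₀, ← card_erase_add_one hi₀, card_eq_sum_ones (s.erase i₀)]
  have := sum_le_sum (s := s.erase i₀) (f := fun _ => 1) fun i hi => hf i (mem_of_mem_erase hi)
  omega

theorem eq_two_and_eq_one_of_sum_eq_card_add_one (hf : ∀ i ∈ s, 1 ≤ f i) (hi₀ : i₀ ∈ s)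
    (h₂ : 2 ≤ f i₀) (hsum : ∑ i ∈ s, f i = #s + 1) :
    f i₀ = 2 ∧ ∀ i ∈ s, i ≠ i₀ → f i = 1 := by
  rw [← add_sum_erase s f hi₀, ← card_erase_add_one hi₀, card_eq_sum_ones (s.erase i₀)] at hsum
  have hle : ∀ i ∈ s.erase i₀, 1 ≤ f i := fun i hi => hf i (mem_of_mem_erase hi)
  have := sum_le_sum hle
  refine ⟨by omega, fun i hi hne => ?_⟩
  exact ((sum_eq_sum_iff_of_le hle).mp (by omega) i (mem_erase.mpr ⟨hne, hi⟩)).symm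

end Finset

theorem Finpartition.sum_sum_parts {α M : Type*} [DecidableEq α] [AddCommMonoid M]
    {s : Finset α} (P : Finpartition s) (f : α → M) :
    ∑ D ∈ P.parts, ∑ x ∈ D, f x = ∑ x ∈ s, f x :=
  calc ∑ D ∈ P.parts, ∑ x ∈ D, f x = ∑ x ∈ P.parts.biUnion id, f x :=
        (sum_biUnion P.disjoint).symm
    _ = ∑ x ∈ s, f x := by rw [P.biUnion_parts]

theorem Function.Periodic.apply_add_ne {β : Type*} {a : ℕ → β} {ℓ : ℕ} (hper : Periodic a ℓ)
    (hinj : Set.InjOn a (Set.Iio ℓ)) {j s : ℕ} (hj : j < ℓ) (hs : 1 ≤ s) (hsℓ : s < ℓ) :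
    a (j + s) ≠ a j := by
  intro h
  rw [← hper.map_mod_nat] at h
  have hmod : (j + s) % ℓ = j % ℓ :=
    (hinj (Set.mem_Iio.mpr (Nat.mod_lt _ (by omega))) (Set.mem_Iio.mpr hj) h).trans
      (Nat.mod_eq_of_lt hj).symm
  have := Nat.sub_mod_eq_zero_of_mod_eq hmod
  rw [Nat.add_sub_cancel_left, Nat.mod_eq_of_lt hsℓ] at this
  omega

namespace Equiv.Perm

variable {α : Type*} [Fintype α] [DecidableEq α] (π : Perm α)

instance : DecidableRel (SameCycle.setoid π) := inferInstanceAs (DecidableRel π.SameCycle)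

def orbitPartition : Finpartition (univ : Finset α) :=
  Finpartition.ofSetoid (SameCycle.setoid π)

variable {π} {x y : α}

theorem mem_orbitPartition_part : y ∈ (orbitPartition π).part x ↔ π.SameCycle x y :=
  Finpartition.mem_part_ofSetoid_iff_rel

theorem orbitPartition_part_mem_parts (x : α) :
    (orbitPartition π).part x ∈ (orbitPartition π).parts :=
  (orbitPartition π).part_mem.2 (mem_univ x)

theorem orbitPartition_part_of_apply_eq (h : π x = x) : (orbitPartition π).part x = {x} := by
  ext y
  rw [mem_orbitPartition_part, mem_singleton]
  exact ⟨fun hxy => (hxy.eq_of_left h).symm, fun hy => hy ▸ SameCycle.refl π x⟩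

theorem orbitPartition_part_of_apply_ne (h : π x ≠ x) :
    (orbitPartition π).part x = (π.cycleOf x).support := by
  ext y
  rw [mem_orbitPartition_part, mem_support_cycleOf_iff' h]

theorem card_orbitPartition_parts_filter_card_eq_one :
    #{D ∈ (orbitPartition π).parts | #D = 1} = #{x | π x = x} := by
  symm
  refine card_bij (fun x _ => (orbitPartition π).part x) (fun x hx => ?_)
    (fun x hx y hy hxy => ?_) ?_
  · rw [mem_filter] at hx ⊢
    refine ⟨orbitPartition_part_mem_parts x, ?_⟩
    rw [orbitPartition_part_of_apply_eq hx.2, card_singleton]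
  · simp only [mem_filter, mem_univ, true_and] at hx hy
    simpa [orbitPartition_part_of_apply_eq hx, orbitPartition_part_of_apply_eq hy] using hxy
  · intro D hD
    rw [mem_filter] at hD
    obtain ⟨y, rfl⟩ := card_eq_one.mp hD.2
    have hpart : (orbitPartition π).part y = {y} :=
      (orbitPartition π).part_eq_of_mem hD.1 (mem_singleton_self y)
    have hfix : π y ∈ (orbitPartition π).part y :=
      mem_orbitPartition_part.2 (sameCycle_apply_right.2 (SameCycle.refl π y))
    rw [hpart, mem_singleton] at hfix
    exact ⟨y, by simpa using hfix, hpart⟩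

theorem card_orbitPartition_parts_filter_card_ne_one :
    #{D ∈ (orbitPartition π).parts | #D ≠ 1} = #π.cycleFactorsFinset := by
  symm
  refine card_bij (fun c _ => c.support) (fun c hc => ?_) (fun c hc d hd hcd => ?_) ?_
  · obtain ⟨a, ha⟩ := (mem_cycleFactorsFinset_iff.mp hc).1.nonempty_support
    obtain rfl := cycle_is_cycleOf ha hc
    have hπa : π a ≠ a := mem_support.mp (mem_support_cycleOf_iff.mp ha).2
    have htwo := (isCycle_cycleOf π hπa).two_le_card_support
    rw [mem_filter, ← orbitPartition_part_of_apply_ne hπa] at *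
    exact ⟨orbitPartition_part_mem_parts a, by omega⟩
  · obtain ⟨a, ha⟩ := (mem_cycleFactorsFinset_iff.mp hc).1.nonempty_support
    rw [cycle_is_cycleOf ha hc, cycle_is_cycleOf (hcd ▸ ha) hd]
  · intro D hD
    rw [mem_filter] at hD
    obtain ⟨a, ha⟩ := (orbitPartition π).nonempty_of_mem_parts hD.1
    have hpart := (orbitPartition π).part_eq_of_mem hD.1 ha
    have hπa : π a ≠ a := fun h => hD.2 <| by
      rw [← hpart, orbitPartition_part_of_apply_eq h, card_singleton]
    refine ⟨π.cycleOf a, cycleOf_mem_cycleFactorsFinset_iff.mpr (mem_support.mpr hπa), ?_⟩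
    rw [← hpart, orbitPartition_part_of_apply_ne hπa]

theorem card_orbitPartition_parts :
    #(orbitPartition π).parts = π.cycleType.card + #{x | π x = x} := by
  rw [← card_filter_add_card_filter_not (p := fun D => #D ≠ 1),
    card_orbitPartition_parts_filter_card_ne_one, cycleType_def, Multiset.card_map]
  simp only [not_not, card_orbitPartition_parts_filter_card_eq_one]
  rfl

end Equiv.Perm

open Equiv

section StarFactorization

variable {n : ℕ} [NeZero n] {l : List (Perm (Fin n))} {x : Fin n}

theorem IsStarList.closure_le_stabilizer (hl : IsStarList l) (hx : x ≠ 0) (hxl : swap 0 x ∉ l) :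
    Subgroup.closure {τ | τ ∈ l} ≤ MulAction.stabilizer (Perm (Fin n)) x := by
  refine (Subgroup.closure_le _).mpr fun τ hτ => ?_
  obtain ⟨i, -, rfl⟩ := hl τ hτ
  exact swap_apply_of_ne_of_ne hx (by rintro rfl; exact hxl hτ)

theorem IsStarList.prod_apply_eq_self (hl : IsStarList l) (hx : x ≠ 0) (hxl : swap 0 x ∉ l) :
    l.prod x = x :=
  hl.closure_le_stabilizer hx hxl <|
    (Subgroup.closure _).list_prod_mem fun _ hτ => Subgroup.subset_closure hτ

theorem IsTransitiveList.swap_mem_s7 (htr : IsTransitiveList l) (hl : IsStarList l) (hx : x ≠ 0) :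
    swap 0 x ∈ l := by
  by_contra hxl
  obtain ⟨g, hg, hgx⟩ := htr x 0
  have hfix : g x = x := hl.closure_le_stabilizer hx hxl hg
  exact hx (hfix.symm.trans hgx)

theorem IsStarList.sum_count_swap (hl : IsStarList l) :
    ∑ x, l.count (swap 0 x) = l.length := by
  have hsub : ∀ τ ∈ (l : Multiset (Perm (Fin n))), τ ∈ univ.image (swap 0) := fun τ hτ => by
    obtain ⟨i, -, rfl⟩ := hl τ hτ
    exact mem_image_of_mem _ (mem_univ i)
  rw [← sum_image (f := fun τ => l.count τ) fun x _ y _ h => by simpa using congrArg (· 0) h]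
  simpa using Multiset.sum_count_eq_card hsub

theorem IsStarList.pair_sublist (hl : IsStarList l) (hx : x ≠ 0) (hxl : swap 0 x ∈ l)
    (hπx : l.prod x ≠ 0) : [swap 0 (l.prod x), swap 0 x] <+ l := by
  induction l with
  | nil => simp at hxl
  | cons τ t ih =>
    have ht : IsStarList t := fun σ hσ => hl σ (List.mem_cons_of_mem _ hσ)
    obtain ⟨c, -, rfl⟩ := hl τ List.mem_cons_self
    rw [List.prod_cons, Perm.mul_apply] at hπx ⊢
    by_cases hxt : swap 0 x ∈ t
    · by_cases hy : t.prod x = 0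
      · rw [hy, swap_apply_left]
        exact (List.singleton_sublist.mpr hxt).cons_cons _
      · have hfix : swap 0 c (t.prod x) = t.prod x :=
          swap_apply_of_ne_of_ne hy fun h => hπx (by rw [h, swap_apply_right])
        rw [hfix] at hπx ⊢
        exact (ih ht hxt hπx).cons _
    · have hc : swap 0 x = swap 0 c := by simpa [hxt] using hxl
      rw [ht.prod_apply_eq_self hx hxt, ← hc, swap_apply_right] at hπx
      exact absurd rfl hπx

end StarFactorization

open Equiv.Perm

section MinimalTransitive

variable {n : ℕ} [NeZero n] {l : List (Perm (Fin n))}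

theorem exists_two_le_count_of_zero_notMem (hl : IsStarList l) (htr : IsTransitiveList l)
    {D : Finset (Fin n)} (hD : D ∈ (orbitPartition l.prod).parts) (h0 : (0 : Fin n) ∉ D) :
    ∃ x ∈ D, 2 ≤ l.count (swap 0 x) := by
  by_contra! hcount
  have hne0 {x : Fin n} (hx : x ∈ D) : x ≠ 0 := ne_of_mem_of_not_mem hx h0
  have hmem {x : Fin n} (hx : x ∈ D) : swap 0 x ∈ l := htr.swap_mem_s7 hl (hne0 hx)
  obtain ⟨x, hxD, hmin⟩ := exists_min_image D (fun x => l.idxOf (swap 0 x))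
    ((orbitPartition _).nonempty_of_mem_parts hD)
  have hπx : l.prod x ∈ D := by
    rw [← (orbitPartition _).part_eq_of_mem hD hxD, mem_orbitPartition_part]
    exact sameCycle_apply_right.2 (SameCycle.refl _ x)
  have hlt := List.get_lt_of_pair_sublist (hl.pair_sublist (hne0 hxD) (hmem hxD) (hne0 hπx))
    (Nat.le_of_lt_succ (hcount _ hπx)) (Nat.le_of_lt_succ (hcount x hxD))
    (List.idxOf_get (List.idxOf_lt_length_of_mem (hmem hπx)))
    (List.idxOf_get (List.idxOf_lt_length_of_mem (hmem hxD)))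
  exact (hmin _ hπx).not_gt hlt

theorem sum_count_eq_card_add_one (hl : IsStarList l) (htr : IsTransitiveList l)
    (hlen : l.length = n + numCycles l.prod - 2) {D : Finset (Fin n)}
    (hD : D ∈ (orbitPartition l.prod).parts) (h0 : (0 : Fin n) ∉ D) :
    ∑ x ∈ D, l.count (swap 0 x) = #D + 1 := by
  set P := orbitPartition l.prod
  set c : Fin n → ℕ := fun x => l.count (swap 0 x)
  have hpos {x : Fin n} (hx : x ≠ 0) : 1 ≤ c x := List.count_pos_iff.mpr (htr.swap_mem_s7 hl hx)
  set D₀ := P.part 0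
  have hD₀ : D₀ ∈ P.parts := orbitPartition_part_mem_parts 0
  have hlower₀ : #D₀ ≤ ∑ x ∈ D₀, c x + 1 := by
    have h0 : 0 ∈ D₀ := P.mem_part (mem_univ 0)
    rw [← add_sum_erase _ _ h0, ← card_erase_add_one h0, card_eq_sum_ones (D₀.erase 0)]
    have := sum_le_sum (s := D₀.erase 0) (f := fun _ => 1) fun y hy => hpos (ne_of_mem_erase hy)
    omega
  have hlower : ∀ E ∈ P.parts.erase D₀, #E + 1 ≤ ∑ x ∈ E, c x := by
    intro E hE
    obtain ⟨hE₀, hE⟩ := mem_erase.mp hE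
    have hE0 : 0 ∉ E := fun h => hE₀ (P.part_eq_of_mem hE h).symm
    obtain ⟨x, hx, h2⟩ := exists_two_le_count_of_zero_notMem hl htr hE hE0
    exact card_add_one_le_sum (fun y hy => hpos (ne_of_mem_of_not_mem hy hE0)) hx h2
  have htotal : ∑ x ∈ D₀, c x + ∑ E ∈ P.parts.erase D₀, ∑ x ∈ E, c x = n + #P.parts - 2 := by
    rw [add_sum_erase _ (fun E => ∑ x ∈ E, c x) hD₀, P.sum_sum_parts, hl.sum_count_swap, hlen,
      card_orbitPartition_parts]
    rfl
  have hcards : #D₀ + ∑ E ∈ P.parts.erase D₀, #E = n := by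
    rw [add_sum_erase _ card hD₀, P.sum_card_parts, card_univ, Fintype.card_fin]
  have hm : #(P.parts.erase D₀) + 1 = #P.parts := card_erase_add_one hD₀
  have hDT : D ∈ P.parts.erase D₀ := mem_erase.mpr ⟨fun h => h0 (h ▸ P.mem_part (mem_univ 0)), hD⟩
  -- `hlower₀` and `hlower` add up to `n + m - 2 = l.length`, so each bound is attained.
  refine ((sum_eq_sum_iff_of_le hlower).mp (le_antisymm (sum_le_sum hlower) ?_) D hDT).symm
  rw [sum_add_distrib, sum_const, smul_eq_mul, mul_one]
  omega

theorem IsMinimalTransitiveStarFactorization.exists_count_eq_two {π : Perm (Fin n)}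
    (hl : IsMinimalTransitiveStarFactorization π l) {D : Finset (Fin n)}
    (hD : D ∈ (orbitPartition π).parts) (h0 : (0 : Fin n) ∉ D) :
    ∃ x₀ ∈ D, l.count (swap 0 x₀) = 2 ∧ ∀ y ∈ D, y ≠ x₀ → l.count (swap 0 y) = 1 := by
  obtain ⟨⟨hsl, rfl⟩, htr, hlen⟩ := hl
  obtain ⟨x₀, hx₀, htwo⟩ := exists_two_le_count_of_zero_notMem hsl htr hD h0
  exact ⟨x₀, hx₀, eq_two_and_eq_one_of_sum_eq_card_add_one
    (fun x hx => List.count_pos_iff.mpr (htr.swap_mem_s7 hsl (ne_of_mem_of_not_mem hx h0))) hx₀ htwo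
    (sum_count_eq_card_add_one hsl htr hlen hD h0)⟩

end MinimalTransitive

/-- The symbol `1` of the paper is `0 : Fin n`, and `a` is an `ℓ`-periodic enumeration of the
cycle `σ`. -/
theorem stmt7_general {n : ℕ} [NeZero n] (π : Equiv.Perm (Fin n))
    (l : List (Equiv.Perm (Fin n)))
    (hl : IsMinimalTransitiveStarFactorization π l)
    (ℓ : ℕ) (a : ℕ → Fin n)
    (ha0 : ∀ i, a i ≠ 0)
    (hper : ∀ i, a (i + ℓ) = a i)
    (hinj : ∀ i j, i < ℓ → j < ℓ → a i = a j → i = j)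
    (hcyc : ∀ i, π (a i) = a (i + 1))
    (horb : ∀ x : Fin n, π.SameCycle (a 0) x ↔ ∃ i < ℓ, x = a i) :
    ∃ j < ℓ,
      l.count (Equiv.swap 0 (a j)) = 2 ∧
      (∀ i < ℓ, i ≠ j → l.count (Equiv.swap 0 (a i)) = 1) ∧
      ∃ p q : Fin l.length, p < q ∧
        l.get p = Equiv.swap 0 (a j) ∧ l.get q = Equiv.swap 0 (a j) ∧
        (∀ s : ℕ, 1 ≤ s → s < ℓ → ∀ r : Fin l.length,
          l.get r = Equiv.swap 0 (a (j + s)) → p < r ∧ r < q) ∧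
        (∀ s t : ℕ, 1 ≤ s → s < t → t < ℓ → ∀ r u : Fin l.length,
          l.get r = Equiv.swap 0 (a (j + s)) →
          l.get u = Equiv.swap 0 (a (j + t)) → u < r) := by
  set D := (orbitPartition π).part (a 0)
  have hmemD (x : Fin n) : x ∈ D ↔ ∃ i < ℓ, x = a i := mem_orbitPartition_part.trans (horb x)
  have h0 : (0 : Fin n) ∉ D := fun h => by
    obtain ⟨i, -, hi⟩ := (hmemD 0).1 h
    exact ha0 i hi.symm
  obtain ⟨x₀, hx₀, hcount₂, hcount₁⟩ :=
    hl.exists_count_eq_two (orbitPartition_part_mem_parts _) h0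
  obtain ⟨j, hj, rfl⟩ := (hmemD x₀).1 hx₀
  refine ⟨j, hj, hcount₂, fun i hi hij =>
    hcount₁ _ ((hmemD _).2 ⟨i, hi, rfl⟩) fun h => hij (hinj i j hi hj h), ?_⟩
  obtain ⟨⟨hsl, rfl⟩, htr, -⟩ := hl
  refine List.exists_nested_of_pair_sublist (b := fun s => swap 0 (a (j + s))) (by simp [hper])
    (fun s _ => ?_) (by simpa using hcount₂) fun s hs hsℓ => hcount₁ _ ?_ ?_
  · have := hsl.pair_sublist (ha0 (j + s)) (htr.swap_mem_s7 hsl (ha0 _)) (by rw [hcyc]; exact ha0 _)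
    rwa [hcyc] at this
  · exact (hmemD _).2 ⟨(j + s) % ℓ, Nat.mod_lt _ (by omega),
      (Function.Periodic.map_mod_nat hper _).symm⟩
  · exact Function.Periodic.apply_add_ne hper (fun i hi j hj h => hinj i j hi hj h) hj hs hsℓ

/-- Lemma 1(1): a cycle `(a₁ a₂ ⋯ a_ℓ)` of `π` avoiding the symbol 1 (encoded
as `0 : Fin n`); `a` is a `ℓ`-periodic enumeration of the cycle. Some `(1 aⱼ)`
appears exactly twice, all others exactly once, and the factors meeting the
cycle occur in right-to-left order `(1 aⱼ), (1 a_{j+1}), …, (1 a_{j+ℓ-1}), (1 aⱼ)`. -/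
theorem stmt7 {n : ℕ} [NeZero n] (π : Equiv.Perm (Fin n))
    (l : List (Equiv.Perm (Fin n)))
    (hl : IsMinimalTransitiveStarFactorization π l)
    (ℓ : ℕ) (hℓ : 1 ≤ ℓ) (a : ℕ → Fin n)
    (ha0 : ∀ i, a i ≠ 0)
    (hper : ∀ i, a (i + ℓ) = a i)
    (hinj : ∀ i j, i < ℓ → j < ℓ → a i = a j → i = j)
    (hcyc : ∀ i, π (a i) = a (i + 1))
    (horb : ∀ x : Fin n, π.SameCycle (a 0) x ↔ ∃ i < ℓ, x = a i) :
    ∃ j < ℓ,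
      l.count (Equiv.swap 0 (a j)) = 2 ∧
      (∀ i < ℓ, i ≠ j → l.count (Equiv.swap 0 (a i)) = 1) ∧
      ∃ p q : Fin l.length, p < q ∧
        l.get p = Equiv.swap 0 (a j) ∧ l.get q = Equiv.swap 0 (a j) ∧
        (∀ s : ℕ, 1 ≤ s → s < ℓ → ∀ r : Fin l.length,
          l.get r = Equiv.swap 0 (a (j + s)) → p < r ∧ r < q) ∧
        (∀ s t : ℕ, 1 ≤ s → s < t → t < ℓ → ∀ r u : Fin l.length,
          l.get r = Equiv.swap 0 (a (j + s)) →
          l.get u = Equiv.swap 0 (a (j + t)) → u < r) :=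
  stmt7_general π l hl ℓ a ha0 hper hinj hcyc horb
end

section
/- Let (τ_1,...,τ_r) be a minimal transitive star factorization of π ∈ S_n, and let σ, σ̂ be distinct cycles of π. Suppose there exist indices a < c < b such that τ_a and τ_b meet σ while τ_c meets σ̂. Then the orbit of σ̂ does not contain the symbol 1, and every index j with τ_j meeting σ̂ satisfies a < j < b. -/
/-!
Read the factorization backwards: with `R t = τ_t ⋯ τ_{r-1}` we have `R t = (0 w_t) * R (t+1)`,
so each step either merges the cycle of `w_t` into the cycle of `0` or splits the cycle of `0`.
The number of cycles changes by one at each step; together with the length `n + m - 2` this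
forces exactly `n - 1` merges, and since the last occurrence of every letter is a merge, the
merges are exactly the last occurrences. Hence, walking along the cycle of `0` in `R t`, the last
occurrences of the letters decrease; a split detaches the tail of that cycle, which from then on
is a cycle of `π`; and each `x ≠ 0` lies in the cycle of `0` of `R t` exactly for `t` in an
interval `[entryTime x, lastOcc x]`. Two such intervals never cross, and `entryTime` tells the
cycles of `π` apart, while an interleaving `a < c < b` would produce a crossing.
-/

open Equiv Finset

namespace Equiv.Perm

section SameCycle

variable {α : Type*} {f g : Perm α} {x z : α}

theorem zpow_apply_eq_of_eqOn_sameCycle (h : ∀ y, f.SameCycle x y → g y = f y) (k : ℤ) :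
    (g ^ k) x = (f ^ k) x := by
  induction k using Int.induction_on with
  | zero => rfl
  | succ i ih =>
    rw [add_comm, zpow_add, zpow_add, zpow_one, zpow_one, mul_apply, mul_apply, ih,
      h _ ⟨i, rfl⟩]
  | pred i ih =>
    apply g.injective
    rw [h _ ⟨_, rfl⟩, ← mul_apply, ← mul_apply, ← zpow_one_add, ← zpow_one_add,
      add_sub_cancel, ih]

theorem sameCycle_iff_of_eqOn_sameCycle (h : ∀ y, f.SameCycle x y → g y = f y) :
    g.SameCycle x z ↔ f.SameCycle x z := by
  simp only [SameCycle, zpow_apply_eq_of_eqOn_sameCycle h]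

theorem SameCycle.iff_of_forall_apply_iff {p : α → Prop} (hp : ∀ y, p (f y) ↔ p y)
    (h : f.SameCycle x z) : p x ↔ p z := by
  obtain ⟨k, rfl⟩ := h
  induction k using Int.induction_on with
  | zero => rfl
  | succ i ih => rw [ih, add_comm, zpow_add, zpow_one, mul_apply, hp]
  | pred i ih =>
    rw [ih, ← hp ((f ^ (-(i : ℤ) - 1)) x), ← mul_apply, ← zpow_one_add, add_sub_cancel]

variable [Finite α]

theorem SameCycle.induction_apply {p : α → Prop} (h : f.SameCycle x z) (hx : p x)
    (hstep : ∀ y, f.SameCycle x y → p y → p (f y)) : p z := by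
  obtain ⟨k, rfl⟩ := h.exists_nat_pow_eq
  clear h
  induction k with
  | zero => exact hx
  | succ k ih =>
    rw [pow_succ', mul_apply]
    exact hstep _ ⟨k, by simp⟩ ih

theorem SameCycle.induction_apply_eq {p : α → Prop} (h : f.SameCycle z x)
    (hlast : ∀ y, f y = x → p y) (hstep : ∀ y, f.SameCycle y x → f y ≠ x → p (f y) → p y) :
    p z := by
  obtain ⟨k, hk, -, hkz⟩ := h.exists_pow_eq''
  induction k generalizing z with
  | zero => omega
  | succ k ih =>
    by_cases hfz : f z = x
    · exact hlast z hfz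
    have hk0 : 0 < k := Nat.pos_of_ne_zero fun hk0 => hfz (by simpa [hk0] using hkz)
    rw [pow_succ, mul_apply] at hkz
    exact hstep z h hfz (ih (sameCycle_apply_left.2 h) hk0 hkz)

end SameCycle

section SwapMul

variable {α : Type*} [DecidableEq α] {f : Perm α} {a b x z : α}

theorem sameCycle_swap_mul_iff_of_forall_ne (h : ∀ y, f.SameCycle x y → y ≠ a ∧ y ≠ b) :
    (swap a b * f).SameCycle x z ↔ f.SameCycle x z := by
  refine sameCycle_iff_of_eqOn_sameCycle fun y hy => ?_
  obtain ⟨ha, hb⟩ := h (f y) (sameCycle_apply_right.2 hy)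
  exact swap_apply_of_ne_of_ne ha hb

theorem sameCycle_or_sameCycle_of_sameCycle_swap_mul (h : (swap a b * f).SameCycle a z) :
    f.SameCycle a z ∨ f.SameCycle b z := by
  set p : α → Prop := fun y => f.SameCycle a y ∨ f.SameCycle b y
  have hswap : ∀ y, p (swap a b y) ↔ p y := by
    intro y
    rcases eq_or_ne y a with rfl | hya
    · simp only [p, swap_apply_left]
      exact ⟨fun _ => Or.inl (SameCycle.refl _ _), fun _ => Or.inr (SameCycle.refl _ _)⟩
    rcases eq_or_ne y b with rfl | hyb
    · simp only [p, swap_apply_right]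
      exact ⟨fun _ => Or.inr (SameCycle.refl _ _), fun _ => Or.inl (SameCycle.refl _ _)⟩
    rw [swap_apply_of_ne_of_ne hya hyb]
  have hp : ∀ y, p ((swap a b * f) y) ↔ p y := fun y => by
    rw [mul_apply, hswap]
    exact or_congr sameCycle_apply_right sameCycle_apply_right
  exact (h.iff_of_forall_apply_iff hp).1 (Or.inl (SameCycle.refl _ _))

variable [Finite α]

theorem SameCycle.swap_mul_sameCycle_of_not_sameCycle (hab : ¬f.SameCycle a b)
    (h : f.SameCycle b z) : (swap a b * f).SameCycle z a := by
  obtain ⟨k, hk, -, hkz⟩ := h.symm.exists_pow_eq''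
  induction k generalizing z with
  | zero => omega
  | succ k ih =>
    by_cases hfz : f z = b
    · exact ⟨1, by rw [zpow_one, mul_apply, hfz, swap_apply_right]⟩
    have hfa : f z ≠ a := fun hfa => hab (hfa ▸ sameCycle_apply_right.2 h).symm
    have hk0 : 0 < k := Nat.pos_of_ne_zero fun hk0 => hfz (by simpa [hk0] using hkz)
    have hstep : (swap a b * f).SameCycle z (f z) :=
      ⟨1, by rw [zpow_one, mul_apply, swap_apply_of_ne_of_ne hfa hfz]⟩
    rw [pow_succ, mul_apply] at hkz
    exact hstep.trans (ih (sameCycle_apply_right.2 h) hk0 hkz)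

theorem sameCycle_swap_mul_iff_of_not_sameCycle (hab : ¬f.SameCycle a b) :
    (swap a b * f).SameCycle a z ↔ f.SameCycle a z ∨ f.SameCycle b z := by
  refine ⟨sameCycle_or_sameCycle_of_sameCycle_swap_mul, ?_⟩
  have to_b : ∀ {z}, f.SameCycle a z → (swap a b * f).SameCycle z b := fun h => by
    rw [swap_comm]
    exact h.swap_mul_sameCycle_of_not_sameCycle fun h' => hab h'.symm
  rintro (h | h)
  · exact (to_b (SameCycle.refl _ _)).trans (to_b h).symm
  · exact (h.swap_mul_sameCycle_of_not_sameCycle hab).symm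

/-- With `k` least such that `f ^ k` sends `a` to `b`, the orbit of `a` under `swap a b * f` is
`a, f a, …, f ^ (k - 1) a`. -/
theorem not_sameCycle_swap_mul_of_sameCycle (hab : a ≠ b) (h : f.SameCycle a b) :
    ¬(swap a b * f).SameCycle a b := by
  classical
  have hex : ∃ k, 0 < k ∧ (f ^ k) a = b := by
    obtain ⟨k, hk, -, hka⟩ := h.exists_pow_eq''
    exact ⟨k, hk, hka⟩
  obtain ⟨hk0, hkb⟩ := Nat.find_spec hex
  set k := Nat.find hex
  have hne : ∀ i, 0 < i → i < k → (f ^ i) a ≠ a ∧ (f ^ i) a ≠ b := by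
    intro i hi hik
    refine ⟨fun hia => ?_, fun hib => Nat.find_min hex hik ⟨hi, hib⟩⟩
    refine Nat.find_min hex (show k - i < k by omega) ⟨by omega, ?_⟩
    rw [← hia, ← mul_apply, ← pow_add, Nat.sub_add_cancel hik.le, hkb]
  have hpow : ∀ i < k, ((swap a b * f) ^ i) a = (f ^ i) a := by
    intro i hi
    induction i with
    | zero => rfl
    | succ i ih =>
      obtain ⟨hia, hib⟩ := hne (i + 1) (by omega) hi
      rw [pow_succ', mul_apply, ih (by omega), mul_apply, ← mul_apply f, ← pow_succ',
        swap_apply_of_ne_of_ne hia hib]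
  have hper : ((swap a b * f) ^ k) a = a := by
    obtain ⟨j, hj⟩ : ∃ j, k = j + 1 := ⟨k - 1, by omega⟩
    rw [hj, pow_succ', mul_apply, hpow j (by omega), mul_apply, ← mul_apply f, ← pow_succ',
      ← hj, hkb, swap_apply_right]
  intro hg
  obtain ⟨m, hm⟩ := hg.exists_nat_pow_eq
  have hfix : (((swap a b * f) ^ k) ^ (m / k)) a = a := Function.IsFixedPt.perm_pow hper _
  rw [← Nat.mod_add_div m k, pow_add, pow_mul, mul_apply, hfix,
    hpow _ (Nat.mod_lt _ hk0)] at hm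
  rcases Nat.eq_zero_or_pos (m % k) with h0 | hpos
  · rw [h0, pow_zero] at hm
    exact hab hm
  · exact (hne _ hpos (Nat.mod_lt _ hk0)).2 hm

theorem sameCycle_iff_sameCycle_swap_mul_of_sameCycle (hab : a ≠ b) (h : f.SameCycle a b) :
    f.SameCycle a z ↔ (swap a b * f).SameCycle a z ∨ (swap a b * f).SameCycle b z := by
  conv_lhs => rw [← swap_mul_self_mul a b f]
  exact sameCycle_swap_mul_iff_of_not_sameCycle (not_sameCycle_swap_mul_of_sameCycle hab h)

end SwapMul

section CycleSets

variable {α : Type*} [DecidableEq α] [Fintype α] {f : Perm α} {a b x y : α}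

def cycleSet (f : Perm α) (x : α) : Finset α := {y | f.SameCycle x y}

def cycleSets (f : Perm α) : Finset (Finset α) := univ.image (cycleSet f)

@[simp]
theorem mem_cycleSet : y ∈ cycleSet f x ↔ f.SameCycle x y := by
  simp [cycleSet]

theorem cycleSet_eq_of_sameCycle (h : f.SameCycle x y) : cycleSet f x = cycleSet f y := by
  ext z
  simp only [mem_cycleSet]
  exact ⟨h.symm.trans, h.trans⟩

theorem support_cycleOf_eq_cycleSet (hx : x ∈ f.support) :
    (f.cycleOf x).support = cycleSet f x := by
  ext y
  rw [mem_support_cycleOf_iff, mem_cycleSet, and_iff_left hx]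

theorem image_cycleSet_support :
    f.support.image (cycleSet f) = f.cycleFactorsFinset.image support := by
  ext s
  simp only [mem_image]
  constructor
  · rintro ⟨x, hx, rfl⟩
    exact ⟨f.cycleOf x, cycleOf_mem_cycleFactorsFinset_iff.2 hx, support_cycleOf_eq_cycleSet hx⟩
  · rintro ⟨c, hc, rfl⟩
    obtain ⟨x, hx⟩ := (mem_cycleFactorsFinset_iff.1 hc).1.nonempty_support
    have hxf := mem_cycleFactorsFinset_support_le hc hx
    exact ⟨x, hxf, by rw [cycle_is_cycleOf hx hc, support_cycleOf_eq_cycleSet hxf]⟩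

theorem card_cycleSets (f : Perm α) :
    #(cycleSets f) = Multiset.card f.cycleType + #{x | f x = x} := by
  have hfix : ∀ x ∉ f.support, ∀ y, cycleSet f x = cycleSet f y → x = y := by
    intro x hx y hxy
    have hy : y ∈ cycleSet f x := hxy ▸ mem_cycleSet.2 (SameCycle.refl f y)
    exact (mem_cycleSet.1 hy).eq_of_left (notMem_support.1 hx)
  have hdisj :
      _root_.Disjoint (f.support.image (cycleSet f)) (f.supportᶜ.image (cycleSet f)) := by
    simp only [disjoint_left, mem_image, mem_compl, not_exists, not_and]
    rintro _ ⟨x, hx, rfl⟩ y hy hyx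
    exact hy (hfix y hy x hyx ▸ hx)
  have hsupp : #(f.cycleFactorsFinset.image support) = #f.cycleFactorsFinset := by
    refine card_image_of_injOn fun c hc d hd hcd => ?_
    obtain ⟨x, hx⟩ := (mem_cycleFactorsFinset_iff.1 hc).1.nonempty_support
    rw [cycle_is_cycleOf hx hc, cycle_is_cycleOf ((hcd : c.support = d.support) ▸ hx) hd]
  rw [cycleSets, ← union_compl f.support, image_union, card_union_of_disjoint hdisj,
    image_cycleSet_support, hsupp,
    card_image_of_injOn fun x hx y _ => hfix x (by simpa using hx) y,
    cycleType_def, Multiset.card_map, union_compl]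
  congr 2
  ext x
  simp

theorem card_cycleSets_one : #(cycleSets (1 : Perm α)) = Fintype.card α := by
  simp [card_cycleSets]

theorem card_cycleSets_eq (f : Perm α) (a b : α) :
    #(cycleSets f) = #{s ∈ cycleSets f | a ∉ s ∧ b ∉ s} + #{cycleSet f a, cycleSet f b} := by
  rw [← card_union_of_disjoint]
  · congr 1
    ext s
    simp only [cycleSets, mem_union, mem_filter, mem_image, mem_univ, true_and, mem_insert,
      mem_singleton]
    constructor
    · rintro ⟨x, rfl⟩
      by_cases ha : a ∈ cycleSet f x
      · exact Or.inr (Or.inl (cycleSet_eq_of_sameCycle (mem_cycleSet.1 ha)))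
      by_cases hb : b ∈ cycleSet f x
      · exact Or.inr (Or.inr (cycleSet_eq_of_sameCycle (mem_cycleSet.1 hb)))
      exact Or.inl ⟨⟨x, rfl⟩, ha, hb⟩
    · rintro (⟨hs, -⟩ | rfl | rfl) <;> aesop
  · simp only [disjoint_left, mem_filter, mem_insert, mem_singleton]
    rintro s ⟨-, ha, hb⟩ (rfl | rfl)
    · exact ha (mem_cycleSet.2 (SameCycle.refl f a))
    · exact hb (mem_cycleSet.2 (SameCycle.refl f b))

theorem filter_cycleSets_swap_mul_subset (f : Perm α) (a b : α) :
    {s ∈ cycleSets f | a ∉ s ∧ b ∉ s} ⊆ {s ∈ cycleSets (swap a b * f) | a ∉ s ∧ b ∉ s} := by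
  simp only [subset_iff, cycleSets, mem_filter, mem_image, mem_univ, true_and]
  rintro _ ⟨⟨x, rfl⟩, ha, hb⟩
  refine ⟨⟨x, ?_⟩, ha, hb⟩
  ext z
  simp only [mem_cycleSet] at ha hb ⊢
  exact sameCycle_swap_mul_iff_of_forall_ne fun y hy =>
    ⟨fun hya => ha (hya ▸ hy), fun hyb => hb (hyb ▸ hy)⟩

theorem card_cycleSets_swap_mul_of_sameCycle (hab : a ≠ b) (h : f.SameCycle a b) :
    #(cycleSets (swap a b * f)) = #(cycleSets f) + 1 := by
  have hA : {s ∈ cycleSets (swap a b * f) | a ∉ s ∧ b ∉ s} =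
      {s ∈ cycleSets f | a ∉ s ∧ b ∉ s} := by
    refine (subset_antisymm (filter_cycleSets_swap_mul_subset f a b) ?_).symm
    simpa only [swap_mul_self_mul] using filter_cycleSets_swap_mul_subset (swap a b * f) a b
  have hne : cycleSet (swap a b * f) a ≠ cycleSet (swap a b * f) b := fun he =>
    not_sameCycle_swap_mul_of_sameCycle hab h
      (mem_cycleSet.1 (he ▸ mem_cycleSet.2 (SameCycle.refl _ b)))
  rw [card_cycleSets_eq _ a b, card_cycleSets_eq f a b, hA, card_pair hne,
    cycleSet_eq_of_sameCycle h, insert_eq_of_mem (mem_singleton_self _), card_singleton]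

theorem card_cycleSets_swap_mul_of_not_sameCycle (hab : ¬f.SameCycle a b) :
    #(cycleSets (swap a b * f)) + 1 = #(cycleSets f) := by
  have hab' : a ≠ b := fun h => hab (h ▸ SameCycle.refl f a)
  have h : (swap a b * f).SameCycle a b :=
    (sameCycle_swap_mul_iff_of_not_sameCycle hab).2 (Or.inr (SameCycle.refl f b))
  conv_rhs => rw [← swap_mul_self_mul a b f]
  rw [card_cycleSets_swap_mul_of_sameCycle hab' h]

end CycleSets

end Equiv.Perm

theorem Nat.induction_from_above {N : ℕ} {motive : ℕ → Prop} (above : ∀ t, N ≤ t → motive t)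
    (step : ∀ t < N, motive (t + 1) → motive t) (t : ℕ) : motive t := by
  rcases le_or_gt N t with ht | ht
  · exact above t ht
  have ht' := ht.le
  clear ht
  induction ht' using Nat.decreasingInduction with
  | self => exact above N le_rfl
  | of_succ k hk ih => exact step k hk ih

open Equiv.Perm

variable {n : ℕ} {π : Perm (Fin n)} {l : List (Perm (Fin n))} {s t u : ℕ}

def suffixProd (l : List (Perm (Fin n))) (t : ℕ) : Perm (Fin n) := (l.drop t).prod

theorem suffixProd_zero (l : List (Perm (Fin n))) : suffixProd l 0 = l.prod := by
  rw [suffixProd, List.drop_zero]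

theorem suffixProd_of_length_le (h : l.length ≤ t) : suffixProd l t = 1 := by
  rw [suffixProd, List.drop_eq_nil_of_le h, List.prod_nil]

variable [NeZero n] {x y : Fin n}

/-- The `i` with `τ_t = swap 0 i`, and `0` past the end of the list. -/
def letter (l : List (Perm (Fin n))) (t : ℕ) : Fin n := l.getD t 1 0

def IsSplitStep (l : List (Perm (Fin n))) (t : ℕ) : Prop :=
  (suffixProd l (t + 1)).SameCycle 0 (letter l t)

instance : DecidablePred (IsSplitStep l) := fun t =>
  inferInstanceAs (Decidable ((suffixProd l (t + 1)).SameCycle 0 (letter l t)))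

def IsLastOccurrence (l : List (Perm (Fin n))) (t : ℕ) : Prop :=
  ∀ s, t + 1 ≤ s → s < l.length → letter l s ≠ letter l t

instance : DecidablePred (IsLastOccurrence l) := fun t =>
  inferInstanceAs (Decidable (∀ s, t + 1 ≤ s → s < l.length → letter l s ≠ letter l t))

def lastOcc (l : List (Perm (Fin n))) (x : Fin n) : ℕ :=
  Nat.findGreatest (letter l · = x) l.length

theorem letter_of_length_le (h : l.length ≤ t) : letter l t = 0 := by
  rw [letter, List.getD_eq_default _ _ h, one_apply]

theorem letter_eq_of_get_eq {t : Fin l.length} {i : Fin n} (h : l.get t = swap 0 i) :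
    letter l t = i := by
  rw [letter, List.getD_eq_getElem _ _ t.isLt, ← List.get_eq_getElem, h, swap_apply_left]

theorem le_lastOcc (hs : s < l.length) (h : letter l s = x) : s ≤ lastOcc l x :=
  Nat.le_findGreatest hs.le h

theorem letter_ne_of_lastOcc_lt (hs : lastOcc l x < s) (hsl : s < l.length) : letter l s ≠ x :=
  Nat.findGreatest_is_greatest hs hsl.le

noncomputable def entryTime (l : List (Perm (Fin n))) (x : Fin n) : ℕ :=
  sInf {t | (suffixProd l t).SameCycle 0 x}

theorem entryTime_le (h : (suffixProd l t).SameCycle 0 x) : entryTime l x ≤ t :=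
  Nat.sInf_le h

theorem not_sameCycle_zero_of_lt_entryTime (h : t < entryTime l x) :
    ¬(suffixProd l t).SameCycle 0 x :=
  Nat.notMem_of_lt_sInf h

namespace IsStarList

theorem getElem_eq_swap (hl : IsStarList l) (ht : t < l.length) :
    l[t] = swap 0 (letter l t) := by
  obtain ⟨i, -, hi⟩ := hl l[t] (List.getElem_mem ht)
  rw [hi, letter, List.getD_eq_getElem _ _ ht, hi, swap_apply_left]

theorem letter_ne_zero (hl : IsStarList l) (ht : t < l.length) : letter l t ≠ 0 := by
  obtain ⟨i, hi0, hi⟩ := hl l[t] (List.getElem_mem ht)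
  rwa [letter, List.getD_eq_getElem _ _ ht, hi, swap_apply_left]

theorem suffixProd_eq (hl : IsStarList l) (ht : t < l.length) :
    suffixProd l t = swap 0 (letter l t) * suffixProd l (t + 1) := by
  rw [suffixProd, suffixProd, List.drop_eq_getElem_cons ht, List.prod_cons,
    hl.getElem_eq_swap ht]

theorem suffixProd_apply (hl : IsStarList l) (ht : t < l.length) (x : Fin n) :
    suffixProd l t x = swap 0 (letter l t) (suffixProd l (t + 1) x) := by
  rw [hl.suffixProd_eq ht, mul_apply]

theorem suffixProd_apply_of_forall_ne (hl : IsStarList l) (hx : x ≠ 0)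
    (h : ∀ s, t ≤ s → s < l.length → letter l s ≠ x) : suffixProd l t x = x := by
  induction t using Nat.induction_from_above (N := l.length) with
  | above t ht => rw [suffixProd_of_length_le ht, one_apply]
  | step k hk ih =>
    rw [hl.suffixProd_apply hk, ih fun s hs => h s (by omega),
      swap_apply_of_ne_of_ne hx (h k le_rfl hk).symm]

theorem card_cycleSets_suffixProd (hl : IsStarList l) (ht : t ≤ l.length) :
    #(cycleSets (suffixProd l t)) + #{s ∈ Ico t l.length | ¬IsSplitStep l s} =
      n + #{s ∈ Ico t l.length | IsSplitStep l s} := by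
  induction t using Nat.induction_from_above (N := l.length) with
  | above t ht' =>
    obtain rfl : t = l.length := le_antisymm ht ht'
    simp [suffixProd_of_length_le le_rfl, card_cycleSets_one]
  | step k hk ih =>
    have ih := ih hk
    rw [← insert_Ico_add_one_left_eq_Ico hk, filter_insert, filter_insert, hl.suffixProd_eq hk]
    by_cases hs : IsSplitStep l k
    · rw [if_pos hs, if_neg (not_not.2 hs), card_insert_of_notMem (by simp),
        card_cycleSets_swap_mul_of_sameCycle (hl.letter_ne_zero hk).symm hs]
      omega
    · rw [if_neg hs, if_pos hs, card_insert_of_notMem (by simp)]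
      have := card_cycleSets_swap_mul_of_not_sameCycle hs
      omega

theorem exists_letter_eq (hl : IsStarList l) (htr : IsTransitiveList l) (hx : x ≠ 0) :
    ∃ s < l.length, letter l s = x := by
  by_contra! h
  have hfix : {τ | τ ∈ l} ⊆ MulAction.stabilizer (Perm (Fin n)) x := by
    intro τ hτ
    obtain ⟨s, hs, rfl⟩ := List.mem_iff_getElem.1 hτ
    rw [SetLike.mem_coe, MulAction.mem_stabilizer_iff, Perm.smul_def, hl.getElem_eq_swap hs]
    exact swap_apply_of_ne_of_ne hx (h s hs).symm
  obtain ⟨g, hg, hgx⟩ := htr x 0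
  have hgx' := (Subgroup.closure_le _).2 hfix hg
  rw [MulAction.mem_stabilizer_iff, Perm.smul_def, hgx] at hgx'
  exact hx hgx'.symm

theorem letter_lastOcc (hl : IsStarList l) (htr : IsTransitiveList l) (hx : x ≠ 0) :
    letter l (lastOcc l x) = x :=
  have ⟨_, hs, hsx⟩ := hl.exists_letter_eq htr hx
  Nat.findGreatest_spec (P := (letter l · = x)) hs.le hsx

theorem lastOcc_lt_length (hl : IsStarList l) (htr : IsTransitiveList l) (hx : x ≠ 0) :
    lastOcc l x < l.length := by
  refine lt_of_le_of_ne (Nat.findGreatest_le _) fun h => hx ?_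
  rw [← hl.letter_lastOcc htr hx, h, letter_of_length_le le_rfl]

theorem le_card_filter_isLastOccurrence (hl : IsStarList l) (htr : IsTransitiveList l) :
    n - 1 ≤ #{s ∈ range l.length | IsLastOccurrence l s} := by
  calc n - 1 = #(univ.erase (0 : Fin n)) := by simp
    _ ≤ #({s ∈ range l.length | IsLastOccurrence l s}.image (letter l)) :=
      card_le_card fun x hx => by
        have hx0 := ne_of_mem_erase hx
        refine mem_image.2 ⟨lastOcc l x, ?_, hl.letter_lastOcc htr hx0⟩
        rw [mem_filter, mem_range, IsLastOccurrence, hl.letter_lastOcc htr hx0]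
        exact ⟨hl.lastOcc_lt_length htr hx0, fun s hs hsl =>
          letter_ne_of_lastOcc_lt (by omega) hsl⟩
    _ ≤ _ := card_image_le

theorem not_isSplitStep_of_isLastOccurrence (hl : IsStarList l) (ht : t < l.length)
    (h : IsLastOccurrence l t) : ¬IsSplitStep l t := fun hs =>
  hl.letter_ne_zero ht
    (hs.eq_of_right (hl.suffixProd_apply_of_forall_ne (hl.letter_ne_zero ht) h)).symm

theorem sameCycle_zero_iff_of_isSplitStep (hl : IsStarList l) (ht : t < l.length)
    (h : IsSplitStep l t) : (suffixProd l (t + 1)).SameCycle 0 x ↔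
      (suffixProd l t).SameCycle 0 x ∨ (suffixProd l t).SameCycle (letter l t) x := by
  rw [hl.suffixProd_eq ht]
  exact sameCycle_iff_sameCycle_swap_mul_of_sameCycle (hl.letter_ne_zero ht).symm h

theorem not_sameCycle_zero_letter (hl : IsStarList l) (ht : t < l.length)
    (h : IsSplitStep l t) : ¬(suffixProd l t).SameCycle 0 (letter l t) := by
  rw [hl.suffixProd_eq ht]
  exact not_sameCycle_swap_mul_of_sameCycle (hl.letter_ne_zero ht).symm h

theorem le_lastOcc_of_sameCycle_zero (hl : IsStarList l) (hx : x ≠ 0)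
    (h : (suffixProd l t).SameCycle 0 x) : t ≤ lastOcc l x := by
  by_contra! hlt
  refine hx (h.eq_of_right (hl.suffixProd_apply_of_forall_ne hx fun s hs hsl hsx => ?_)).symm
  exact absurd (le_lastOcc hsl hsx) (by omega)

end IsStarList

namespace IsMinimalTransitiveStarFactorization

/-- Each merge lowers the number of cycles by one and each split raises it by one, from `n`
cycles of `R l.length = 1` down to the `m` cycles of `π`. -/
theorem card_filter_not_isSplitStep (hmin : IsMinimalTransitiveStarFactorization π l) :
    #{s ∈ range l.length | ¬IsSplitStep l s} = n - 1 := by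
  obtain ⟨⟨hl, hprod⟩, -, hlen⟩ := hmin
  have hcount := hl.card_cycleSets_suffixProd (Nat.zero_le _)
  have hsplit := card_filter_add_card_filter_not (s := range l.length) (IsSplitStep l ·)
  have hC : 1 ≤ #(cycleSets π) := card_pos.2 ⟨_, mem_image_of_mem _ (mem_univ 0)⟩
  have hn : 1 ≤ n := Nat.one_le_iff_ne_zero.2 (NeZero.ne n)
  rw [suffixProd_zero, hprod, ← range_eq_Ico] at hcount
  rw [numCycles, ← card_cycleSets] at hlen
  rw [card_range] at hsplit
  omega

/-- Last occurrences are merges, and there are at least `n - 1` of them. -/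
theorem isLastOccurrence_of_not_isSplitStep (hmin : IsMinimalTransitiveStarFactorization π l)
    (ht : t < l.length) (h : ¬IsSplitStep l t) : IsLastOccurrence l t := by
  have hsub : {s ∈ range l.length | IsLastOccurrence l s} ⊆
      {s ∈ range l.length | ¬IsSplitStep l s} := fun s hs => by
    rw [mem_filter, mem_range] at hs ⊢
    exact ⟨hs.1, hmin.1.1.not_isSplitStep_of_isLastOccurrence hs.1 hs.2⟩
  have heq := eq_of_subset_of_card_le hsub
    (hmin.card_filter_not_isSplitStep ▸ hmin.1.1.le_card_filter_isLastOccurrence hmin.2.1)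
  have ht' : t ∈ {s ∈ range l.length | IsLastOccurrence l s} :=
    heq ▸ mem_filter.2 ⟨mem_range.2 ht, h⟩
  exact (mem_filter.1 ht').2

theorem suffixProd_succ_apply_letter (hmin : IsMinimalTransitiveStarFactorization π l)
    (ht : t < l.length) (h : ¬IsSplitStep l t) :
    suffixProd l (t + 1) (letter l t) = letter l t :=
  hmin.1.1.suffixProd_apply_of_forall_ne (hmin.1.1.letter_ne_zero ht)
    (hmin.isLastOccurrence_of_not_isSplitStep ht h)

theorem lastOcc_letter_of_not_isSplitStep (hmin : IsMinimalTransitiveStarFactorization π l)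
    (ht : t < l.length) (h : ¬IsSplitStep l t) : lastOcc l (letter l t) = t := by
  have hw := hmin.1.1.letter_ne_zero ht
  refine le_antisymm (not_lt.1 fun hlt => ?_) (le_lastOcc ht rfl)
  exact hmin.isLastOccurrence_of_not_isSplitStep ht h _ hlt
    (hmin.1.1.lastOcc_lt_length hmin.2.1 hw) (hmin.1.1.letter_lastOcc hmin.2.1 hw)

theorem sameCycle_zero_iff_of_not_isSplitStep (hmin : IsMinimalTransitiveStarFactorization π l)
    (ht : t < l.length) (h : ¬IsSplitStep l t) :
    (suffixProd l t).SameCycle 0 x ↔ (suffixProd l (t + 1)).SameCycle 0 x ∨ x = letter l t := by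
  rw [hmin.1.1.suffixProd_eq ht, sameCycle_swap_mul_iff_of_not_sameCycle h]
  refine or_congr_right ⟨fun hx => ?_, fun hx => hx ▸ SameCycle.refl _ _⟩
  exact (hx.eq_of_left (hmin.suffixProd_succ_apply_letter ht h)).symm

theorem isSplitStep_and_sameCycle_letter (hmin : IsMinimalTransitiveStarFactorization π l)
    (ht : t < l.length) (h1 : (suffixProd l (t + 1)).SameCycle 0 x)
    (h0 : ¬(suffixProd l t).SameCycle 0 x) :
    IsSplitStep l t ∧ (suffixProd l t).SameCycle (letter l t) x := by
  have hs : IsSplitStep l t := by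
    by_contra hs
    exact h0 ((hmin.sameCycle_zero_iff_of_not_isSplitStep ht hs).2 (Or.inl h1))
  exact ⟨hs, ((hmin.1.1.sameCycle_zero_iff_of_isSplitStep ht hs).1 h1).resolve_left h0⟩

theorem sameCycle_zero_suffixProd_lastOcc (hmin : IsMinimalTransitiveStarFactorization π l)
    (hx : x ≠ 0) : (suffixProd l (lastOcc l x)).SameCycle 0 x := by
  have ht := hmin.1.1.lastOcc_lt_length hmin.2.1 hx
  have hw := hmin.1.1.letter_lastOcc hmin.2.1 hx
  have hs : ¬IsSplitStep l (lastOcc l x) := fun hs => by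
    have := hmin.1.1.le_lastOcc_of_sameCycle_zero (hmin.1.1.letter_ne_zero ht) hs
    rw [hw] at this
    omega
  exact (hmin.sameCycle_zero_iff_of_not_isSplitStep ht hs).2 (Or.inr hw.symm)

theorem lastOcc_apply_lt (hmin : IsMinimalTransitiveStarFactorization π l)
    (hx : (suffixProd l t).SameCycle 0 x) (hx0 : x ≠ 0) (hRx : suffixProd l t x ≠ 0) :
    lastOcc l (suffixProd l t x) < lastOcc l x := by
  induction t using Nat.induction_from_above (N := l.length) generalizing x with
  | above t ht =>
    rw [suffixProd_of_length_le ht, sameCycle_one] at hx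
    exact absurd hx.symm hx0
  | step t ht ih =>
    have hl := hmin.1.1
    have hx1 : (suffixProd l (t + 1)).SameCycle 0 x := by
      by_cases hs : IsSplitStep l t
      · exact (hl.sameCycle_zero_iff_of_isSplitStep ht hs).2 (Or.inl hx)
      refine ((hmin.sameCycle_zero_iff_of_not_isSplitStep ht hs).1 hx).resolve_right ?_
      rintro rfl
      rw [hl.suffixProd_apply ht, hmin.suffixProd_succ_apply_letter ht hs,
        swap_apply_right] at hRx
      exact hRx rfl
    rcases eq_or_ne (suffixProd l (t + 1) x) 0 with h0 | h0
    · have hRw : suffixProd l t x = letter l t := by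
        rw [hl.suffixProd_apply ht, h0, swap_apply_left]
      rw [hRw]
      by_cases hs : IsSplitStep l t
      · exact absurd (hRw ▸ sameCycle_apply_right.2 hx) (hl.not_sameCycle_zero_letter ht hs)
      rw [hmin.lastOcc_letter_of_not_isSplitStep ht hs]
      exact hl.le_lastOcc_of_sameCycle_zero hx0 hx1
    rcases eq_or_ne (suffixProd l (t + 1) x) (letter l t) with hw | hw
    · rw [hl.suffixProd_apply ht, hw, swap_apply_right] at hRx
      exact absurd rfl hRx
    rw [hl.suffixProd_apply ht, swap_apply_of_ne_of_ne h0 hw]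
    exact ih hx1 hx0 h0

theorem lastOcc_le_of_sameCycle_letter (hmin : IsMinimalTransitiveStarFactorization π l)
    (ht : t < l.length) (hs : IsSplitStep l t) (h : (suffixProd l t).SameCycle (letter l t) y) :
    lastOcc l y ≤ lastOcc l (letter l t) := by
  have hl := hmin.1.1
  refine h.induction_apply (p := fun z => lastOcc l z ≤ lastOcc l (letter l t)) le_rfl
    fun z hz hzle => ?_
  have hz1 := (hl.sameCycle_zero_iff_of_isSplitStep ht hs).2 (Or.inr hz)
  have hz0 : z ≠ 0 := by
    rintro rfl
    exact hl.not_sameCycle_zero_letter ht hs hz.symm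
  rcases eq_or_ne (suffixProd l (t + 1) z) 0 with h0 | h0
  · rw [hl.suffixProd_apply ht, h0, swap_apply_left]
  rcases eq_or_ne (suffixProd l (t + 1) z) (letter l t) with hw | hw
  · have hRz : suffixProd l t z = 0 := by rw [hl.suffixProd_apply ht, hw, swap_apply_right]
    exact absurd (hRz ▸ hz.trans (sameCycle_apply_right.2 (SameCycle.refl _ z))).symm
      (hl.not_sameCycle_zero_letter ht hs)
  rw [hl.suffixProd_apply ht, swap_apply_of_ne_of_ne h0 hw]
  exact (hmin.lastOcc_apply_lt hz1 hz0 h0).le.trans hzle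

theorem lastOcc_letter_lt_of_sameCycle_zero (hmin : IsMinimalTransitiveStarFactorization π l)
    (ht : t < l.length) (hs : IsSplitStep l t) (h : (suffixProd l t).SameCycle 0 y)
    (hy : y ≠ 0) : lastOcc l (letter l t) < lastOcc l y := by
  have hl := hmin.1.1
  refine h.symm.induction_apply_eq (p := fun z => z ≠ 0 → lastOcc l (letter l t) < lastOcc l z)
    (fun z hz z0 => ?_) (fun z hz hRz ih z0 => ?_) hy
  · have hρz : suffixProd l (t + 1) z = letter l t := by
      rwa [hl.suffixProd_apply ht, swap_apply_eq_iff, swap_apply_left] at hz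
    have hz1 : (suffixProd l (t + 1)).SameCycle 0 z :=
      (hl.sameCycle_zero_iff_of_isSplitStep ht hs).2
        (Or.inl (hz ▸ sameCycle_apply_right.2 (SameCycle.refl _ z)).symm)
    simpa only [hρz] using hmin.lastOcc_apply_lt hz1 z0 (hρz ▸ hl.letter_ne_zero ht)
  · exact (ih hRz).trans (hmin.lastOcc_apply_lt hz.symm z0 hRz)

/-- The cycle detached at a split step is a cycle of every earlier `suffixProd`, as the later
steps in the backward reading only touch the cycle of `0` and points not yet moved. -/
theorem sameCycle_letter_suffixProd_iff_of_le (hmin : IsMinimalTransitiveStarFactorization π l)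
    (ht : t < l.length) (hs : IsSplitStep l t) (hu : u ≤ t) :
    (suffixProd l u).SameCycle (letter l t) y ↔ (suffixProd l t).SameCycle (letter l t) y := by
  have hl := hmin.1.1
  induction hu using Nat.decreasingInduction generalizing y with
  | self => rfl
  | of_succ k hk ih =>
    rw [hl.suffixProd_eq (hk.trans ht)]
    refine (sameCycle_swap_mul_iff_of_forall_ne fun z hz => ?_).trans ih
    have hzt := ih.1 hz
    have hz0 : z ≠ 0 := fun hz0 => hl.not_sameCycle_zero_letter ht hs (hz0 ▸ hzt).symm
    refine ⟨hz0, fun hzk => ?_⟩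
    by_cases hsk : IsSplitStep l k
    · exact hl.not_sameCycle_zero_letter ht hs (ih.1 (hz.trans (hzk ▸ hsk.symm))).symm
    · have := hl.le_lastOcc_of_sameCycle_zero hz0
        ((hl.sameCycle_zero_iff_of_isSplitStep ht hs).2 (Or.inr hzt))
      rw [hzk, hmin.lastOcc_letter_of_not_isSplitStep (hk.trans ht) hsk] at this
      omega

theorem sameCycle_letter_iff_sameCycle_letter_suffixProd
    (hmin : IsMinimalTransitiveStarFactorization π l) (ht : t < l.length)
    (hs : IsSplitStep l t) :
    π.SameCycle (letter l t) y ↔ (suffixProd l t).SameCycle (letter l t) y := by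
  rw [← hmin.sameCycle_letter_suffixProd_iff_of_le ht hs (Nat.zero_le t), suffixProd_zero,
    hmin.1.2]

theorem sameCycle_zero_suffixProd_entryTime (hmin : IsMinimalTransitiveStarFactorization π l)
    (hx : x ≠ 0) : (suffixProd l (entryTime l x)).SameCycle 0 x :=
  Nat.sInf_mem (s := {t | (suffixProd l t).SameCycle 0 x})
    ⟨_, hmin.sameCycle_zero_suffixProd_lastOcc hx⟩

theorem sameCycle_zero_suffixProd_iff (hmin : IsMinimalTransitiveStarFactorization π l)
    (hx : x ≠ 0) :
    (suffixProd l t).SameCycle 0 x ↔ entryTime l x ≤ t ∧ t ≤ lastOcc l x := by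
  have hl := hmin.1.1
  refine ⟨fun h => ⟨entryTime_le h, hl.le_lastOcc_of_sameCycle_zero hx h⟩, fun ⟨h1, h2⟩ => ?_⟩
  refine Nat.decreasingInduction' (P := fun t => (suffixProd l t).SameCycle 0 x)
    (fun k hk htk ih => ?_) h2 (hmin.sameCycle_zero_suffixProd_lastOcc hx)
  have hkl : k < l.length := hk.trans (hl.lastOcc_lt_length hmin.2.1 hx)
  by_contra hk0
  obtain ⟨hs, hxk⟩ := hmin.isSplitStep_and_sameCycle_letter hkl ih hk0
  have hxe := (hmin.sameCycle_letter_suffixProd_iff_of_le hkl hs (h1.trans htk)).2 hxk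
  have hx0 := hmin.sameCycle_zero_suffixProd_entryTime hx
  exact hl.not_sameCycle_zero_letter hkl hs
    ((hmin.sameCycle_letter_suffixProd_iff_of_le hkl hs (h1.trans htk)).1
      (hxe.trans hx0.symm)).symm

theorem entryTime_eq_zero_iff (hmin : IsMinimalTransitiveStarFactorization π l) :
    entryTime l x = 0 ↔ π.SameCycle 0 x := by
  have hprod : suffixProd l 0 = π := by rw [suffixProd_zero, hmin.1.2]
  refine ⟨fun h => ?_, fun h => Nat.le_zero.1 (entryTime_le (hprod ▸ h))⟩
  rcases eq_or_ne x 0 with rfl | hx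
  · exact SameCycle.refl _ _
  · exact hprod ▸ h ▸ hmin.sameCycle_zero_suffixProd_entryTime hx

theorem entryTime_eq_succ_iff (hmin : IsMinimalTransitiveStarFactorization π l) :
    entryTime l x = t + 1 ↔
      t < l.length ∧ IsSplitStep l t ∧ (suffixProd l t).SameCycle (letter l t) x := by
  have hl := hmin.1.1
  constructor
  · intro h
    have hx : x ≠ 0 := by
      rintro rfl
      have := entryTime_le (l := l) (SameCycle.refl (suffixProd l 0) 0)
      omega
    have hx1 := h ▸ hmin.sameCycle_zero_suffixProd_entryTime hx
    have hx0 := not_sameCycle_zero_of_lt_entryTime (by omega : t < entryTime l x)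
    have ht : t < l.length := by
      have := hl.le_lastOcc_of_sameCycle_zero hx hx1
      have := hl.lastOcc_lt_length hmin.2.1 hx
      omega
    exact ⟨ht, hmin.isSplitStep_and_sameCycle_letter ht hx1 hx0⟩
  · rintro ⟨ht, hs, h⟩
    have hx : x ≠ 0 := by
      rintro rfl
      exact hl.not_sameCycle_zero_letter ht hs h.symm
    have hx1 := (hl.sameCycle_zero_iff_of_isSplitStep ht hs).2 (Or.inr h)
    have hx0 : ¬(suffixProd l t).SameCycle 0 x := fun h0 =>
      hl.not_sameCycle_zero_letter ht hs (h0.trans h.symm)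
    rw [hmin.sameCycle_zero_suffixProd_iff hx] at hx1 hx0
    omega

theorem entryTime_eq_entryTime_iff (hmin : IsMinimalTransitiveStarFactorization π l) :
    entryTime l x = entryTime l y ↔ π.SameCycle x y := by
  rcases h : entryTime l x with _ | t
  · rw [eq_comm, hmin.entryTime_eq_zero_iff]
    rw [hmin.entryTime_eq_zero_iff] at h
    exact ⟨h.symm.trans, h.trans⟩
  · obtain ⟨ht, hs, hx⟩ := hmin.entryTime_eq_succ_iff.1 h
    rw [eq_comm, hmin.entryTime_eq_succ_iff,
      ← hmin.sameCycle_letter_iff_sameCycle_letter_suffixProd ht hs]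
    rw [← hmin.sameCycle_letter_iff_sameCycle_letter_suffixProd ht hs] at hx
    exact ⟨fun ⟨_, _, hy⟩ => hx.symm.trans hy, fun hxy => ⟨ht, hs, hx.trans hxy⟩⟩

theorem entryTime_letter_le (hmin : IsMinimalTransitiveStarFactorization π l)
    (hs : s < l.length) : entryTime l (letter l s) ≤ s + 1 := by
  by_cases hsplit : IsSplitStep l s
  · exact (hmin.entryTime_eq_succ_iff.2 ⟨hs, hsplit, SameCycle.refl _ _⟩).le
  · exact (entryTime_le ((hmin.sameCycle_zero_iff_of_not_isSplitStep hs hsplit).2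
      (Or.inr rfl))).trans (Nat.le_succ s)

theorem lastOcc_letter_of_entryTime_le (hmin : IsMinimalTransitiveStarFactorization π l)
    (hs : s < l.length) (h : entryTime l (letter l s) ≤ s) : lastOcc l (letter l s) = s := by
  by_cases hsplit : IsSplitStep l s
  · have := hmin.entryTime_eq_succ_iff.2 ⟨hs, hsplit, SameCycle.refl _ _⟩
    omega
  · exact hmin.lastOcc_letter_of_not_isSplitStep hs hsplit

theorem entryTime_letter_of_entryTime_eq_succ (hmin : IsMinimalTransitiveStarFactorization π l)
    (h : entryTime l x = t + 1) : entryTime l (letter l t) = t + 1 :=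
  have ⟨ht, hs, _⟩ := hmin.entryTime_eq_succ_iff.1 h
  hmin.entryTime_eq_succ_iff.2 ⟨ht, hs, SameCycle.refl _ _⟩

theorem lastOcc_lt_of_entryTime_lt (hmin : IsMinimalTransitiveStarFactorization π l)
    (hx : x ≠ 0) (hxy : entryTime l x < entryTime l y) (hyx : entryTime l y ≤ lastOcc l x) :
    lastOcc l y < lastOcc l x := by
  obtain ⟨t, ht⟩ : ∃ t, entryTime l y = t + 1 := ⟨entryTime l y - 1, by omega⟩
  obtain ⟨htl, hs, hy⟩ := hmin.entryTime_eq_succ_iff.1 ht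
  have hxt := (hmin.sameCycle_zero_suffixProd_iff (t := t) hx).2 ⟨by omega, by omega⟩
  exact (hmin.lastOcc_le_of_sameCycle_letter htl hs hy).trans_lt
    (hmin.lastOcc_letter_lt_of_sameCycle_zero htl hs hxt hx)

variable {a b c j : ℕ}

theorem entryTime_letter_lt_of_interleave (hmin : IsMinimalTransitiveStarFactorization π l)
    (hac : a < c) (hcb : c < b) (hb : b < l.length)
    (hab : π.SameCycle (letter l a) (letter l b)) (hnc : ¬π.SameCycle (letter l a) (letter l c)) :
    entryTime l (letter l a) < entryTime l (letter l c) := by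
  by_contra! hle
  have hne : entryTime l (letter l c) ≠ entryTime l (letter l a) := fun h =>
    hnc (hmin.entryTime_eq_entryTime_iff.1 h.symm)
  have hEa := hmin.entryTime_letter_le (hac.trans (hcb.trans hb))
  have hEb : entryTime l (letter l b) = entryTime l (letter l a) :=
    hmin.entryTime_eq_entryTime_iff.2 hab.symm
  have hLb := hmin.lastOcc_letter_of_entryTime_le hb (by omega)
  have hLc := hmin.lastOcc_letter_of_entryTime_le (hcb.trans hb) (by omega)
  have := hmin.lastOcc_lt_of_entryTime_lt (hmin.1.1.letter_ne_zero (hcb.trans hb))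
    (y := letter l b) (by omega) (by omega)
  omega

theorem lt_of_interleave_left (hmin : IsMinimalTransitiveStarFactorization π l)
    (hac : a < c) (hcb : c < b) (hb : b < l.length)
    (hab : π.SameCycle (letter l a) (letter l b)) (hnc : ¬π.SameCycle (letter l a) (letter l c))
    (hj : j < l.length) (hcj : π.SameCycle (letter l c) (letter l j)) : a < j := by
  have hlt := hmin.entryTime_letter_lt_of_interleave hac hcb hb hab hnc
  have hEj : entryTime l (letter l j) = entryTime l (letter l c) :=
    hmin.entryTime_eq_entryTime_iff.2 hcj.symm
  have := hmin.entryTime_letter_le hj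
  suffices a + 1 < entryTime l (letter l c) by omega
  by_contra! hle
  rcases hle.lt_or_eq with hle | heq
  · have ha : a < l.length := hac.trans (hcb.trans hb)
    have hLa := hmin.lastOcc_letter_of_entryTime_le ha (by omega)
    have hLc := hmin.lastOcc_letter_of_entryTime_le (hcb.trans hb) (by omega)
    have := hmin.lastOcc_lt_of_entryTime_lt (hmin.1.1.letter_ne_zero ha) hlt (by omega)
    omega
  · have := hmin.entryTime_letter_of_entryTime_eq_succ heq
    omega

theorem lt_of_interleave_right (hmin : IsMinimalTransitiveStarFactorization π l)
    (hac : a < c) (hcb : c < b) (hb : b < l.length)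
    (hab : π.SameCycle (letter l a) (letter l b)) (hnc : ¬π.SameCycle (letter l a) (letter l c))
    (hj : j < l.length) (hcj : π.SameCycle (letter l c) (letter l j)) : j < b := by
  have hlt := hmin.entryTime_letter_lt_of_interleave hac hcb hb hab hnc
  have hEj : entryTime l (letter l j) = entryTime l (letter l c) :=
    hmin.entryTime_eq_entryTime_iff.2 hcj.symm
  have hEb : entryTime l (letter l b) = entryTime l (letter l a) :=
    hmin.entryTime_eq_entryTime_iff.2 hab.symm
  have := hmin.entryTime_letter_le (hcb.trans hb)
  have := hmin.entryTime_letter_le (hac.trans (hcb.trans hb))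
  by_contra! hbj
  rcases hbj.lt_or_eq with hbj | rfl
  · have hLj := hmin.lastOcc_letter_of_entryTime_le hj (by omega)
    have hLb := hmin.lastOcc_letter_of_entryTime_le hb (by omega)
    have := hmin.lastOcc_lt_of_entryTime_lt (hmin.1.1.letter_ne_zero hb) (y := letter l j)
      (by omega) (by omega)
    omega
  · omega

end IsMinimalTransitiveStarFactorization

/-- Cycles are encoded by orbit representatives `u` (for `σ`) and `v` (for `σ̂`); a factor
`(1 i)` meets a cycle iff `i` lies in its orbit. The symbol `1` is `0 : Fin n`. -/
theorem stmt8 {n : ℕ} [NeZero n] (π : Equiv.Perm (Fin n))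
    (l : List (Equiv.Perm (Fin n)))
    (hl : IsMinimalTransitiveStarFactorization π l)
    (u v : Fin n) (hdist : ¬ π.SameCycle u v)
    (a c b : Fin l.length) (hac : a < c) (hcb : c < b)
    (hta : ∃ i : Fin n, i ≠ 0 ∧ π.SameCycle u i ∧ l.get a = Equiv.swap 0 i)
    (htb : ∃ i : Fin n, i ≠ 0 ∧ π.SameCycle u i ∧ l.get b = Equiv.swap 0 i)
    (htc : ∃ i : Fin n, i ≠ 0 ∧ π.SameCycle v i ∧ l.get c = Equiv.swap 0 i) :
    ¬ π.SameCycle v 0 ∧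
    ∀ j : Fin l.length,
      (∃ i : Fin n, i ≠ 0 ∧ π.SameCycle v i ∧ l.get j = Equiv.swap 0 i) →
      a < j ∧ j < b := by
  obtain ⟨_, -, hua, hga⟩ := hta
  obtain ⟨_, -, hub, hgb⟩ := htb
  obtain ⟨_, -, hvc, hgc⟩ := htc
  rw [← letter_eq_of_get_eq hga] at hua
  rw [← letter_eq_of_get_eq hgb] at hub
  rw [← letter_eq_of_get_eq hgc] at hvc
  have hab := hua.symm.trans hub
  have hnc : ¬π.SameCycle (letter l a) (letter l c) := fun h =>
    hdist (hua.trans (h.trans hvc.symm))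
  refine ⟨fun hv0 => ?_, fun j ⟨_, _, hvj, hgj⟩ => ?_⟩
  · have := hl.entryTime_letter_lt_of_interleave hac hcb b.isLt hab hnc
    rw [hl.entryTime_eq_zero_iff.2 (hv0.symm.trans hvc)] at this
    omega
  · rw [← letter_eq_of_get_eq hgj] at hvj
    exact ⟨hl.lt_of_interleave_left hac hcb b.isLt hab hnc j.isLt (hvc.symm.trans hvj),
      hl.lt_of_interleave_right hac hcb b.isLt hab hnc j.isLt (hvc.symm.trans hvj)⟩
end

section
/- Let π ∈ S_n have cycles of lengths ℓ_1,...,ℓ_m (fixed points counted as cycles), including exactly k fixed points not equal to the point 1. Then the number of minimal-length star factorizations of π equals (n + m − 2(k+1))!·ℓ_1⋯ℓ_m / (n−k)!. -/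
/-- The multiset of all orbit sizes of `π` (fixed points contribute 1's). -/
def fullCycleType {n : ℕ} (π : Equiv.Perm (Fin n)) : Multiset ℕ :=
  π.cycleType + Multiset.replicate (Finset.univ.filter fun x => π x = x).card 1

/-!
The point `1` of the paper is `0 : Fin n`; write `μ(π) = n + m - 2 (k + 1)` (`starLength`).
Right multiplication by `(0 i)` merges the cycles of `0` and `i` when they differ and otherwise
splits the cycle of `0`: the sign flips, so the number of cycles cannot stay the same. Tracking `m`
and `k` shows that `μ` moves by exactly one, and it drops precisely when `i` lies in another
non-trivial cycle or `i = π 0`. Hence `μ(π)` is the minimal length, and the number `N(π)` of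
factorizations of that length satisfies `N(π) = ∑ N(π (0 i))` over these descents `i`, with
`N(1) = 1`. The claimed value `W(π) = μ! ∏ ℓ / (n - k)!` satisfies the same recursion: merging the
cycle of `i` multiplies `W` by `(1/ℓᵢ + 1/ℓ₀) / μ`, splitting off `π 0` multiplies it by
`(n - k)(ℓ₀ - 1) / (ℓ₀ μ)`, and these factors add up to `1` because summing `1/ℓᵢ` over the points
of the other non-trivial cycles counts those cycles, `m - 1 - k` of them.
-/

open Equiv Finset

namespace Equiv.Perm

variable {α : Type*}

lemma sameCycle_apply_self (π : Perm α) (x : α) : π.SameCycle x (π x) :=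
  sameCycle_apply_right.2 (SameCycle.refl _ _)

variable [Fintype α] [DecidableEq α]

def orbitFinset (π : Perm α) (x : α) : Finset α := univ.filter (π.SameCycle x)

def orbitFinsets (π : Perm α) : Finset (Finset α) := univ.image π.orbitFinset

section Orbits

variable {π : Perm α} {x y : α}

@[simp]
lemma mem_orbitFinset : y ∈ π.orbitFinset x ↔ π.SameCycle x y := by
  simp [orbitFinset]

lemma mem_orbitFinset_self (π : Perm α) (x : α) : x ∈ π.orbitFinset x :=
  mem_orbitFinset.2 (SameCycle.refl _ _)

lemma apply_mem_orbitFinset (h : y ∈ π.orbitFinset x) : π y ∈ π.orbitFinset x :=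
  mem_orbitFinset.2 (sameCycle_apply_right.2 (mem_orbitFinset.1 h))

lemma orbitFinset_eq_orbitFinset_iff :
    π.orbitFinset x = π.orbitFinset y ↔ π.SameCycle x y := by
  refine ⟨fun h => mem_orbitFinset.1 (h ▸ mem_orbitFinset_self π y), fun h => ?_⟩
  ext z
  simp only [mem_orbitFinset]
  exact ⟨h.symm.trans, h.trans⟩

lemma orbitFinset_eq_of_mem (h : y ∈ π.orbitFinset x) : π.orbitFinset y = π.orbitFinset x :=
  orbitFinset_eq_orbitFinset_iff.2 (mem_orbitFinset.1 h).symm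

lemma orbitFinset_mem_orbitFinsets (π : Perm α) (x : α) : π.orbitFinset x ∈ π.orbitFinsets :=
  mem_image_of_mem _ (mem_univ x)

lemma card_orbitFinset_pos (π : Perm α) (x : α) : 0 < #(π.orbitFinset x) :=
  card_pos.2 ⟨x, mem_orbitFinset_self π x⟩

lemma orbitFinset_eq_singleton (h : π x = x) : π.orbitFinset x = {x} := by
  ext y
  simp only [mem_orbitFinset, mem_singleton]
  exact ⟨fun hy => (hy.eq_of_left h).symm, fun hy => hy ▸ SameCycle.refl _ _⟩

lemma orbitFinset_subset_of_mapsTo {s : Finset α} (hs : ∀ y ∈ s, π y ∈ s) (hx : x ∈ s) :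
    π.orbitFinset x ⊆ s := by
  have hpow : ∀ k : ℕ, (π ^ k) x ∈ s := fun k => by
    induction k with
    | zero => exact hx
    | succ k ih => rw [pow_succ', Perm.mul_apply]; exact hs _ ih
  intro y hy
  obtain ⟨k, rfl⟩ := (mem_orbitFinset.1 hy).exists_nat_pow_eq
  exact hpow k

lemma card_orbitFinsets_le : #π.orbitFinsets ≤ Fintype.card α :=
  card_image_le

lemma sum_inv_card_orbitFinset :
    ∑ x, (#(π.orbitFinset x) : ℚ)⁻¹ = #π.orbitFinsets := by
  rw [← sum_fiberwise_of_maps_to (g := π.orbitFinset) (t := π.orbitFinsets)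
    (fun x _ => orbitFinset_mem_orbitFinsets π x), card_eq_sum_ones, Nat.cast_sum]
  refine sum_congr rfl fun O hO => ?_
  obtain ⟨x, -, rfl⟩ := mem_image.1 hO
  have hfiber : univ.filter (fun y => π.orbitFinset y = π.orbitFinset x) = π.orbitFinset x := by
    ext y
    simp [orbitFinset_eq_orbitFinset_iff, sameCycle_comm]
  rw [sum_congr rfl fun y hy => by rw [(mem_filter.1 hy).2], sum_const, hfiber, nsmul_eq_mul,
    mul_inv_cancel₀ (by exact_mod_cast (card_orbitFinset_pos π x).ne'), Nat.cast_one]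

lemma orbitFinset_eq_support_cycleOf (hx : π x ≠ x) :
    π.orbitFinset x = (π.cycleOf x).support := by
  ext y
  rw [mem_orbitFinset, mem_support_cycleOf_iff]
  exact ⟨fun h => ⟨h, mem_support.2 hx⟩, And.left⟩

lemma orbitFinsets_eq_union : π.orbitFinsets = π.cycleFactorsFinset.image support ∪
    (univ.filter fun x => π x = x).image singleton := by
  ext O
  simp only [orbitFinsets, mem_union, mem_image, mem_univ, true_and, mem_filter]
  constructor
  · rintro ⟨x, rfl⟩
    by_cases hx : π x = x
    · exact Or.inr ⟨x, hx, (orbitFinset_eq_singleton hx).symm⟩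
    · exact Or.inl ⟨π.cycleOf x, cycleOf_mem_cycleFactorsFinset_iff.2 (mem_support.2 hx),
        (orbitFinset_eq_support_cycleOf hx).symm⟩
  · rintro (⟨c, hc, rfl⟩ | ⟨x, hx, rfl⟩)
    · obtain ⟨a, ha⟩ := (mem_cycleFactorsFinset_iff.1 hc).1.nonempty_support
      have haπ := mem_support.1 (mem_cycleFactorsFinset_support_le hc ha)
      exact ⟨a, by rw [orbitFinset_eq_support_cycleOf haπ, ← cycle_is_cycleOf ha hc]⟩
    · exact ⟨x, orbitFinset_eq_singleton hx⟩

lemma support_injOn_cycleFactorsFinset :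
    Set.InjOn support (π.cycleFactorsFinset : Set (Perm α)) := by
  intro c₁ h₁ c₂ h₂ h
  obtain ⟨a, ha⟩ := (mem_cycleFactorsFinset_iff.1 h₁).1.nonempty_support
  rw [cycle_is_cycleOf ha h₁, cycle_is_cycleOf (h ▸ ha) h₂]

lemma map_card_orbitFinsets :
    π.orbitFinsets.val.map card =
      π.cycleType + Multiset.replicate (univ.filter fun x => π x = x).card 1 := by
  have hdisj : _root_.Disjoint (π.cycleFactorsFinset.image support)
      ((univ.filter fun x => π x = x).image singleton) := by
    simp only [disjoint_left, mem_image]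
    rintro _ ⟨c, hc, rfl⟩ ⟨x, -, hx⟩
    have := (mem_cycleFactorsFinset_iff.1 hc).1.two_le_card_support
    rw [← hx, card_singleton] at this
    omega
  rw [orbitFinsets_eq_union, ← disjUnion_eq_union _ _ hdisj, disjUnion_val, Multiset.map_add,
    image_val_of_injOn support_injOn_cycleFactorsFinset,
    image_val_of_injOn (singleton_injective.injOn), Multiset.map_map, Multiset.map_map]
  simp only [card_singleton, Function.comp_def, Multiset.map_const']
  rfl

lemma sign_eq_neg_one_pow_card_add_card_orbitFinsets :
    sign π = (-1) ^ (Fintype.card α + #π.orbitFinsets) := by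
  have hcard := congrArg Multiset.card (map_card_orbitFinsets (π := π))
  rw [Multiset.card_map, Multiset.card_add, Multiset.card_replicate] at hcard
  have hfix : #π.support + (univ.filter fun x => π x = x).card = Fintype.card α := by
    simpa [support] using card_filter_add_card_filter_not (s := univ) (p := fun x => π x ≠ x)
  rw [sign_of_cycleType, sum_cycleType, card_def π.orbitFinsets, hcard, ← hfix,
    show ∀ s c f : ℕ, s + f + (c + f) = s + c + 2 * f by intros; ring, pow_add _ (_ + _),
    pow_mul]
  simp

end Orbits

section MulSwap

variable {π : Perm α} {a b x : α}

lemma orbitFinset_union_subset_mul_swap :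
    π.orbitFinset a ∪ π.orbitFinset b ⊆
      (π * swap a b).orbitFinset a ∪ (π * swap a b).orbitFinset b := by
  set τ := π * swap a b
  set U := τ.orbitFinset a ∪ τ.orbitFinset b
  have ha : a ∈ U := mem_union_left _ (mem_orbitFinset_self τ a)
  have hb : b ∈ U := mem_union_right _ (mem_orbitFinset_self τ b)
  have hπ : ∀ y ∈ U, π y ∈ U := by
    intro y hy
    have hswap : swap a b y ∈ U := by
      rw [swap_apply_def]
      split_ifs <;> assumption
    rw [show π y = τ (swap a b y) by simp [τ]]
    exact (mem_union.1 hswap).elim (mem_union_left _ <| apply_mem_orbitFinset ·)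
      (mem_union_right _ <| apply_mem_orbitFinset ·)
  exact union_subset (orbitFinset_subset_of_mapsTo hπ ha) (orbitFinset_subset_of_mapsTo hπ hb)

lemma orbitFinset_mul_swap_union :
    (π * swap a b).orbitFinset a ∪ (π * swap a b).orbitFinset b =
      π.orbitFinset a ∪ π.orbitFinset b := by
  refine subset_antisymm ?_ orbitFinset_union_subset_mul_swap
  simpa using orbitFinset_union_subset_mul_swap (π := π * swap a b) (a := a) (b := b)

lemma orbitFinset_mul_swap_subset (hx : x ∉ π.orbitFinset a ∪ π.orbitFinset b) :
    (π * swap a b).orbitFinset x ⊆ π.orbitFinset x := by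
  refine orbitFinset_subset_of_mapsTo (fun y hy => ?_) (mem_orbitFinset_self π x)
  have hya : y ≠ a := by
    rintro rfl
    exact hx (mem_union_left _ (mem_orbitFinset.2 (mem_orbitFinset.1 hy).symm))
  have hyb : y ≠ b := by
    rintro rfl
    exact hx (mem_union_right _ (mem_orbitFinset.2 (mem_orbitFinset.1 hy).symm))
  rw [Perm.mul_apply, swap_apply_of_ne_of_ne hya hyb]
  exact apply_mem_orbitFinset hy

lemma orbitFinset_mul_swap_of_notMem (hx : x ∉ π.orbitFinset a ∪ π.orbitFinset b) :
    (π * swap a b).orbitFinset x = π.orbitFinset x := by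
  refine subset_antisymm (orbitFinset_mul_swap_subset hx) ?_
  rw [← orbitFinset_mul_swap_union] at hx
  simpa using orbitFinset_mul_swap_subset (π := π * swap a b) hx

lemma sameCycle_mul_swap_of_not_sameCycle (h : ¬π.SameCycle a b) :
    (π * swap a b).SameCycle a b := by
  set τ := π * swap a b
  by_contra hτ
  set D := π.orbitFinset a ∩ τ.orbitFinset b
  have hD : ∀ y ∈ D, π y ∈ D := by
    intro y hy
    obtain ⟨hya, hyb⟩ := mem_inter.1 hy
    have hyb' : y ≠ b := by rintro rfl; exact h (mem_orbitFinset.1 hya)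
    have hya' : y ≠ a := by rintro rfl; exact hτ (mem_orbitFinset.1 hyb).symm
    have hτy : τ y = π y := by simp [τ, swap_apply_of_ne_of_ne hya' hyb']
    exact mem_inter.2 ⟨apply_mem_orbitFinset hya, hτy ▸ apply_mem_orbitFinset hyb⟩
  have hπa : π a ∈ D := by
    have : τ b = π a := by simp [τ]
    exact mem_inter.2 ⟨mem_orbitFinset.2 (π.sameCycle_apply_self a),
      this ▸ mem_orbitFinset.2 (τ.sameCycle_apply_self b)⟩
  have ha : a ∈ π.orbitFinset (π a) := mem_orbitFinset.2 (π.sameCycle_apply_self a).symm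
  exact hτ (mem_orbitFinset.1 (mem_inter.1 (orbitFinset_subset_of_mapsTo hD hπa ha)).2).symm

lemma sameCycle_mul_swap_iff (hab : a ≠ b) :
    (π * swap a b).SameCycle a b ↔ ¬π.SameCycle a b := by
  refine ⟨fun hτ hπ => ?_, sameCycle_mul_swap_of_not_sameCycle⟩
  -- If `a, b` share a cycle of both `π` and `τ`, the two have the same orbits, hence the same sign.
  set τ := π * swap a b
  have hU : ∀ σ : Perm α, σ.SameCycle a b →
      σ.orbitFinset a ∪ σ.orbitFinset b = σ.orbitFinset a := fun σ h => by
    rw [orbitFinset_eq_orbitFinset_iff.2 h, union_self]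
  have horbit : ∀ x, τ.orbitFinset x = π.orbitFinset x := by
    intro x
    by_cases hx : x ∈ π.orbitFinset a ∪ π.orbitFinset b
    · have hxτ : x ∈ τ.orbitFinset a := by
        rwa [← hU τ hτ, orbitFinset_mul_swap_union]
      rw [hU π hπ] at hx
      rw [orbitFinset_eq_of_mem hxτ, orbitFinset_eq_of_mem hx, ← hU τ hτ,
        orbitFinset_mul_swap_union, hU π hπ]
    · exact orbitFinset_mul_swap_of_notMem hx
  have hsign : sign τ = sign π := by
    rw [sign_eq_neg_one_pow_card_add_card_orbitFinsets,
      sign_eq_neg_one_pow_card_add_card_orbitFinsets, orbitFinsets, orbitFinsets,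
      funext horbit]
  rw [sign_mul, sign_swap hab, mul_neg_one, neg_eq_iff_eq_neg] at hsign
  exact units_ne_neg_self _ hsign

lemma orbitFinset_mul_swap_left (h : ¬π.SameCycle a b) :
    (π * swap a b).orbitFinset a = π.orbitFinset a ∪ π.orbitFinset b := by
  rw [← orbitFinset_mul_swap_union,
    orbitFinset_eq_orbitFinset_iff.2 (sameCycle_mul_swap_of_not_sameCycle h), union_self]

lemma disjoint_orbitFinset (h : ¬π.SameCycle a b) :
    _root_.Disjoint (π.orbitFinset a) (π.orbitFinset b) :=
  disjoint_left.2 fun _ ha hb => h ((mem_orbitFinset.1 ha).trans (mem_orbitFinset.1 hb).symm)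

lemma orbitFinsets_mul_swap (h : ¬π.SameCycle a b) :
    (π * swap a b).orbitFinsets = insert (π.orbitFinset a ∪ π.orbitFinset b)
      ((π.orbitFinsets.erase (π.orbitFinset a)).erase (π.orbitFinset b)) := by
  ext O
  simp only [mem_insert, mem_erase, orbitFinsets, mem_image, mem_univ, true_and]
  constructor
  · rintro ⟨x, rfl⟩
    by_cases hx : x ∈ π.orbitFinset a ∪ π.orbitFinset b
    · rw [← orbitFinset_mul_swap_left h] at hx ⊢
      exact Or.inl (orbitFinset_eq_of_mem hx)
    · refine Or.inr ⟨?_, ?_, x, (orbitFinset_mul_swap_of_notMem hx).symm⟩ <;>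
        rw [orbitFinset_mul_swap_of_notMem hx] <;> intro hO <;>
        exact hx (by simp [← hO, SameCycle.rfl])
  · rintro (rfl | ⟨hOb, hOa, x, rfl⟩)
    · exact ⟨a, orbitFinset_mul_swap_left h⟩
    · refine ⟨x, orbitFinset_mul_swap_of_notMem fun hx => ?_⟩
      rcases mem_union.1 hx with hx | hx
      · exact hOa (orbitFinset_eq_of_mem hx)
      · exact hOb (orbitFinset_eq_of_mem hx)

lemma orbitFinset_mem_erase_orbitFinset (h : ¬π.SameCycle a b) :
    π.orbitFinset b ∈ π.orbitFinsets.erase (π.orbitFinset a) :=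
  mem_erase.2 ⟨fun hba => h (orbitFinset_eq_orbitFinset_iff.1 hba.symm),
    orbitFinset_mem_orbitFinsets π b⟩

lemma union_orbitFinset_notMem_erase :
    π.orbitFinset a ∪ π.orbitFinset b ∉
      (π.orbitFinsets.erase (π.orbitFinset a)).erase (π.orbitFinset b) := by
  intro hU
  obtain ⟨-, hUa, hU⟩ := mem_erase.1 hU |>.imp_right mem_erase.1
  obtain ⟨x, -, hx⟩ := mem_image.1 hU
  have ha : a ∈ π.orbitFinset x := hx ▸ mem_union_left _ (mem_orbitFinset_self π a)
  exact hUa (hx ▸ (orbitFinset_eq_of_mem ha).symm)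

lemma card_orbitFinsets_mul_swap (h : ¬π.SameCycle a b) :
    #(π * swap a b).orbitFinsets + 1 = #π.orbitFinsets := by
  have hb := orbitFinset_mem_erase_orbitFinset h
  rw [orbitFinsets_mul_swap h, card_insert_of_notMem union_orbitFinset_notMem_erase,
    card_erase_of_mem hb, card_erase_of_mem (orbitFinset_mem_orbitFinsets π a)]
  have := card_pos.2 ⟨_, hb⟩
  rw [card_erase_of_mem (orbitFinset_mem_orbitFinsets π a)] at this
  omega

lemma prod_card_orbitFinsets_mul_swap (h : ¬π.SameCycle a b) :
    (∏ O ∈ (π * swap a b).orbitFinsets, #O) * (#(π.orbitFinset a) * #(π.orbitFinset b)) =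
      (∏ O ∈ π.orbitFinsets, #O) * (#(π.orbitFinset a) + #(π.orbitFinset b)) := by
  rw [orbitFinsets_mul_swap h, prod_insert union_orbitFinset_notMem_erase,
    card_union_of_disjoint (disjoint_orbitFinset h),
    ← mul_prod_erase _ _ (orbitFinset_mem_orbitFinsets π a),
    ← mul_prod_erase _ _ (orbitFinset_mem_erase_orbitFinset h)]
  ring

end MulSwap

end Equiv.Perm

namespace StarFactorization

open Equiv.Perm

variable {n : ℕ} [NeZero n] {π : Perm (Fin n)} {i : Fin n} {l : List (Perm (Fin n))}

def fixedNonzero (π : Perm (Fin n)) : Finset (Fin n) := univ.filter fun x => π x = x ∧ x ≠ 0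

def mergingPoints (π : Perm (Fin n)) : Finset (Fin n) :=
  univ.filter fun i => ¬π.SameCycle 0 i ∧ π i ≠ i

-- The subtraction never truncates: see `two_mul_card_fixedNonzero_add_one_le`.
def starLength (π : Perm (Fin n)) : ℕ := n + #π.orbitFinsets - 2 * (#(fixedNonzero π) + 1)

lemma fixedNonzero_mul_swap (h : ¬π.SameCycle 0 i) :
    fixedNonzero (π * swap 0 i) = (fixedNonzero π).erase i := by
  have hπ0 : π 0 ≠ i := fun h' => h (h' ▸ π.sameCycle_apply_self 0)
  ext x
  simp only [fixedNonzero, mem_erase, mem_filter, mem_univ, true_and]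
  rw [Perm.mul_apply]
  by_cases hxi : x = i
  · simp [hxi, hπ0]
  by_cases hx0 : x = 0
  · simp [hx0]
  · simp [hxi, hx0, swap_apply_of_ne_of_ne hx0 hxi]

lemma sum_univ_eq_orbitFinset_add_fixedNonzero_add_mergingPoints {M : Type*} [AddCommMonoid M]
    (π : Perm (Fin n)) (f : Fin n → M) :
    ∑ x, f x = ∑ x ∈ π.orbitFinset 0, f x + ∑ x ∈ fixedNonzero π, f x +
      ∑ x ∈ mergingPoints π, f x := by
  have hfix : univ.filter (fun x => ¬π.SameCycle 0 x ∧ π x = x) = fixedNonzero π := by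
    ext x
    simp only [fixedNonzero, mem_filter, mem_univ, true_and]
    exact ⟨fun ⟨h0, hx⟩ => ⟨hx, fun hx0 => h0 (hx0 ▸ SameCycle.refl _ _)⟩,
      fun ⟨hx, hx0⟩ => ⟨fun h0 => hx0 (h0.eq_of_right hx).symm, hx⟩⟩
  rw [← sum_filter_add_sum_filter_not univ (π.SameCycle 0),
    ← sum_filter_add_sum_filter_not (univ.filter fun x => ¬π.SameCycle 0 x) (fun x => π x = x),
    filter_filter, filter_filter, hfix, add_assoc]
  rfl

lemma card_orbitFinsets_eq (π : Perm (Fin n)) :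
    (#π.orbitFinsets : ℚ) =
      1 + #(fixedNonzero π) + ∑ i ∈ mergingPoints π, (#(π.orbitFinset i) : ℚ)⁻¹ := by
  rw [← sum_inv_card_orbitFinset, sum_univ_eq_orbitFinset_add_fixedNonzero_add_mergingPoints π]
  congr 2
  · rw [sum_congr rfl fun x hx => by rw [orbitFinset_eq_of_mem hx], sum_const, nsmul_eq_mul,
      mul_inv_cancel₀ (by exact_mod_cast (card_orbitFinset_pos π 0).ne')]
  · rw [sum_congr rfl fun x hx => by rw [orbitFinset_eq_singleton (mem_filter.1 hx).2.1]]
    simp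

lemma card_eq_card_orbitFinset_add (π : Perm (Fin n)) :
    n = #(π.orbitFinset 0) + #(fixedNonzero π) + #(mergingPoints π) := by
  have := sum_univ_eq_orbitFinset_add_fixedNonzero_add_mergingPoints π (fun _ => (1 : ℕ))
  simpa only [← card_eq_sum_ones, card_univ, Fintype.card_fin] using this

lemma card_fixedNonzero_add_one_le_card_orbitFinsets (π : Perm (Fin n)) :
    #(fixedNonzero π) + 1 ≤ #π.orbitFinsets := by
  have h := card_orbitFinsets_eq π
  have : (0 : ℚ) ≤ ∑ i ∈ mergingPoints π, (#(π.orbitFinset i) : ℚ)⁻¹ := by positivity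
  exact_mod_cast
    (show ((#(fixedNonzero π) + 1 : ℕ) : ℚ) ≤ #π.orbitFinsets by push_cast; linarith)

lemma card_fixedNonzero_add_one_le (π : Perm (Fin n)) : #(fixedNonzero π) + 1 ≤ n := by
  have := card_eq_card_orbitFinset_add π
  have := card_orbitFinset_pos π 0
  omega

lemma two_mul_card_fixedNonzero_add_one_le (π : Perm (Fin n)) :
    2 * (#(fixedNonzero π) + 1) ≤ n + #π.orbitFinsets := by
  have := card_fixedNonzero_add_one_le π
  have := card_fixedNonzero_add_one_le_card_orbitFinsets π
  omega

lemma card_fixedNonzero_mul_swap (h : ¬π.SameCycle 0 i) :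
    #(fixedNonzero (π * swap 0 i)) + (if π i = i then 1 else 0) = #(fixedNonzero π) := by
  have hi : i ≠ 0 := fun hi => h (hi ▸ SameCycle.refl _ _)
  rw [fixedNonzero_mul_swap h]
  split_ifs with hii
  · exact card_erase_add_one (mem_filter.2 ⟨mem_univ i, hii, hi⟩)
  · rw [erase_eq_of_notMem fun hf => hii (mem_filter.1 hf).2.1, add_zero]

lemma starLength_mul_swap (h : ¬π.SameCycle 0 i) :
    starLength (π * swap 0 i) + 1 = starLength π + if π i = i then 2 else 0 := by
  have hm := card_orbitFinsets_mul_swap h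
  have hk := card_fixedNonzero_mul_swap h
  have hτ := two_mul_card_fixedNonzero_add_one_le (π * swap 0 i)
  have hπ := two_mul_card_fixedNonzero_add_one_le π
  unfold starLength
  split_ifs at hk ⊢ <;> omega

lemma starLength_le_starLength_mul_swap_add_one (hi : i ≠ 0) :
    starLength π ≤ starLength (π * swap 0 i) + 1 := by
  by_cases h : π.SameCycle 0 i
  · have hσ := starLength_mul_swap ((sameCycle_mul_swap_iff hi.symm).not_left.2 h)
    rw [mul_swap_mul_self] at hσ
    split_ifs at hσ <;> omega
  · have := starLength_mul_swap h
    split_ifs at this <;> omega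

lemma starLength_mul_swap_apply_zero (h : π 0 ≠ 0) :
    starLength (π * swap 0 (π 0)) + 1 = starLength π := by
  have hσ := starLength_mul_swap
    ((sameCycle_mul_swap_iff h.symm).not_left.2 (π.sameCycle_apply_self 0))
  rw [mul_swap_mul_self, Perm.mul_apply, swap_apply_right, if_pos rfl] at hσ
  omega

def descents (π : Perm (Fin n)) : Finset (Fin n) :=
  (univ.erase 0).filter fun i => starLength (π * swap 0 i) + 1 = starLength π

lemma mem_descents : i ∈ descents π ↔ i ∈ mergingPoints π ∨ (π 0 = i ∧ i ≠ 0) := by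
  simp only [descents, mergingPoints, mem_filter, mem_erase, mem_univ, and_true, true_and]
  by_cases h : π.SameCycle 0 i
  · rcases eq_or_ne i 0 with rfl | hi
    · simp [h]
    have hσ := starLength_mul_swap ((sameCycle_mul_swap_iff hi.symm).not_left.2 h)
    rw [mul_swap_mul_self, Perm.mul_apply, swap_apply_right] at hσ
    by_cases hπ0 : π 0 = i <;> simp [h, hi, hπ0] at hσ ⊢ <;> omega
  · have hi : i ≠ 0 := fun hi => h (hi ▸ SameCycle.refl _ _)
    have hπ0 : π 0 ≠ i := fun h' => h (h' ▸ π.sameCycle_apply_self 0)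
    have hσ := starLength_mul_swap h
    by_cases hii : π i = i <;> simp [h, hi, hii, hπ0] at hσ ⊢ <;> omega

def starWeight (π : Perm (Fin n)) : ℚ :=
  ((starLength π).factorial * ∏ O ∈ π.orbitFinsets, #O : ℕ) /
    ((n - #(fixedNonzero π)).factorial : ℚ)

lemma starLength_mul_starWeight_mul_swap_of_mem_mergingPoints (hi : i ∈ mergingPoints π) :
    starLength π * starWeight (π * swap 0 i) =
      starWeight π * ((#(π.orbitFinset i) : ℚ)⁻¹ + (#(π.orbitFinset 0) : ℚ)⁻¹) := by
  obtain ⟨h, hii⟩ := (mem_filter.1 hi).2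
  have hL := starLength_mul_swap h
  have hk := card_fixedNonzero_mul_swap h
  rw [if_neg hii, add_zero] at hL hk
  have h0 : (#(π.orbitFinset 0) : ℚ) ≠ 0 := by exact_mod_cast (card_orbitFinset_pos π 0).ne'
  have hℓ : (#(π.orbitFinset i) : ℚ) ≠ 0 := by exact_mod_cast (card_orbitFinset_pos π i).ne'
  have hP : ∏ O ∈ (π * swap 0 i).orbitFinsets, (#O : ℚ) =
      (∏ O ∈ π.orbitFinsets, (#O : ℚ)) *
        ((#(π.orbitFinset i) : ℚ)⁻¹ + (#(π.orbitFinset 0) : ℚ)⁻¹) := by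
    have := congrArg (Nat.cast (R := ℚ)) (prod_card_orbitFinsets_mul_swap h)
    push_cast at this
    field_simp
    linear_combination this
  unfold starWeight
  rw [← hL, hk, Nat.factorial_succ]
  push_cast
  rw [hP]
  ring

lemma starLength_mul_starWeight_mul_swap_apply_zero (h : π 0 ≠ 0) :
    starLength π * starWeight (π * swap 0 (π 0)) = starWeight π *
      ((n - #(fixedNonzero π) : ℚ) * (#(π.orbitFinset 0) - 1) / #(π.orbitFinset 0)) := by
  set σ := π * swap 0 (π 0)
  have hσ : ¬σ.SameCycle 0 (π 0) :=
    (sameCycle_mul_swap_iff h.symm).not_left.2 (π.sameCycle_apply_self 0)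
  have hσπ : σ * swap 0 (π 0) = π := mul_swap_mul_self _ _ _
  have hfix : σ (π 0) = π 0 := by simp [σ]
  have hL : starLength σ + 1 = starLength π := starLength_mul_swap_apply_zero h
  have hk := card_fixedNonzero_mul_swap hσ
  rw [hσπ, if_pos hfix] at hk
  have hs : #(π.orbitFinset 0) = #(σ.orbitFinset 0) + 1 := by
    rw [← hσπ, orbitFinset_mul_swap_left hσ, card_union_of_disjoint (disjoint_orbitFinset hσ),
      orbitFinset_eq_singleton hfix, card_singleton]
  have h0 : (#(π.orbitFinset 0) : ℚ) ≠ 0 := by exact_mod_cast (card_orbitFinset_pos π 0).ne'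
  have hP : ∏ O ∈ σ.orbitFinsets, (#O : ℚ) =
      (∏ O ∈ π.orbitFinsets, (#O : ℚ)) * #(σ.orbitFinset 0) / #(π.orbitFinset 0) := by
    have := congrArg (Nat.cast (R := ℚ)) (prod_card_orbitFinsets_mul_swap hσ)
    rw [hσπ, orbitFinset_eq_singleton hfix, card_singleton, ← hs] at this
    push_cast at this
    field_simp
    linear_combination -this
  have hkn := card_fixedNonzero_add_one_le π
  have hfact : ((n - #(fixedNonzero π)).factorial : ℚ) =
      (n - #(fixedNonzero π) : ℚ) * (n - (#(fixedNonzero π) + 1)).factorial := by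
    rw [show n - #(fixedNonzero π) = n - (#(fixedNonzero π) + 1) + 1 by omega,
      Nat.factorial_succ, Nat.cast_mul, Nat.cast_add, Nat.cast_sub hkn]
    push_cast
    ring
  have hsq : (#(π.orbitFinset 0) : ℚ) - 1 = #(σ.orbitFinset 0) := by rw [hs]; push_cast; ring
  have hkq : ((n : ℚ) - #(fixedNonzero π)) ≠ 0 := by
    rw [sub_ne_zero]; exact_mod_cast (by omega : n ≠ #(fixedNonzero π))
  unfold starWeight
  rw [← hL, ← hk, hfact, hsq, Nat.factorial_succ]
  push_cast
  rw [hP]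
  generalize (∏ O ∈ π.orbitFinsets, (#O : ℚ)) = P
  field_simp

lemma starLength_eq_sum_mergingPoints (π : Perm (Fin n)) :
    (starLength π : ℚ) =
      ∑ i ∈ mergingPoints π,
          ((#(π.orbitFinset i) : ℚ)⁻¹ + (#(π.orbitFinset 0) : ℚ)⁻¹) +
        (n - #(fixedNonzero π) : ℚ) * (#(π.orbitFinset 0) - 1) / #(π.orbitFinset 0) := by
  have hm := card_orbitFinsets_eq π
  have hn := congrArg (Nat.cast (R := ℚ)) (card_eq_card_orbitFinset_add π)
  have h0 : (#(π.orbitFinset 0) : ℚ) ≠ 0 := by exact_mod_cast (card_orbitFinset_pos π 0).ne'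
  push_cast at hn
  unfold starLength
  rw [Nat.cast_sub (two_mul_card_fixedNonzero_add_one_le π), sum_add_distrib, sum_const,
    nsmul_eq_mul]
  generalize ∑ i ∈ mergingPoints π, (#(π.orbitFinset i) : ℚ)⁻¹ = g at hm ⊢
  push_cast
  field_simp
  linear_combination (#(π.orbitFinset 0) : ℚ) * hm + hn

lemma sum_descents_starWeight (hμ : starLength π ≠ 0) :
    ∑ i ∈ descents π, starWeight (π * swap 0 i) = starWeight π := by
  have hD : descents π = mergingPoints π ∪ univ.filter (fun i => π 0 = i ∧ i ≠ 0) := by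
    ext i
    rw [mem_descents, mem_union, mem_filter]
    simp
  have hdisj : _root_.Disjoint (mergingPoints π) (univ.filter fun i => π 0 = i ∧ i ≠ 0) := by
    refine disjoint_left.2 fun i hi hi' => (mem_filter.1 hi).2.1 ?_
    exact (mem_filter.1 hi').2.1 ▸ π.sameCycle_apply_self 0
  have hmerge : starLength π * ∑ i ∈ mergingPoints π, starWeight (π * swap 0 i) =
      starWeight π * ∑ i ∈ mergingPoints π,
        ((#(π.orbitFinset i) : ℚ)⁻¹ + (#(π.orbitFinset 0) : ℚ)⁻¹) := by
    rw [mul_sum, mul_sum]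
    exact sum_congr rfl fun i hi => starLength_mul_starWeight_mul_swap_of_mem_mergingPoints hi
  have hsplit : starLength π * ∑ i ∈ univ.filter (fun i => π 0 = i ∧ i ≠ 0),
      starWeight (π * swap 0 i) = starWeight π *
        ((n - #(fixedNonzero π) : ℚ) * (#(π.orbitFinset 0) - 1) / #(π.orbitFinset 0)) := by
    by_cases h : π 0 = 0
    · rw [filter_false_of_mem fun i _ hi => hi.2 (hi.1 ▸ h), orbitFinset_eq_singleton h]
      simp
    · rw [show univ.filter (fun i => π 0 = i ∧ i ≠ 0) = {π 0} by
        ext i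
        simp only [mem_filter, mem_univ, true_and, mem_singleton]
        exact ⟨fun hi => hi.1.symm, fun hi => ⟨hi.symm, hi ▸ h⟩⟩,
        sum_singleton, starLength_mul_starWeight_mul_swap_apply_zero h]
  refine mul_left_cancel₀ (Nat.cast_ne_zero.2 hμ : (starLength π : ℚ) ≠ 0) ?_
  rw [hD, sum_union hdisj, mul_add, hmerge, hsplit, ← mul_add,
    ← starLength_eq_sum_mergingPoints, mul_comm]


lemma card_fixedNonzero_one : #(fixedNonzero (1 : Perm (Fin n))) = n - 1 := by
  have : fixedNonzero (1 : Perm (Fin n)) = univ.erase 0 := by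
    ext x
    simp [fixedNonzero]
  rw [this, card_erase_of_mem (mem_univ 0), card_univ, Fintype.card_fin]

lemma starLength_one : starLength (1 : Perm (Fin n)) = 0 := by
  have := card_orbitFinsets_le (π := (1 : Perm (Fin n)))
  have := NeZero.one_le (n := n)
  rw [Fintype.card_fin] at *
  unfold starLength
  rw [card_fixedNonzero_one]
  omega

lemma starWeight_one : starWeight (1 : Perm (Fin n)) = 1 := by
  have hprod : ∏ O ∈ (1 : Perm (Fin n)).orbitFinsets, #O = 1 := by
    refine prod_eq_one fun O hO => ?_
    obtain ⟨x, -, rfl⟩ := mem_image.1 hO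
    rw [orbitFinset_eq_singleton rfl, card_singleton]
  have hk : n - #(fixedNonzero (1 : Perm (Fin n))) = 1 := by
    rw [card_fixedNonzero_one]
    have := NeZero.one_le (n := n)
    omega
  simp [starWeight, starLength_one, hprod, hk]

lemma eq_one_of_starLength_eq_zero (h : starLength π = 0) : π = 1 := by
  have hfix : fixedNonzero π = univ.erase 0 := by
    refine eq_of_subset_of_card_le
      (fun x hx => mem_erase.2 ⟨(mem_filter.1 hx).2.2, mem_univ x⟩) ?_
    have := card_fixedNonzero_add_one_le π
    have := card_fixedNonzero_add_one_le_card_orbitFinsets π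
    have := two_mul_card_fixedNonzero_add_one_le π
    rw [card_erase_of_mem (mem_univ 0), card_univ, Fintype.card_fin]
    unfold starLength at h
    omega
  have hx : ∀ x, x ≠ 0 → π x = x := fun x hx =>
    (mem_filter.1 (hfix ▸ mem_erase.2 ⟨hx, mem_univ x⟩ : x ∈ fixedNonzero π)).2.1
  have h0 : π 0 = 0 := by
    by_contra h0
    exact h0 (π.injective (hx _ h0))
  ext x : 1
  by_cases hx0 : x = 0
  · rw [hx0, h0, one_apply]
  · rw [hx x hx0, one_apply]

lemma isStarFactorization_append_swap (hi : i ≠ 0) :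
    IsStarFactorization π (l ++ [swap 0 i]) ↔ IsStarFactorization (π * swap 0 i) l := by
  simp only [IsStarFactorization, IsStarList, List.mem_append, List.mem_singleton,
    List.prod_append, List.prod_singleton]
  refine and_congr ⟨fun h τ hτ => h τ (Or.inl hτ), ?_⟩ ?_
  · rintro h τ (hτ | rfl)
    exacts [h τ hτ, ⟨i, hi, rfl⟩]
  · rw [← swap_inv, eq_mul_inv_iff_mul_eq, swap_inv]

lemma starLength_le_length (h : IsStarFactorization π l) : starLength π ≤ l.length := by
  induction l using List.reverseRecOn generalizing π with
  | nil =>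
    obtain rfl : π = 1 := h.2.symm
    simp [starLength_one]
  | append_singleton l τ ih =>
    obtain ⟨i, hi, rfl⟩ := h.1 τ (List.mem_append_right _ (List.mem_singleton_self _))
    have := ih ((isStarFactorization_append_swap hi).1 h)
    have := starLength_le_starLength_mul_swap_add_one (π := π) hi
    rw [List.length_append, List.length_singleton]
    omega

def starFactorizations (π : Perm (Fin n)) (L : ℕ) : Set (List (Perm (Fin n))) :=
  {l | IsStarFactorization π l ∧ l.length = L}

lemma starFactorizations_finite (π : Perm (Fin n)) (L : ℕ) : (starFactorizations π L).Finite :=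
  (List.finite_length_eq _ L).subset fun _ hl => hl.2

lemma starFactorizations_succ (π : Perm (Fin n)) (L : ℕ) :
    starFactorizations π (L + 1) = ⋃ i ∈ ((univ.erase 0 : Finset (Fin n)) : Set (Fin n)),
      (· ++ [swap 0 i]) '' starFactorizations (π * swap 0 i) L := by
  ext l
  simp only [starFactorizations, Set.mem_iUnion, Set.mem_image, Set.mem_ofPred_eq, coe_erase,
    coe_univ, Set.mem_sdiff, Set.mem_univ, Set.mem_singleton_iff, true_and, exists_prop]
  constructor
  · rintro ⟨h, hlen⟩
    obtain ⟨l, τ, rfl⟩ := (List.eq_nil_or_concat' l).resolve_left (by rintro rfl; simp at hlen)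
    obtain ⟨i, hi, rfl⟩ := h.1 τ (List.mem_append_right _ (List.mem_singleton_self _))
    exact ⟨i, hi, l, ⟨(isStarFactorization_append_swap hi).1 h, by simpa using hlen⟩, rfl⟩
  · rintro ⟨i, hi, l, ⟨h, rfl⟩, rfl⟩
    exact ⟨(isStarFactorization_append_swap hi).2 h, by simp⟩

lemma ncard_starFactorizations_succ (π : Perm (Fin n)) (L : ℕ) :
    (starFactorizations π (L + 1)).ncard =
      ∑ i ∈ univ.erase 0, (starFactorizations (π * swap 0 i) L).ncard := by
  rw [starFactorizations_succ, Set.Finite.ncard_biUnion (finite_toSet _)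
    (fun i _ => (starFactorizations_finite _ L).image _), finsum_mem_coe_finset]
  · exact sum_congr rfl fun i _ => Set.ncard_image_of_injective _ (List.append_left_injective _)
  · rintro i - j - hij
    refine Set.disjoint_left.2 ?_
    rintro _ ⟨l, -, rfl⟩ ⟨l', -, hl⟩
    exact hij (by simpa using congrArg (fun l => l.getLast?.map (· 0)) hl.symm)

theorem ncard_starFactorizations_starLength (π : Perm (Fin n)) :
    ((starFactorizations π (starLength π)).ncard : ℚ) = starWeight π := by
  induction hL : starLength π generalizing π with
  | zero =>
    obtain rfl := eq_one_of_starLength_eq_zero hL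
    have : starFactorizations (1 : Perm (Fin n)) 0 = {[]} := by
      ext l
      simp only [starFactorizations, Set.mem_ofPred_eq, Set.mem_singleton_iff,
        List.length_eq_zero_iff, and_iff_right_iff_imp]
      rintro rfl
      exact ⟨fun _ h => absurd h List.not_mem_nil, rfl⟩
    simp [this, starWeight_one]
  | succ L ih =>
    rw [ncard_starFactorizations_succ, Nat.cast_sum,
      ← sum_descents_starWeight (hL ▸ L.succ_ne_zero),
      ← sum_subset (s₁ := descents π) (filter_subset _ _)]
    · refine sum_congr rfl fun i hi => ?_
      have hτ : starLength (π * swap 0 i) = L := by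
        have := (mem_filter.1 hi).2
        omega
      exact ih _ hτ
    · intro i hi hnot
      have hle := starLength_le_starLength_mul_swap_add_one (π := π) (mem_erase.1 hi).1
      have hlt : L < starLength (π * swap 0 i) := by
        have := mt (mem_filter.2 ⟨hi, ·⟩) hnot
        omega
      rw [Set.eq_empty_of_forall_notMem fun l (hl : l ∈ starFactorizations _ L) =>
        (hlt.trans_le (hl.2 ▸ starLength_le_length hl.1)).false, Set.ncard_empty, Nat.cast_zero]

lemma starWeight_pos (π : Perm (Fin n)) : 0 < starWeight π := by
  have hprod : 0 < ∏ O ∈ π.orbitFinsets, #O := prod_pos fun O hO => by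
    obtain ⟨x, -, rfl⟩ := mem_image.1 hO
    exact card_orbitFinset_pos π x
  unfold starWeight
  have := Nat.factorial_pos (starLength π)
  positivity

lemma setOf_minimal_eq_starFactorizations (π : Perm (Fin n)) :
    {l | IsStarFactorization π l ∧
        ∀ l', IsStarFactorization π l' → l.length ≤ l'.length} =
      starFactorizations π (starLength π) := by
  obtain ⟨l₀, hl₀, hlen₀⟩ : (starFactorizations π (starLength π)).Nonempty := by
    refine Set.nonempty_of_ncard_ne_zero fun h => (starWeight_pos π).ne' ?_
    rw [← ncard_starFactorizations_starLength, h, Nat.cast_zero]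
  ext l
  refine ⟨fun ⟨hl, hmin⟩ => ⟨hl, ?_⟩, fun ⟨hl, hlen⟩ => ⟨hl, fun l' hl' => ?_⟩⟩
  · exact le_antisymm (hlen₀ ▸ hmin l₀ hl₀) (starLength_le_length hl)
  · exact hlen ▸ starLength_le_length hl'

end StarFactorization

open StarFactorization Equiv.Perm

theorem stmt10_general {n : ℕ} [NeZero n] (π : Equiv.Perm (Fin n))
    (m k : ℕ) (hm : m = (fullCycleType π).card)
    (hk : k = (Finset.univ.filter fun x : Fin n => π x = x ∧ x ≠ 0).card) :
    ({l : List (Equiv.Perm (Fin n)) | IsStarFactorization π l ∧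
        ∀ l', IsStarFactorization π l' → l.length ≤ l'.length}.ncard : ℚ) =
      ((n + m - 2 * (k + 1)).factorial * (fullCycleType π).prod : ℕ) /
        ((n - k).factorial : ℚ) := by
  have hcycles : fullCycleType π = π.orbitFinsets.val.map card := map_card_orbitFinsets.symm
  have hm' : m = #π.orbitFinsets := by rw [hm, hcycles, Multiset.card_map, card_val]
  rw [setOf_minimal_eq_starFactorizations, ncard_starFactorizations_starLength, starWeight,
    starLength, hm', hk, hcycles, prod_eq_multiset_prod]
  rfl

theorem stmt10 {n : ℕ} [NeZero n] (hn : 2 ≤ n) (π : Equiv.Perm (Fin n))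
    (m k : ℕ) (hm : m = (fullCycleType π).card)
    (hk : k = (Finset.univ.filter fun x : Fin n => π x = x ∧ x ≠ 0).card)
    (hnonneg : 2 * (k + 1) ≤ n + m) :
    ({l : List (Equiv.Perm (Fin n)) | IsStarFactorization π l ∧
        ∀ l', IsStarFactorization π l' → l.length ≤ l'.length}.ncard : ℚ) =
      ((n + m - 2 * (k + 1)).factorial * (fullCycleType π).prod : ℕ) /
        ((n - k).factorial : ℚ) :=
  stmt10_general π m k hm hk
end

section
/- Let π ∈ S_n, let σ be a cycle of π whose orbit S does not contain 1, and suppose a star factorization f of π contains a contiguous block of factors τ_s, τ_{s+1}, ..., τ_{s+k} equal to (1 a_1), (1 a_k), (1 a_{k−1}), ..., (1 a_2), (1 a_1) where σ = (a_1 ⋯ a_k), and no other factors of f meet S. Then deleting this block from f yields a star factorization of the restriction of π to {1,...,n} \ S. -/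
/-!
The block multiplies out to `(1 a₁) · P · (1 a₁)`, where `P` is the product of the
transpositions `(1 aⱼ)`, `j ≥ 2`; since the `aᵢ` are distinct, `P` fixes `a₁`, so the block
fixes `1`, and it clearly fixes every other point outside `S`. The remaining factors avoid
`S`, so they fix `S` pointwise and map its complement to itself; there, removing the block
does not change the product. (The symbol `1` is `0 : Fin n`.)
-/

open Equiv

lemma list_prod_perm_apply_eq_self {α : Type*} {L : List (Perm α)} {p : α}
    (h : ∀ τ ∈ L, τ p = p) : L.prod p = p :=
  MulAction.mem_stabilizer_iff.mp <|
    (MulAction.stabilizer (Perm α) p).list_prod_mem fun τ hτ =>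
      MulAction.mem_stabilizer_iff.mpr (h τ hτ)

lemma swap_mul_prod_mul_swap_apply_left {α : Type*} [DecidableEq α] {x y : α}
    {L : List (Perm α)} (h : ∀ τ ∈ L, τ y = y) :
    (swap x y * L.prod * swap x y) x = x := by
  simp only [Perm.mul_apply, swap_apply_left, swap_apply_right,
    list_prod_perm_apply_eq_self h]

lemma IsStarList.mono {n : ℕ} [NeZero n] {l l' : List (Perm (Fin n))} (hsub : l ⊆ l')
    (hl' : IsStarList l') : IsStarList l :=
  fun τ hτ => hl' τ (hsub hτ)

lemma star_block_prod_apply_of_forall_ne {n k : ℕ} [NeZero n] (hk : 1 ≤ k) (a : ℕ → Fin n)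
    (ha0 : ∀ i, a i ≠ 0) (hinj : ∀ i j, i < k → j < k → a i = a j → i = j)
    {x : Fin n} (hx : ∀ j < k, x ≠ a j) :
    (swap 0 (a 0) :: List.ofFn (fun t : Fin k => swap 0 (a (k - 1 - t.val)))).prod x = x := by
  obtain ⟨m, rfl⟩ : ∃ m, k = m + 1 := ⟨k - 1, by omega⟩
  rcases eq_or_ne x 0 with rfl | hx0
  · rw [List.prod_cons, List.ofFn_succ', List.prod_concat, ← mul_assoc]
    simp only [Fin.val_last, Fin.val_castSucc, Nat.add_sub_cancel, Nat.sub_self]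
    refine swap_mul_prod_mul_swap_apply_left fun τ hτ => ?_
    obtain ⟨t, rfl⟩ := List.mem_ofFn.mp hτ
    have hne : a 0 ≠ a (m - t) := fun h => by
      have := hinj 0 (m - t) (by omega) (by omega) h
      omega
    exact swap_apply_of_ne_of_ne (ha0 0) hne
  · refine list_prod_perm_apply_eq_self fun τ hτ => ?_
    obtain rfl | hτ := List.mem_cons.mp hτ
    · exact swap_apply_of_ne_of_ne hx0 (hx 0 (by omega))
    · obtain ⟨t, rfl⟩ := List.mem_ofFn.mp hτ
      exact swap_apply_of_ne_of_ne hx0 (hx _ (by omega))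

theorem stmt18_general {n : ℕ} [NeZero n] (π : Equiv.Perm (Fin n))
    (k : ℕ) (hk : 1 ≤ k) (a : ℕ → Fin n)
    (ha0 : ∀ i, a i ≠ 0)
    (hinj : ∀ i j, i < k → j < k → a i = a j → i = j)
    (l₁ l₂ : List (Equiv.Perm (Fin n)))
    (hfact : IsStarFactorization π
      (l₁ ++ (Equiv.swap 0 (a 0) ::
        List.ofFn (fun t : Fin k => Equiv.swap 0 (a (k - 1 - t.val)))) ++ l₂))
    (hmeet : ∀ τ ∈ l₁ ++ l₂, ∀ j < k, τ ≠ Equiv.swap 0 (a j)) :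
    IsStarList (l₁ ++ l₂) ∧
    (∀ j < k, (l₁ ++ l₂).prod (a j) = a j) ∧
    (∀ x : Fin n, (∀ j < k, x ≠ a j) → (l₁ ++ l₂).prod x = π x) := by
  obtain ⟨hstar, rfl⟩ := hfact
  have hsub : l₁ ++ l₂ ⊆ l₁ ++ (swap 0 (a 0) ::
      List.ofFn (fun t : Fin k => swap 0 (a (k - 1 - t.val)))) ++ l₂ := by
    intro τ; simp only [List.mem_append]; tauto
  have hstar' := hstar.mono hsub
  have hfix : ∀ τ ∈ l₁ ++ l₂, ∀ j < k, τ (a j) = a j := by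
    intro τ hτ j hj
    obtain ⟨i, -, rfl⟩ := hstar' τ hτ
    exact swap_apply_of_ne_of_ne (ha0 j) fun h => hmeet _ hτ j hj (by rw [h])
  have hl₂ : ∀ j < k, l₂.prod (a j) = a j := fun j hj =>
    list_prod_perm_apply_eq_self fun τ hτ => hfix τ (List.mem_append_right _ hτ) j hj
  refine ⟨hstar', fun j hj => list_prod_perm_apply_eq_self
    fun τ hτ => hfix τ hτ j hj, fun x hx => ?_⟩
  have hx₂ : ∀ j < k, l₂.prod x ≠ a j := fun j hj h =>
    hx j hj (l₂.prod.injective (by rw [h, hl₂ j hj]))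
  simp only [List.prod_append, Perm.mul_apply,
    star_block_prod_apply_of_forall_ne hk a ha0 hinj hx₂]

/-- Deleting a contiguous block `(1 a₁)(1 a_k)(1 a_{k-1})⋯(1 a₂)(1 a₁)`
(corresponding to the cycle `σ = (a₁ ⋯ a_k)` of `π`, whose orbit `S` avoids
the symbol 1) from a star factorization of `π`, none of whose other factors
meets `S`, yields a star factorization of the restriction of `π` to the
complement of `S`: the product of the remaining factors fixes `S` pointwise
and agrees with `π` off `S`.  Here `a j = a_{j+1}`, `k`-periodically. -/
theorem stmt18 {n : ℕ} [NeZero n] (π : Equiv.Perm (Fin n))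
    (k : ℕ) (hk : 1 ≤ k) (a : ℕ → Fin n)
    (ha0 : ∀ i, a i ≠ 0)
    (hper : ∀ i, a (i + k) = a i)
    (hinj : ∀ i j, i < k → j < k → a i = a j → i = j)
    (hcyc : ∀ i, π (a i) = a (i + 1))
    (l₁ l₂ : List (Equiv.Perm (Fin n)))
    (hfact : IsStarFactorization π
      (l₁ ++ (Equiv.swap 0 (a 0) ::
        List.ofFn (fun t : Fin k => Equiv.swap 0 (a (k - 1 - t.val)))) ++ l₂))
    (hmeet : ∀ τ ∈ l₁ ++ l₂, ∀ j < k, τ ≠ Equiv.swap 0 (a j)) :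
    IsStarList (l₁ ++ l₂) ∧
    (∀ j < k, (l₁ ++ l₂).prod (a j) = a j) ∧
    (∀ x : Fin n, (∀ j < k, x ≠ a j) → (l₁ ++ l₂).prod x = π x) :=
  stmt18_general π k hk a ha0 hinj l₁ l₂ hfact hmeet
end
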